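/- arXiv:2208.10640 — 10 statements merged into one kernel-verified Lean document; each statement's English description precedes it below -/
import Mathlib

section
/- Let n ≥ 1 and let M be an n×n matrix over ℂ. Suppose that every coefficient of the polynomial P(t) = det(I + (t−1)·M) ∈ ℂ[t] is a nonnegative real number. Then (i) every real eigenvalue λ of M satisfies 0 ≤ λ ≤ 1, and (ii) the characteristic polynomial of M has real coefficients, so the nonreal eigenvalues of M occur in complex-conjugate pairs with equal algebraic multiplicities. -/
open Polynomial

/-- If every coefficient of `P(t) = det(I + (t-1)·M)` is a nonnegative real
number, then every real eigenvalue of `M` lies in `[0,1]`, the characteristic polynomial of `M`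
has real coefficients, and the nonreal eigenvalues of `M` come in complex-conjugate pairs with
equal algebraic multiplicities. -/
theorem stmt_0 (n : ℕ) (hn : 1 ≤ n) (M : Matrix (Fin n) (Fin n) ℂ)
    (P : Polynomial ℂ)
    (hPdef : P = Matrix.det ((1 : Matrix (Fin n) (Fin n) (Polynomial ℂ))
      + (Polynomial.X - 1 : Polynomial ℂ) • M.map Polynomial.C))
    (hcoeff : ∀ k : ℕ, ∃ r : ℝ, 0 ≤ r ∧ P.coeff k = (r : ℂ)) :
    (∀ lam : ℝ, (Matrix.charpoly M).IsRoot (lam : ℂ) → 0 ≤ lam ∧ lam ≤ 1) ∧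
    (∀ k : ℕ, ∃ r : ℝ, (Matrix.charpoly M).coeff k = (r : ℂ)) ∧
    (∀ μ : ℂ, Polynomial.rootMultiplicity μ (Matrix.charpoly M)
      = Polynomial.rootMultiplicity ((starRingEnd ℂ) μ) (Matrix.charpoly M)) := by
  choose r hr0 hrP using hcoeff
  set Q := Matrix.charpoly M with hQ
  -- conjugation of evaluation
  have hconj : ∀ (p : Polynomial ℂ) (x : ℂ),
      (p.map (starRingEnd ℂ)).eval ((starRingEnd ℂ) x) = (starRingEnd ℂ) (p.eval x) := by
    intro p x
    rw [eval_map, eval₂_at_apply]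
  -- evaluation of P
  have hPeval : ∀ t : ℂ, P.eval t
      = Matrix.det ((1 : Matrix (Fin n) (Fin n) ℂ) + (t - 1) • M) := by
    intro t
    rw [hPdef, ← Polynomial.coe_evalRingHom, RingHom.map_det]
    congr 1
    ext i j
    simp [Matrix.map_apply, Matrix.add_apply, Matrix.smul_apply, Matrix.one_apply, apply_ite]
  -- evaluation of the characteristic polynomial
  have hQeval : ∀ s : ℂ, Q.eval s
      = Matrix.det (s • (1 : Matrix (Fin n) (Fin n) ℂ) - M) := by
    intro s
    rw [hQ, Matrix.charpoly, ← Polynomial.coe_evalRingHom, RingHom.map_det]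
    congr 1
    ext i j
    by_cases h : i = j
    · subst h
      simp [Matrix.map_apply, Matrix.sub_apply, Matrix.smul_apply, Matrix.one_apply]
    · simp [Matrix.map_apply, Matrix.sub_apply, Matrix.smul_apply, Matrix.one_apply, h]
  -- the key identity Q(s) = s^n P((s-1)/s) for s ≠ 0
  have key : ∀ s : ℂ, s ≠ 0 → Q.eval s = s ^ n * P.eval ((s - 1) / s) := by
    intro s hs
    rw [hQeval, hPeval]
    have hmat : s • (1 : Matrix (Fin n) (Fin n) ℂ) - M
        = s • ((1 : Matrix (Fin n) (Fin n) ℂ) + ((s - 1) / s - 1) • M) := by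
      have hc : s * ((s - 1) / s - 1) = -1 := by field_simp; ring
      rw [smul_add, smul_smul, hc]
      rw [neg_one_smul]
      abel
    rw [hmat, Matrix.det_smul, Fintype.card_fin]
  -- P is fixed by conjugation
  have hPc : P.map (starRingEnd ℂ) = P := by
    ext k
    rw [coeff_map, hrP k, Complex.conj_ofReal]
  have hPreal : ∀ u : ℝ, (starRingEnd ℂ) (P.eval (u : ℂ)) = P.eval (u : ℂ) := by
    intro u
    rw [← hconj P u, Complex.conj_ofReal, hPc]
  -- P(1) = 1
  have hP1 : P.eval 1 = 1 := by
    rw [hPeval]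
    simp
  -- P has no positive real root
  have hnoroot : ∀ u : ℝ, 0 < u → P.eval (u : ℂ) ≠ 0 := by
    intro u hu h0
    have heval : P.eval (u : ℂ)
        = ((∑ k ∈ Finset.range (P.natDegree + 1), r k * u ^ k : ℝ) : ℂ) := by
      rw [Polynomial.eval_eq_sum_range]
      push_cast
      exact Finset.sum_congr rfl fun k _ => by rw [hrP k]
    have hsum : (∑ k ∈ Finset.range (P.natDegree + 1), r k * u ^ k : ℝ) = 0 := by
      have := heval.symm.trans h0
      exact_mod_cast this
    have hterm : ∀ k ∈ Finset.range (P.natDegree + 1), r k * u ^ k = 0 :=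
      (Finset.sum_eq_zero_iff_of_nonneg
        (fun k _ => mul_nonneg (hr0 k) (pow_nonneg hu.le k))).mp hsum
    have hP0 : P = 0 := by
      ext k
      by_cases hk : k ≤ P.natDegree
      · have := hterm k (Finset.mem_range.mpr (Nat.lt_succ_of_le hk))
        have hrk : r k = 0 := by
          have hpos : 0 < u ^ k := pow_pos hu k
          rcases mul_eq_zero.mp this with h | h
          · exact h
          · exact absurd h hpos.ne'
        rw [hrP k, hrk]
        simp
      · exact P.coeff_eq_zero_of_natDegree_lt (lt_of_not_ge hk)
    rw [hP0] at hP1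
    simp at hP1
  -- Q is fixed by conjugation
  have hQc : Q.map (starRingEnd ℂ) = Q := by
    apply Polynomial.eq_of_infinite_eval_eq
    apply Set.Infinite.mono (s := (fun x : ℝ => (x : ℂ)) '' {x : ℝ | x ≠ 0})
    · rintro z ⟨x, hx, rfl⟩
      show (Q.map (starRingEnd ℂ)).eval (x : ℂ) = Q.eval (x : ℂ)
      have hxc : (x : ℂ) ≠ 0 := Complex.ofReal_ne_zero.mpr hx
      have h1 : (Q.map (starRingEnd ℂ)).eval (x : ℂ) = (starRingEnd ℂ) (Q.eval (x : ℂ)) := by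
        conv_lhs => rw [← Complex.conj_ofReal x]
        exact hconj Q x
      have ht : ((x : ℂ) - 1) / (x : ℂ) = (((x - 1) / x : ℝ) : ℂ) := by push_cast; ring
      rw [h1, key _ hxc, map_mul, map_pow, Complex.conj_ofReal, ht, hPreal, ← ht]
    · apply Set.Infinite.image
      · exact Function.Injective.injOn Complex.ofReal_injective
      · have : {x : ℝ | x ≠ 0} = ({0} : Set ℝ)ᶜ := by ext x; simp
        rw [this]
        exact (Set.finite_singleton 0).infinite_compl
  have hQrealcoeff : ∀ k : ℕ, ∃ c : ℝ, Q.coeff k = (c : ℂ) := by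
    intro k
    have : (starRingEnd ℂ) (Q.coeff k) = Q.coeff k := by
      conv_rhs => rw [← hQc]
      rw [coeff_map]
    exact Complex.conj_eq_iff_real.mp this
  refine ⟨?_, hQrealcoeff, ?_⟩
  · -- real eigenvalues lie in [0,1]
    intro lam hlam
    by_cases hl : lam = 0
    · subst hl; exact ⟨le_refl 0, zero_le_one⟩
    have hlc : (lam : ℂ) ≠ 0 := Complex.ofReal_ne_zero.mpr hl
    have hk := key (lam : ℂ) hlc
    have hev : Q.eval (lam : ℂ) = 0 := hlam
    rw [hev] at hk
    have hPz : P.eval (((lam : ℂ) - 1) / (lam : ℂ)) = 0 := by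
      have := hk.symm
      rcases mul_eq_zero.mp this with h | h
      · exact absurd h (pow_ne_zero n hlc)
      · exact h
    have ht : ((lam : ℂ) - 1) / (lam : ℂ) = (((lam - 1) / lam : ℝ) : ℂ) := by push_cast; ring
    rw [ht] at hPz
    have hu : ¬ (0 < (lam - 1) / lam) := fun h => hnoroot _ h hPz
    have hu' : (lam - 1) / lam ≤ 0 := le_of_not_gt hu
    rcases lt_trichotomy lam 0 with hneg | hzero | hpos
    · exfalso
      exact hu (div_pos_of_neg_of_neg (by linarith) hneg)
    · exact absurd hzero hl
    · constructor
      · exact hpos.le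
      · have := (div_nonpos_iff.mp hu')
        rcases this with ⟨h1, h2⟩ | ⟨h1, h2⟩
        · linarith
        · linarith
  · -- conjugate symmetry of root multiplicities
    intro μ
    have := Polynomial.eq_rootMultiplicity_map
      (p := Q) (f := starRingEnd ℂ) (RingHom.injective _) μ
    rw [hQc] at this
    exact this
end

section
/- Let ε ∈ (0, π/3), let P ≥ 1 be an integer, and let 1 ≤ k ≤ 2P. Let β̃₁, …, β̃_{2P} ∈ (−π/2, π/2) be angles such that Σ_{j=1}^{2P} e^{iβ̃_j} is a real number, such that β̃_j ∈ (π/2 − ε/2, π/2) for 1 ≤ j ≤ k (the 'problematic' angles), and such that β̃_j ∈ (−π/2 + 3ε/2, π/2 − ε/2) for k < j ≤ 2P. Then k/(2P) < 1 / (2 + (cos(ε/2) − cos(3ε/2))/cos(3ε/2)); equivalently k·cos(ε/2) < (2P − k)·cos(3ε/2). -/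
/-!
Write `c₁ = cos (ε/2)` and `c₂ = cos (3ε/2)`. Since `sin` increases on `[-π/2, π/2]`, each
problematic angle has `sin β̃_j > c₁` and every other angle has `sin β̃_j > -c₂`. The imaginary
part of `Σ_j e^{iβ̃_j}` is `Σ_j sin β̃_j = 0`, so `0 > k c₁ - (2P - k) c₂`; the first form of the
bound is this inequality divided through by `2P (c₁ + c₂)`.
-/

open Real

theorem Real.cos_lt_sin_of_pi_div_two_sub_lt {a β : ℝ} (ha : a ≤ π) (hβa : π / 2 - a < β)
    (hβ : β ≤ π / 2) : cos a < sin β := by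
  rw [← cos_pi_div_two_sub]
  exact strictAntiOn_cos ⟨by linarith, by linarith⟩ ⟨by linarith, ha⟩ (by linarith)

theorem Fin.sum_ite_val_lt {M : Type*} [AddCommMonoid M] {n k : ℕ} (hk : k ≤ n) (a b : M) :
    ∑ j : Fin n, (if (j : ℕ) < k then a else b) = k • a + (n - k) • b := by
  rw [Finset.sum_ite, Finset.sum_const, Finset.sum_const, Fin.card_filter_val_lt,
    Finset.filter_not, Finset.card_sdiff_of_subset (Finset.filter_subset _ _),
    Fin.card_filter_val_lt, Finset.card_univ, Fintype.card_fin, min_eq_right hk]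

theorem Fin.mul_lt_sub_mul_of_sum_eq_zero {n k : ℕ} [NeZero n] (hk : k ≤ n) {f : Fin n → ℝ}
    {a b : ℝ} (hsum : ∑ j, f j = 0) (hlow : ∀ j : Fin n, (j : ℕ) < k → a < f j)
    (hhigh : ∀ j : Fin n, k ≤ (j : ℕ) → -b < f j) : k * a < (n - k) * b := by
  have hlt : ∑ j : Fin n, (if (j : ℕ) < k then a else -b) < ∑ j, f j := by
    refine Finset.sum_lt_sum_of_nonempty Finset.univ_nonempty fun j _ => ?_
    split_ifs with hj
    exacts [hlow j hj, hhigh j (not_lt.mp hj)]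
  rw [Fin.sum_ite_val_lt hk, hsum, nsmul_eq_mul, nsmul_eq_mul, Nat.cast_sub hk] at hlt
  linarith

theorem div_lt_one_div_two_add_of_mul_lt {k n a c : ℝ} (hn : 0 < n) (hc : 0 < c)
    (hac : 0 < a + c) (h : k * a < (n - k) * c) : k / n < 1 / (2 + (a - c) / c) := by
  have hden : 2 + (a - c) / c = (a + c) / c := by
    field_simp
    ring
  rw [hden, one_div_div, div_lt_div_iff₀ hn hac]
  linarith

theorem stmt_2_general (ε : ℝ) (hε : ε ∈ Set.Ioo 0 (π / 3)) (P : ℕ) (hP : 1 ≤ P)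
    (k : ℕ) (hk2 : k ≤ 2 * P)
    (βt : Fin (2 * P) → ℝ)
    (hreal : (∑ j, Complex.exp ((βt j : ℂ) * Complex.I)).im = 0)
    (hprob : ∀ j : Fin (2 * P), (j : ℕ) < k → βt j ∈ Set.Ioo (π / 2 - ε / 2) (π / 2))
    (hok : ∀ j : Fin (2 * P), k ≤ (j : ℕ) →
      βt j ∈ Set.Ioo (-(π / 2) + 3 * ε / 2) (π / 2 - ε / 2)) :
    (k : ℝ) / (2 * P) < 1 / (2 + (Real.cos (ε / 2) - Real.cos (3 * ε / 2)) / Real.cos (3 * ε / 2)) ∧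
    (k : ℝ) * Real.cos (ε / 2) < (2 * (P : ℝ) - (k : ℝ)) * Real.cos (3 * ε / 2) := by
  obtain ⟨hε0, hε3⟩ := hε
  have : NeZero (2 * P) := ⟨by omega⟩
  have hsum : ∑ j, sin (βt j) = 0 := by
    simpa only [Complex.im_sum, Complex.exp_ofReal_mul_I_im] using hreal
  have hkey : (k : ℝ) * cos (ε / 2) < (2 * (P : ℝ) - k) * cos (3 * ε / 2) := by
    have := Fin.mul_lt_sub_mul_of_sum_eq_zero hk2 hsum
      (fun j hj => cos_lt_sin_of_pi_div_two_sub_lt (by linarith) (hprob j hj).1 (hprob j hj).2.le)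
      (fun j hj => cos_pi_sub (3 * ε / 2) ▸ cos_lt_sin_of_pi_div_two_sub_lt (by linarith)
        (by linarith [(hok j hj).1]) (by linarith [(hok j hj).2]))
    exact_mod_cast this
  have hc₁ : 0 < cos (ε / 2) := cos_pos_of_mem_Ioo ⟨by linarith [pi_pos], by linarith⟩
  have hc₂ : 0 < cos (3 * ε / 2) := cos_pos_of_mem_Ioo ⟨by linarith [pi_pos], by linarith⟩
  have hP' : (0 : ℝ) < 2 * P := by positivity
  exact ⟨div_lt_one_div_two_add_of_mul_lt hP' hc₂ (by linarith) hkey, hkey⟩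

/-- Counting estimate on the 'problematic' rhombus angles: if the sum
`Σ_j e^{iβ̃_j}` is real, the fraction of angles in `(π/2 - ε/2, π/2)` is bounded strictly
below `1/2` by the stated explicit constant. -/
theorem stmt_2 (ε : ℝ) (hε : ε ∈ Set.Ioo 0 (π / 3)) (P : ℕ) (hP : 1 ≤ P)
    (k : ℕ) (hk1 : 1 ≤ k) (hk2 : k ≤ 2 * P)
    (βt : Fin (2 * P) → ℝ)
    (hrange : ∀ j, βt j ∈ Set.Ioo (-(π / 2)) (π / 2))
    (hreal : (∑ j, Complex.exp ((βt j : ℂ) * Complex.I)).im = 0)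
    (hprob : ∀ j : Fin (2 * P), (j : ℕ) < k → βt j ∈ Set.Ioo (π / 2 - ε / 2) (π / 2))
    (hok : ∀ j : Fin (2 * P), k ≤ (j : ℕ) →
      βt j ∈ Set.Ioo (-(π / 2) + 3 * ε / 2) (π / 2 - ε / 2)) :
    (k : ℝ) / (2 * P) < 1 / (2 + (Real.cos (ε / 2) - Real.cos (3 * ε / 2)) / Real.cos (3 * ε / 2)) ∧
    (k : ℝ) * Real.cos (ε / 2) < (2 * (P : ℝ) - (k : ℝ)) * Real.cos (3 * ε / 2) :=
  stmt_2_general ε hε P hP k hk2 βt hreal hprob hok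
end

section
/- With the discrete-exponential angle data fixed and Σ_{j=1}^P (e^{iβ_j} − e^{iα_j}) = D a positive real number, there exist constants D_ε > 0 and c'_ε > 0 depending only on ε such that: if D > D_ε, then for every r ∈ (D^{−2/3}, D^{2/3}) and every θ ∈ (−ε/8, ε/8), one has |g(−r·e^{iθ})| < exp(−D^{1/3}/c'_ε). -/
open Real

lemma cos_diff_eq (a b : ℝ) :
    Real.cos b - Real.cos a = 2 * Real.sin ((a - b)/2) * Real.sin ((a + b)/2) := by
  have h1 := Real.cos_add ((a+b)/2) ((a-b)/2)
  have h2 := Real.cos_sub ((a+b)/2) ((a-b)/2)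
  rw [show (a+b)/2 + (a-b)/2 = a by ring] at h1
  rw [show (a+b)/2 - (a-b)/2 = b by ring] at h2
  linear_combination h2 - h1

lemma sin_diff_eq (a b : ℝ) :
    Real.sin b - Real.sin a = -(2 * Real.sin ((a - b)/2) * Real.cos ((a + b)/2)) := by
  have h1 := Real.sin_add ((a+b)/2) ((a-b)/2)
  have h2 := Real.sin_sub ((a+b)/2) ((a-b)/2)
  rw [show (a+b)/2 + (a-b)/2 = a by ring] at h1
  rw [show (a+b)/2 - (a-b)/2 = b by ring] at h2
  linear_combination h2 - h1

lemma cos_ge_of_abs_le' {x c : ℝ} (h : |x| ≤ c) (hc : c ≤ π) : Real.cos c ≤ Real.cos x := by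
  rw [← Real.cos_abs x]
  exact Real.cos_le_cos_of_nonneg_of_le_pi (abs_nonneg x) hc h

lemma exp_factor (a b : ℝ) :
    Complex.exp ((b : ℂ) * Complex.I) - Complex.exp ((a : ℂ) * Complex.I) =
      ((2 * Real.sin ((a - b)/2) : ℝ) : ℂ) *
        Complex.exp ((((a + b)/2 - π/2 : ℝ) : ℂ) * Complex.I) := by
  apply Complex.ext
  · simp only [Complex.sub_re, Complex.mul_re, Complex.ofReal_re, Complex.ofReal_im,
      Complex.exp_ofReal_mul_I_re, Complex.exp_ofReal_mul_I_im, zero_mul, sub_zero]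
    rw [Real.cos_sub_pi_div_two]
    linear_combination cos_diff_eq a b
  · simp only [Complex.sub_im, Complex.mul_im, Complex.ofReal_re, Complex.ofReal_im,
      Complex.exp_ofReal_mul_I_re, Complex.exp_ofReal_mul_I_im, zero_mul, add_zero]
    rw [Real.sin_sub_pi_div_two]
    linear_combination sin_diff_eq a b

lemma normSq_aux (r θ x : ℝ) :
    Complex.normSq (-(r:ℂ) * Complex.exp ((θ:ℂ) * Complex.I) - Complex.exp ((x:ℂ) * Complex.I))
      = 1 + r^2 + 2*r*Real.cos (x - θ) := by
  simp only [Complex.normSq_apply, Complex.sub_re, Complex.sub_im, Complex.mul_re, Complex.mul_im,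
    Complex.neg_re, Complex.neg_im, Complex.ofReal_re, Complex.ofReal_im,
    Complex.exp_ofReal_mul_I_re, Complex.exp_ofReal_mul_I_im]
  rw [Real.cos_sub]
  linear_combination (r^2) * (Real.sin_sq_add_cos_sq θ) + (Real.sin_sq_add_cos_sq x)


set_option maxHeartbeats 1000000 in
lemma aux_sneg {P : ℕ} (ε φ₀ θ D : ℝ) (ρ γ : Fin P → ℝ)
    (hε0 : 0 < ε) (hεπ : ε < π/3)
    (hφ : |φ₀| < ε) (hθ : |θ| < ε/8)
    (hρ : ∀ j, 0 ≤ ρ j)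
    (hγ1 : ∀ j, ε - π/2 < γ j - φ₀) (hγ2 : ∀ j, γ j - φ₀ < π/2 - ε)
    (hIm : ∑ j, ρ j * Real.sin (γ j) = 0)
    (hRe : ∑ j, ρ j * Real.cos (γ j) = D)
    (hB : θ + ε < φ₀) :
    Real.sin ε * ∑ j, ρ j * max 0 (-Real.cos (γ j - θ)) ≤ 2 * Real.sin (ε/8) * D := by
  have hπ := Real.pi_gt_three
  have hπ' := Real.pi_lt_d2
  have hθ1 := abs_lt.mp hθ
  have hφ1 := abs_lt.mp hφ
  have hsin8 : 0 ≤ Real.sin (ε/8) := Real.sin_nonneg_of_nonneg_of_le_pi (by linarith) (by linarith)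
  have hsinε : 0 < Real.sin ε := Real.sin_pos_of_pos_of_lt_pi hε0 (by linarith)
  -- step 1
  have step1 : ∀ j, ρ j * max 0 (-Real.cos (γ j - θ)) ≤
      2 * Real.sin (ε/8) * (ρ j * max 0 (Real.sin (γ j))) := by
    intro j
    rcases le_or_gt 0 (Real.cos (γ j - θ)) with h | h
    · rw [max_eq_left (neg_nonpos.mpr h), mul_zero]
      exact mul_nonneg (by linarith) (mul_nonneg (hρ j) (le_max_left _ _))
    · have hlow : 2*ε - π/2 < γ j - θ := by have := hγ1 j; linarith
      have hup : γ j - θ < π/2 + ε/8 := by have := hγ2 j; linarith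
      have hmid : π/2 < γ j - θ := by
        by_contra hc
        push_neg at hc
        exact absurd (Real.cos_nonneg_of_mem_Icc ⟨by linarith, hc⟩) (not_le.mpr h)
      have hcb : -Real.cos (γ j - θ) ≤ Real.sin (ε/8) := by
        have h1 : Real.cos (ε/8 + π/2) ≤ Real.cos (γ j - θ) := by
          apply cos_ge_of_abs_le'
          · rw [abs_of_nonneg (by linarith)]; linarith
          · linarith
        rw [Real.cos_add_pi_div_two] at h1
        linarith
      have hγup : γ j < π/2 := by have := hγ2 j; linarith
      have hsγ : 1/2 ≤ Real.sin (γ j) := by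
        have h1 : Real.cos (π/3) ≤ Real.cos (γ j - π/2) := by
          apply cos_ge_of_abs_le' _ (by linarith)
          rw [abs_of_nonpos (by linarith)]; linarith
        rw [Real.cos_sub_pi_div_two, Real.cos_pi_div_three] at h1
        linarith
      rw [max_eq_right (by linarith : (0:ℝ) ≤ -Real.cos (γ j - θ)),
          max_eq_right (by linarith : (0:ℝ) ≤ Real.sin (γ j))]
      nlinarith [mul_le_mul_of_nonneg_left hcb (hρ j),
        mul_nonneg (mul_nonneg hsin8 (hρ j)) (by linarith : (0:ℝ) ≤ Real.sin (γ j) - 1/2)]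
  have habs : ∀ x : ℝ, max 0 x - max 0 (-x) = x := by
    intro x
    rcases le_total 0 x with h | h
    · rw [max_eq_right h, max_eq_left (neg_nonpos.mpr h)]; ring
    · rw [max_eq_left h, max_eq_right (neg_nonneg.mpr h)]; ring
  have step3 : ∑ j, ρ j * max 0 (Real.sin (γ j)) = ∑ j, ρ j * max 0 (-Real.sin (γ j)) := by
    have : ∑ j, (ρ j * max 0 (Real.sin (γ j)) - ρ j * max 0 (-Real.sin (γ j))) = 0 := by
      calc ∑ j, (ρ j * max 0 (Real.sin (γ j)) - ρ j * max 0 (-Real.sin (γ j)))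
          = ∑ j, ρ j * Real.sin (γ j) := by
            apply Finset.sum_congr rfl
            intro j _
            rw [← mul_sub, habs]
        _ = 0 := hIm
    have h2 := Finset.sum_sub_distrib (s := Finset.univ)
      (f := fun j => ρ j * max 0 (Real.sin (γ j))) (g := fun j => ρ j * max 0 (-Real.sin (γ j)))
    rw [h2] at this
    linarith
  have step4 : ∀ j, Real.sin ε * (ρ j * max 0 (-Real.sin (γ j))) ≤ ρ j * Real.cos (γ j) := by
    intro j
    have hcγ : 0 ≤ Real.cos (γ j) := by
      apply Real.cos_nonneg_of_mem_Icc
      constructor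
      · have := hγ1 j; linarith
      · have := hγ2 j; linarith
    rcases le_or_gt (Real.sin (γ j)) 0 with h | h
    · rcases lt_or_ge (γ j) 0 with hg | hg
      · have hglow : 15*ε/8 - π/2 < γ j := by have := hγ1 j; linarith
        have hcγ2 : Real.sin ε ≤ Real.cos (γ j) := by
          have h1 : Real.cos (π/2 - ε) ≤ Real.cos (γ j) := by
            apply cos_ge_of_abs_le' _ (by linarith)
            rw [abs_of_nonpos hg.le]; linarith
          rwa [Real.cos_pi_div_two_sub] at h1
        have hms : max 0 (-Real.sin (γ j)) ≤ 1 := by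
          apply max_le (by norm_num)
          have := Real.neg_one_le_sin (γ j)
          linarith
        have h0m : 0 ≤ max 0 (-Real.sin (γ j)) := le_max_left _ _
        nlinarith [mul_le_mul_of_nonneg_left hms (mul_nonneg hsinε.le (hρ j)),
          mul_le_mul_of_nonneg_left hcγ2 (hρ j)]
      · have : 0 ≤ Real.sin (γ j) := Real.sin_nonneg_of_nonneg_of_le_pi hg (by
          have := hγ2 j; linarith)
        have hz : Real.sin (γ j) = 0 := le_antisymm h this
        rw [hz, neg_zero, max_self, mul_zero, mul_zero]
        exact mul_nonneg (hρ j) hcγ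
    · rw [max_eq_left (neg_nonpos.mpr h.le), mul_zero, mul_zero]
      exact mul_nonneg (hρ j) hcγ
  -- assemble
  have step2 : ∑ j, ρ j * max 0 (-Real.cos (γ j - θ)) ≤
      2 * Real.sin (ε/8) * ∑ j, ρ j * max 0 (Real.sin (γ j)) := by
    rw [Finset.mul_sum]
    exact Finset.sum_le_sum fun j _ => step1 j
  have step5 : Real.sin ε * ∑ j, ρ j * max 0 (-Real.sin (γ j)) ≤ D := by
    rw [Finset.mul_sum, ← hRe]
    exact Finset.sum_le_sum fun j _ => step4 j
  have hT : 0 ≤ ∑ j, ρ j * max 0 (Real.sin (γ j)) := by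
    apply Finset.sum_nonneg
    intro j _
    exact mul_nonneg (hρ j) (le_max_left _ _)
  calc Real.sin ε * ∑ j, ρ j * max 0 (-Real.cos (γ j - θ))
      ≤ Real.sin ε * (2 * Real.sin (ε/8) * ∑ j, ρ j * max 0 (Real.sin (γ j))) := by
        exact mul_le_mul_of_nonneg_left step2 hsinε.le
    _ = 2 * Real.sin (ε/8) * (Real.sin ε * ∑ j, ρ j * max 0 (-Real.sin (γ j))) := by
        rw [step3]; ring
    _ ≤ 2 * Real.sin (ε/8) * D := by
        apply mul_le_mul_of_nonneg_left step5 (by positivity)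

set_option maxHeartbeats 2000000 in
lemma core {P : ℕ} (ε φ₀ θ D r : ℝ) (ρ γ cA cB : Fin P → ℝ)
    (hε0 : 0 < ε) (hεπ : ε < π/3) (hφ : |φ₀| < ε) (hθa : |θ| < ε/8)
    (hρ0 : ∀ j, 0 ≤ ρ j)
    (hγ1 : ∀ j, ε - π/2 < γ j - φ₀) (hγ2 : ∀ j, γ j - φ₀ < π/2 - ε)
    (hRe : ∑ j, ρ j * Real.cos (γ j) = D)
    (hIm : ∑ j, ρ j * Real.sin (γ j) = 0)
    (hdiff : ∀ j, cB j - cA j = ρ j * Real.cos (γ j - θ))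
    (hcB : ∀ j, -(1/5 : ℝ) ≤ cB j) (hcB1 : ∀ j, cB j ≤ 1) (hcA : ∀ j, -1 ≤ cA j)
    (hD0 : 0 < D) (hD1 : 1 < D)
    (hr1 : D ^ (-(2:ℝ)/3) < r) (hr2 : r < D ^ ((2:ℝ)/3)) :
    ∏ j, ((1 + r^2 + 2*r*cA j) / (1 + r^2 + 2*r*cB j)) < Real.exp (-(D ^ ((1:ℝ)/3))/8) := by
  have hπ3 := Real.pi_gt_three
  have hπ315 := Real.pi_lt_d2
  have hθ1 := abs_lt.mp hθa
  have hφ1 := abs_lt.mp hφ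
  -- rpow bookkeeping
  have hv0 : 0 < D ^ (-(2:ℝ)/3) := Real.rpow_pos_of_pos hD0 _
  have hr0 : 0 < r := lt_trans hv0 hr1
  have hu1 : 1 < D ^ ((2:ℝ)/3) := by
    rw [show (1:ℝ) = (1:ℝ) ^ ((2:ℝ)/3) from (Real.one_rpow _).symm]
    exact Real.rpow_lt_rpow (by norm_num) hD1 (by norm_num)
  have huv : D ^ ((2:ℝ)/3) * D ^ (-(2:ℝ)/3) = 1 := by
    rw [← Real.rpow_add hD0]; norm_num
  have hv1 : D ^ (-(2:ℝ)/3) ≤ 1 := by nlinarith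
  have hs0 : (0:ℝ) < 1 + r^2 := by positivity
  have h2ru : 1 + r^2 < 2*r*(D ^ ((2:ℝ)/3)) := by
    nlinarith [mul_pos (sub_pos.mpr hr2) (sub_pos.mpr hr1), hv0, hu1, hr0]
  have hrs : (D ^ (-(2:ℝ)/3))/2 < r/(1+r^2) := by
    rw [div_lt_div_iff₀ two_pos hs0]
    have h1 : (D ^ (-(2:ℝ)/3))*(1+r^2) < (D ^ (-(2:ℝ)/3))*(2*r*(D ^ ((2:ℝ)/3))) :=
      mul_lt_mul_of_pos_left h2ru hv0
    have h2 : (D ^ (-(2:ℝ)/3))*(2*r*(D ^ ((2:ℝ)/3))) = r * 2 := by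
      rw [show (D ^ (-(2:ℝ)/3))*(2*r*(D ^ ((2:ℝ)/3))) = 2*r*((D ^ ((2:ℝ)/3)) * (D ^ (-(2:ℝ)/3))) by ring,
        huv]; ring
    linarith
  have hv13 : (D ^ (-(2:ℝ)/3)) * D = D ^ ((1:ℝ)/3) := by
    have h1 : D ^ (-(2:ℝ)/3) * D ^ (1:ℝ) = D ^ ((-(2:ℝ)/3) + 1) := (Real.rpow_add hD0 _ _).symm
    rw [Real.rpow_one] at h1
    rw [h1]; norm_num
  -- Σ d = D cos θ
  have hsumd : ∑ j, ρ j * Real.cos (γ j - θ) = D * Real.cos θ := by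
    calc ∑ j, ρ j * Real.cos (γ j - θ)
        = ∑ j, (Real.cos θ * (ρ j * Real.cos (γ j)) + Real.sin θ * (ρ j * Real.sin (γ j))) :=
          Finset.sum_congr rfl fun j _ => by rw [Real.cos_sub]; ring
      _ = Real.cos θ * D + Real.sin θ * 0 := by
          rw [Finset.sum_add_distrib, ← Finset.mul_sum, ← Finset.mul_sum, hRe, hIm]
      _ = D * Real.cos θ := by ring
  -- S bound
  have hsin8 : 0 ≤ Real.sin (ε/8) := Real.sin_nonneg_of_nonneg_of_le_pi (by linarith) (by linarith)
  have hsinε : 0 < Real.sin ε := Real.sin_pos_of_pos_of_lt_pi hε0 (by linarith)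
  have hSneg : Real.sin ε * ∑ j, ρ j * max 0 (-Real.cos (γ j - θ)) ≤ 2*Real.sin (ε/8) * D := by
    rcases lt_or_ge (θ + ε) φ₀ with hB | hB1
    · exact aux_sneg ε φ₀ θ D ρ γ hε0 hεπ hφ hθa hρ0 hγ1 hγ2 hIm hRe hB
    · rcases lt_or_ge φ₀ (θ - ε) with hC | hC1
      · have h := aux_sneg ε (-φ₀) (-θ) D ρ (fun j => -(γ j)) hε0 hεπ (by rwa [abs_neg])
          (by rwa [abs_neg]) hρ0
          (fun j => by have := hγ2 j; linarith)
          (fun j => by have := hγ1 j; linarith)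
          (by
            have : ∀ j : Fin P, ρ j * Real.sin (-(γ j)) = -(ρ j * Real.sin (γ j)) := by
              intro j; rw [Real.sin_neg]; ring
            rw [Finset.sum_congr rfl fun j _ => this j, Finset.sum_neg_distrib, hIm, neg_zero])
          (by
            have : ∀ j : Fin P, ρ j * Real.cos (-(γ j)) = ρ j * Real.cos (γ j) := by
              intro j; rw [Real.cos_neg]
            rw [Finset.sum_congr rfl fun j _ => this j, hRe])
          (by linarith)
        have h2 : ∀ j : Fin P, Real.cos (-(γ j) - -θ) = Real.cos (γ j - θ) := fun j => by
          rw [show -(γ j) - -θ = -(γ j - θ) by ring, Real.cos_neg]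
        simp only [h2] at h
        exact h
      · have hz : ∑ j, ρ j * max 0 (-Real.cos (γ j - θ)) = 0 := by
          apply Finset.sum_eq_zero
          intro j _
          have hcos : 0 ≤ Real.cos (γ j - θ) := Real.cos_nonneg_of_mem_Icc
            ⟨by have := hγ1 j; linarith, by have := hγ2 j; linarith⟩
          rw [max_eq_left (neg_nonpos.mpr hcos), mul_zero]
        rw [hz, mul_zero]
        have := mul_nonneg hsin8 hD0.le
        linarith
  -- numeric inequality
  have hsin8' : Real.sin (ε/8) ≤ ε/8 := Real.sin_le (by linarith)
  have hsinεl : 2/π * ε ≤ Real.sin ε := Real.mul_le_sin hε0.le (by linarith)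
  have hcosθ : 1 - (ε/8)^2/2 ≤ Real.cos θ := by
    have h1 := Real.one_sub_sq_div_two_le_cos (x := θ)
    have h2 : θ^2 ≤ (ε/8)^2 := by nlinarith [hθ1.1, hθ1.2, hε0]
    linarith
  have hπ0 : (0:ℝ) < π := Real.pi_pos
  have hnum : Real.sin ε * (1/4) ≤ Real.sin ε * Real.cos θ - 3 * Real.sin (ε/8) := by
    have hε1 : ε ≤ 1.05 := by nlinarith
    have hc4 : (3:ℝ)/4 - (ε/8)^2/2 ≤ Real.cos θ - 1/4 := by linarith
    have hcpos : 0 ≤ Real.cos θ - 1/4 := by nlinarith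
    have h1 : (2/π * ε) * (Real.cos θ - 1/4) ≤ Real.sin ε * (Real.cos θ - 1/4) :=
      mul_le_mul_of_nonneg_right hsinεl hcpos
    have hε3 : ε^3 ≤ 1.1025 * ε := by
      nlinarith [mul_le_mul_of_nonneg_left hε1 hε0.le,
        mul_le_mul_of_nonneg_left hε1 (mul_nonneg hε0.le hε0.le)]
    have hπε : π * ε ≤ 3.15 * ε := mul_le_mul_of_nonneg_right hπ315.le hε0.le
    have h2 : 3*(ε/8) ≤ (2/π * ε) * (Real.cos θ - 1/4) := by
      rw [show (2/π * ε) * (Real.cos θ - 1/4) = 2 * ε * (Real.cos θ - 1/4) / π by ring,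
        le_div_iff₀ hπ0]
      nlinarith [mul_le_mul_of_nonneg_left hc4 hε0.le, hε3, hπε]
    nlinarith [hsin8']
  -- W bound
  set S := ∑ j, ρ j * max 0 (-Real.cos (γ j - θ)) with hSdef
  have hS0 : 0 ≤ S := Finset.sum_nonneg fun j _ => mul_nonneg (hρ0 j) (le_max_left _ _)
  have hW : D/4 ≤ D*Real.cos θ - 3/2 * S := by
    have h1 : Real.sin ε * (D/4) ≤ Real.sin ε * (D*Real.cos θ - 3/2*S) := by
      nlinarith [mul_le_mul_of_nonneg_left hnum hD0.le]
    exact le_of_mul_le_mul_left h1 hsinε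
  -- per-factor bound
  have hMpos : ∀ j, 0 < 1 + r^2 + 2*r*cB j := by
    intro j; nlinarith [hcB j, sq_nonneg (1-r), hr0]
  have hM4 : ∀ j, 4/5 * (1 + r^2) ≤ 1 + r^2 + 2*r*cB j := by
    intro j; nlinarith [hcB j, sq_nonneg (1-r), hr0]
  have hM2 : ∀ j, 1 + r^2 + 2*r*cB j ≤ 2*(1+r^2) := by
    intro j; nlinarith [hcB1 j, sq_nonneg (1-r), hr0]
  have hN0 : ∀ j, 0 ≤ 1 + r^2 + 2*r*cA j := by
    intro j; nlinarith [hcA j, sq_nonneg (1-r), hr0]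
  have hkey : ∀ j, (1 + r^2 + 2*r*cA j) / (1 + r^2 + 2*r*cB j) ≤
      Real.exp (r * (3/2 * (ρ j * max 0 (-Real.cos (γ j - θ))) - ρ j * Real.cos (γ j - θ)) / (1+r^2)) := by
    intro j
    have hdm : (1 + r^2 + 2*r*cA j) - (1 + r^2 + 2*r*cB j) = -(2*r*(ρ j * Real.cos (γ j - θ))) := by
      have := hdiff j; nlinarith [this]
    have hq : ((1 + r^2 + 2*r*cA j) - (1 + r^2 + 2*r*cB j)) / (1 + r^2 + 2*r*cB j) ≤
        r * (3/2 * (ρ j * max 0 (-Real.cos (γ j - θ))) - ρ j * Real.cos (γ j - θ)) / (1+r^2) := by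
      rw [div_le_div_iff₀ (hMpos j) hs0, hdm]
      rcases le_or_gt 0 (Real.cos (γ j - θ)) with h | h
      · rw [max_eq_left (neg_nonpos.mpr h)]
        nlinarith [mul_nonneg (mul_nonneg (mul_nonneg hr0.le (hρ0 j)) h)
          (sub_nonneg.mpr (hM2 j))]
      · rw [max_eq_right (by linarith : (0:ℝ) ≤ -Real.cos (γ j - θ))]
        nlinarith [mul_nonneg (mul_nonneg (mul_nonneg hr0.le (hρ0 j)) (by linarith : (0:ℝ) ≤ -Real.cos (γ j - θ)))
          (sub_nonneg.mpr (hM4 j))]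
    have heq : (1 + r^2 + 2*r*cA j) / (1 + r^2 + 2*r*cB j) =
        1 + ((1 + r^2 + 2*r*cA j) - (1 + r^2 + 2*r*cB j)) / (1 + r^2 + 2*r*cB j) := by
      rw [sub_div, div_self (hMpos j).ne']
      ring
    rw [heq]
    have := Real.add_one_le_exp (r * (3/2 * (ρ j * max 0 (-Real.cos (γ j - θ))) - ρ j * Real.cos (γ j - θ)) / (1+r^2))
    linarith
  -- product bound
  have hprod : ∏ j, ((1 + r^2 + 2*r*cA j) / (1 + r^2 + 2*r*cB j)) ≤
      Real.exp (∑ j, r * (3/2 * (ρ j * max 0 (-Real.cos (γ j - θ))) - ρ j * Real.cos (γ j - θ)) / (1+r^2)) := by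
    rw [Real.exp_sum]
    exact Finset.prod_le_prod (fun j _ => div_nonneg (hN0 j) (hMpos j).le) (fun j _ => hkey j)
  -- sum of exponents
  have hxsum : ∑ j, r * (3/2 * (ρ j * max 0 (-Real.cos (γ j - θ))) - ρ j * Real.cos (γ j - θ)) / (1+r^2)
      = r * (3/2 * S - D * Real.cos θ) / (1+r^2) := by
    rw [← Finset.sum_div, ← Finset.mul_sum]
    congr 2
    rw [Finset.sum_sub_distrib, ← Finset.mul_sum, hsumd, hSdef]
  have hfin : r * (3/2 * S - D * Real.cos θ) / (1+r^2) < -(D ^ ((1:ℝ)/3))/8 := by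
    have h1 : r * (3/2 * S - D * Real.cos θ) ≤ r * (-(D/4)) :=
      mul_le_mul_of_nonneg_left (by linarith) hr0.le
    have h2 : r * (3/2 * S - D * Real.cos θ) / (1+r^2) ≤ r * (-(D/4)) / (1+r^2) :=
      div_le_div_of_nonneg_right h1 hs0.le
    have h3 : r * (-(D/4)) / (1+r^2) = -(r/(1+r^2) * (D/4)) := by ring
    have h4 : (D ^ (-(2:ℝ)/3))/2 * (D/4) < r/(1+r^2) * (D/4) :=
      mul_lt_mul_of_pos_right hrs (by linarith)
    have h5 : (D ^ (-(2:ℝ)/3))/2 * (D/4) = (D ^ ((1:ℝ)/3))/8 := by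
      rw [show (D ^ (-(2:ℝ)/3))/2 * (D/4) = ((D ^ (-(2:ℝ)/3)) * D)/8 by ring, hv13]
    rw [h3] at h2
    rw [h5] at h4
    linarith
  calc ∏ j, ((1 + r^2 + 2*r*cA j) / (1 + r^2 + 2*r*cB j))
      ≤ Real.exp (∑ j, r * (3/2 * (ρ j * max 0 (-Real.cos (γ j - θ))) - ρ j * Real.cos (γ j - θ)) / (1+r^2)) := hprod
    _ < Real.exp (-(D ^ ((1:ℝ)/3))/8) := by
        apply Real.exp_lt_exp.mpr
        rw [hxsum]
        exact hfin

/-- Exponential decay of the discrete exponential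
`g(z) = ∏_j (z - e^{iα_j})/(z - e^{iβ_j})` in a cone about the negative real axis, for
intermediate moduli `D^{-2/3} < |z| < D^{2/3}`: there are constants `D_ε, c'_ε > 0`
depending only on `ε` such that `|g(-r e^{iθ})| < exp(-D^{1/3}/c'_ε)` whenever `D > D_ε`. -/
theorem stmt_3 : ∀ ε : ℝ, ε ∈ Set.Ioo 0 (π / 3) →
    ∃ Dε : ℝ, 0 < Dε ∧ ∃ cε : ℝ, 0 < cε ∧
    ∀ (P : ℕ), 1 ≤ P → ∀ (φ₀ : ℝ), |φ₀| < ε →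
    ∀ (α β : Fin P → ℝ),
    (∀ j, β j - φ₀ ∈ Set.Ioo (-(π / 2) + ε) (π / 2 - ε)) →
    (∀ j, α j - φ₀ ∈ Set.Ioo (π / 2 + ε) (3 * π / 2 - ε)) →
    ∀ D : ℝ, 0 < D →
    (∑ j, (Complex.exp ((β j : ℂ) * Complex.I) - Complex.exp ((α j : ℂ) * Complex.I))) = (D : ℂ) →
    Dε < D →
    ∀ r θ : ℝ, r ∈ Set.Ioo (D ^ (-(2 : ℝ) / 3)) (D ^ ((2 : ℝ) / 3)) →
    θ ∈ Set.Ioo (-(ε / 8)) (ε / 8) →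
    ‖∏ j, ((-(r : ℂ) * Complex.exp ((θ : ℂ) * Complex.I)
        - Complex.exp ((α j : ℂ) * Complex.I)) /
      (-(r : ℂ) * Complex.exp ((θ : ℂ) * Complex.I)
        - Complex.exp ((β j : ℂ) * Complex.I)))‖
      < Real.exp (-(D ^ ((1 : ℝ) / 3)) / cε) := by
  intro ε hε
  obtain ⟨hε0, hεπ⟩ := hε
  refine ⟨1, one_pos, 16, by norm_num, ?_⟩
  intro P hP φ₀ hφ α β hβ hα D hD0 hsum hD1 r θ hr hθ
  have hπ3 := Real.pi_gt_three
  have hπ315 := Real.pi_lt_d2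
  have hφ1 := abs_lt.mp hφ
  have hθa : |θ| < ε/8 := abs_lt.mpr ⟨hθ.1, hθ.2⟩
  -- angle data
  have hαβ1 : ∀ j, 2*ε < α j - β j := fun j => by
    have h1 := (hα j).1; have h2 := (hβ j).2; linarith
  have hαβ2 : ∀ j, α j - β j < 2*π - 2*ε := fun j => by
    have h1 := (hα j).2; have h2 := (hβ j).1; linarith
  have hρ0 : ∀ j, 0 ≤ 2 * Real.sin ((α j - β j)/2) := fun j => by
    have h := Real.sin_nonneg_of_nonneg_of_le_pi (x := (α j - β j)/2)
      (by have := hαβ1 j; linarith) (by have := hαβ2 j; linarith)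
    linarith
  have hγ1 : ∀ j, ε - π/2 < ((α j + β j)/2 - π/2) - φ₀ := fun j => by
    have h1 := (hα j).1; have h2 := (hβ j).1; linarith
  have hγ2 : ∀ j, ((α j + β j)/2 - π/2) - φ₀ < π/2 - ε := fun j => by
    have h1 := (hα j).2; have h2 := (hβ j).2; linarith
  -- sum in polar form
  have hsum' : ∑ j, (((2 * Real.sin ((α j - β j)/2) : ℝ) : ℂ) *
      Complex.exp ((((α j + β j)/2 - π/2 : ℝ) : ℂ) * Complex.I)) = (D:ℂ) := by
    rw [← hsum]
    exact Finset.sum_congr rfl fun j _ => (exp_factor (α j) (β j)).symm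
  have hRe : ∑ j, (2 * Real.sin ((α j - β j)/2)) * Real.cos ((α j + β j)/2 - π/2) = D := by
    have h := congrArg Complex.re hsum'
    rw [Complex.re_sum] at h
    simp only [Complex.mul_re, Complex.ofReal_re, Complex.ofReal_im,
      Complex.exp_ofReal_mul_I_re, Complex.exp_ofReal_mul_I_im, zero_mul, sub_zero,
      Complex.ofReal_re] at h
    exact h
  have hIm : ∑ j, (2 * Real.sin ((α j - β j)/2)) * Real.sin ((α j + β j)/2 - π/2) = 0 := by
    have h := congrArg Complex.im hsum'
    rw [Complex.im_sum] at h
    simp only [Complex.mul_im, Complex.ofReal_re, Complex.ofReal_im,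
      Complex.exp_ofReal_mul_I_re, Complex.exp_ofReal_mul_I_im, zero_mul, add_zero,
      Complex.ofReal_im] at h
    exact h
  -- difference identity
  have hdiff : ∀ j, Real.cos (β j - θ) - Real.cos (α j - θ) =
      (2 * Real.sin ((α j - β j)/2)) * Real.cos (((α j + β j)/2 - π/2) - θ) := by
    intro j
    have h1 := cos_diff_eq (α j - θ) (β j - θ)
    rw [show ((α j - θ) - (β j - θ))/2 = (α j - β j)/2 by ring,
        show ((α j - θ) + (β j - θ))/2 = (α j + β j)/2 - θ by ring] at h1
    have h2 : Real.cos (((α j + β j)/2 - π/2) - θ) = Real.sin ((α j + β j)/2 - θ) := by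
      rw [show ((α j + β j)/2 - π/2) - θ = ((α j + β j)/2 - θ) - π/2 by ring,
        Real.cos_sub_pi_div_two]
    rw [h2]
    linarith [h1]
  -- cos bounds
  have hcB : ∀ j, -(1/5 : ℝ) ≤ Real.cos (β j - θ) := by
    intro j
    have hb1 := (hβ j).1; have hb2 := (hβ j).2
    have h1 : Real.cos (ε/8 + π/2) ≤ Real.cos (β j - θ) := by
      apply cos_ge_of_abs_le'
      · exact abs_le.mpr ⟨by have := hθ.2; linarith, by have := hθ.1; linarith⟩
      · linarith
    rw [Real.cos_add_pi_div_two] at h1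
    have h2 : Real.sin (ε/8) ≤ ε/8 := Real.sin_le (by linarith)
    linarith
  -- product identity for abs squared
  have hr0 : 0 < r := lt_trans (Real.rpow_pos_of_pos hD0 _) hr.1
  set A := ‖∏ j, ((-(r : ℂ) * Complex.exp ((θ : ℂ) * Complex.I)
        - Complex.exp ((α j : ℂ) * Complex.I)) /
      (-(r : ℂ) * Complex.exp ((θ : ℂ) * Complex.I)
        - Complex.exp ((β j : ℂ) * Complex.I)))‖ with hAdef
  have hA2 : A ^ 2 = ∏ j, ((1 + r^2 + 2*r*Real.cos (α j - θ)) / (1 + r^2 + 2*r*Real.cos (β j - θ))) := by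
    rw [hAdef, Complex.sq_norm, map_prod]
    exact Finset.prod_congr rfl fun j _ => by rw [map_div₀, normSq_aux, normSq_aux]
  have hcore := core ε φ₀ θ D r (fun j => 2 * Real.sin ((α j - β j)/2))
    (fun j => (α j + β j)/2 - π/2) (fun j => Real.cos (α j - θ)) (fun j => Real.cos (β j - θ))
    hε0 hεπ hφ hθa hρ0 hγ1 hγ2 hRe hIm hdiff hcB
    (fun j => Real.cos_le_one _) (fun j => Real.neg_one_le_cos _) hD0 hD1 hr.1 hr.2
  have hA2lt : A ^ 2 < Real.exp (-(D ^ ((1:ℝ)/3))/8) := by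
    rw [hA2]; exact hcore
  have hsq : Real.exp (-(D ^ ((1:ℝ)/3))/8) = (Real.exp (-(D ^ ((1:ℝ)/3))/16)) ^ 2 := by
    rw [sq, ← Real.exp_add]
    ring_nf
  rw [hsq] at hA2lt
  have hlt : A < Real.exp (-(D ^ ((1:ℝ)/3))/16) :=
    lt_of_pow_lt_pow_left₀ 2 (Real.exp_nonneg _) hA2lt
  exact hlt
end

section
/- With the discrete-exponential angle data fixed and Σ_{j=1}^P (e^{iβ_j} − e^{iα_j}) = D a positive real number, there exist constants D_ε > 0 and C_ε > 0 depending only on ε such that: if D > D_ε, then for all z₁ = r₁·e^{iθ₁} and z₂ = r₂·e^{iθ₂} with 0 < r₁, r₂ < D^{−2/3}, θ₁ ∈ (π − ε/8, π + ε/8), and θ₂ ∈ (−ε/8, ε/8), there exists E ∈ ℂ with |E| ≤ C_ε·D^{−1/3} such that (1 − g(z₁)/g(z₂))/(z₁ − z₂) = (1 + E) · (1 − e^{D(z₁ − z₂)})/(z₁ − z₂). -/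
open Real

lemma aux_cos_ge {x y : ℝ} (h : |x| ≤ y) (hy : y ≤ π) : Real.cos y ≤ Real.cos x := by
  rw [← Real.cos_abs x]
  exact Real.cos_le_cos_of_nonneg_of_le_pi (abs_nonneg x) hy h

lemma aux_log_est {w : ℂ} (h : ‖w‖ ≤ 1/2) :
    ‖Complex.log (1 - w) + w‖ ≤ ‖w‖ ^ 2 := by
  have hn : ‖(-w)‖ < 1 := by rw [norm_neg]; exact h.trans_lt (by norm_num)
  have h2 := Complex.norm_log_one_add_sub_self_le hn
  rw [show (1 : ℂ) + -w = 1 - w by ring, sub_neg_eq_add, norm_neg] at h2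
  have h0 : (0:ℝ) ≤ ‖w‖ := norm_nonneg _
  have hw : ‖w‖ ≤ 1/2 := h
  have hinv : (1 - ‖w‖)⁻¹ ≤ 2 := by
    rw [inv_le_comm₀ (by linarith) (by norm_num)]; linarith
  calc ‖Complex.log (1 - w) + w‖ ≤ ‖w‖^2 * (1 - ‖w‖)⁻¹ / 2 := h2
    _ ≤ ‖w‖^2 * 2 / 2 := by gcongr
    _ = ‖w‖^2 := by ring

lemma aux_one_sub_exp {t : ℝ} (ht : 0 ≤ t) : t / (1 + t) ≤ 1 - Real.exp (-t) := by
  have h1 : t + 1 ≤ Real.exp t := Real.add_one_le_exp t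
  have h2 : Real.exp (-t) ≤ (1 + t)⁻¹ := by
    rw [Real.exp_neg, inv_le_inv₀ (Real.exp_pos t) (by linarith)]
    linarith
  have h3 : (0:ℝ) < 1 + t := by linarith
  have h4 : 1 - (1+t)⁻¹ = t / (1+t) := by field_simp; ring
  linarith [h4 ▸ sub_le_sub_left h2 1]

lemma aux_one_sub_ne {w : ℂ} (h : ‖w‖ ≤ 1/2) : (1 : ℂ) - w ≠ 0 := by
  intro hc
  have : w = 1 := by linear_combination -hc
  rw [this] at h; simp at h; norm_num at h

lemma aux_ratio {z w a : ℂ} (ha : a ≠ 0) (hw : w - a ≠ 0) :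
    (z - a)/(w - a) = (1 - z/a)/(1 - w/a) := by
  have hw' : 1 - w/a ≠ 0 := by
    intro hc
    apply hw
    field_simp at hc
    linear_combination -hc
  rw [div_eq_div_iff hw hw']
  field_simp
  ring



lemma aux_sq_sum {x y : ℝ} (hx : 0 ≤ x) (hy : 0 ≤ y) :
    2*x^2 + 2*y^2 ≤ 2*(x+y)^2 := by nlinarith [mul_nonneg hx hy]

lemma aux_sq8 {d : ℝ} (h : 8 < d) : (2:ℝ) ≤ d^2 := by nlinarith

lemma aux_re {D r₁ r₂ c1 c2 c : ℝ} (hD : 0 < D) (hr₁ : 0 < r₁) (hr₂ : 0 < r₂)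
    (h1 : c1 ≤ -c) (h2 : c ≤ c2) : D*(r₁*c1 - r₂*c2) ≤ -(D*((r₁+r₂)*c)) := by
  have e1 : r₁*c1 ≤ r₁*(-c) := mul_le_mul_of_nonneg_left h1 hr₁.le
  have e2 : r₂*c ≤ r₂*c2 := mul_le_mul_of_nonneg_left h2 hr₂.le
  have e3 : r₁*c1 - r₂*c2 ≤ -((r₁+r₂)*c) := by nlinarith
  nlinarith

lemma aux_dgt {d σ : ℝ} (h : 8 < d * σ) (hσ1 : σ ≤ 1) (hd0 : 0 < d) : 8 < d := by nlinarith

lemma aux_piece1 {σ d N P s : ℝ} (hσ : 0 < σ) (hd : 8 < d) (hs : 0 < s)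
    (hsd : s * d^2 ≤ 2) (hP : 0 ≤ P) (hPσ : 2*σ*P ≤ d^3) (hN : N ≤ 2*P*s^2) :
    2*N*σ ≤ 4*d^2*s := by
  have h1 : 2*N*σ ≤ 2*(2*P*s^2)*σ := by nlinarith
  have h2 : 2*(2*P*s^2)*σ = (2*σ*P)*(2*s^2) := by ring
  have h3 : (2*σ*P)*(2*s^2) ≤ d^3*(2*s^2) := by nlinarith [sq_nonneg s]
  have h4 : d^3*(2*s^2) = 2*(s*d^2)*(s*d) := by ring
  have h5 : s*d ≤ 2 := by nlinarith
  have h6 : 0 ≤ s*d := by positivity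
  have h7 : 2*(s*d^2)*(s*d) ≤ 2*2*(s*d) := by nlinarith
  have h8 : 2*2*(s*d) ≤ 4*d^2*s := by nlinarith
  linarith

set_option maxHeartbeats 2000000 in
/-- Comparison of the kernel `(1 - g(z₁)/g(z₂))/(z₁ - z₂)` built from the
discrete exponential `g` with its exponential asymptotic `(1 - e^{D(z₁ - z₂)})/(z₁ - z₂)`,
in the small-modulus regime, with `z₁` in a cone about the negative real axis and `z₂` in a
cone about the positive real axis; the relative error is `O(D^{-1/3})` with constants
depending only on `ε`. -/
theorem stmt_4 : ∀ ε : ℝ, ε ∈ Set.Ioo 0 (π / 3) →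
    ∃ Dε : ℝ, 0 < Dε ∧ ∃ Cε : ℝ, 0 < Cε ∧
    ∀ (P : ℕ), 1 ≤ P → ∀ (φ₀ : ℝ), |φ₀| < ε →
    ∀ (α β : Fin P → ℝ),
    (∀ j, β j - φ₀ ∈ Set.Ioo (-(π / 2) + ε) (π / 2 - ε)) →
    (∀ j, α j - φ₀ ∈ Set.Ioo (π / 2 + ε) (3 * π / 2 - ε)) →
    ∀ g : ℂ → ℂ,
    g = (fun z => ∏ j, (z - Complex.exp ((α j : ℂ) * Complex.I)) /
      (z - Complex.exp ((β j : ℂ) * Complex.I))) →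
    ∀ D : ℝ, 0 < D →
    (∑ j, (Complex.exp ((β j : ℂ) * Complex.I) - Complex.exp ((α j : ℂ) * Complex.I))) = (D : ℂ) →
    Dε < D →
    ∀ r₁ r₂ θ₁ θ₂ : ℝ, 0 < r₁ → r₁ < D ^ (-(2 : ℝ) / 3) → 0 < r₂ → r₂ < D ^ (-(2 : ℝ) / 3) →
    θ₁ ∈ Set.Ioo (π - ε / 8) (π + ε / 8) → θ₂ ∈ Set.Ioo (-(ε / 8)) (ε / 8) →
    ∀ z₁ z₂ : ℂ, z₁ = (r₁ : ℂ) * Complex.exp ((θ₁ : ℂ) * Complex.I) →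
    z₂ = (r₂ : ℂ) * Complex.exp ((θ₂ : ℂ) * Complex.I) →
    ∃ E : ℂ, ‖E‖ ≤ Cε * D ^ (-(1 : ℝ) / 3) ∧
      (1 - g z₁ / g z₂) / (z₁ - z₂)
        = (1 + E) * ((1 - Complex.exp ((D : ℂ) * (z₁ - z₂))) / (z₁ - z₂)) := by
  intro ε hε
  obtain ⟨hε0, hεπ⟩ := hε
  have hπ := Real.pi_pos
  have hσ : 0 < Real.sin ε := Real.sin_pos_of_pos_of_lt_pi hε0 (by linarith)
  have hσ1 : Real.sin ε ≤ 1 := Real.sin_le_one ε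
  have hc : 0 < Real.cos (ε/8) := Real.cos_pos_of_mem_Ioo ⟨by linarith, by linarith⟩
  have hc1 : Real.cos (ε/8) ≤ 1 := Real.cos_le_one _
  set σ := Real.sin ε with hσdef
  set c := Real.cos (ε/8) with hcdef
  refine ⟨(8/σ)^3, by positivity, 8/(σ*c), by positivity, ?_⟩
  intro P hP φ₀ hφ₀ α β hβ hα g hg D hD0 hsum hDgt r₁ r₂ θ₁ θ₂ hr₁ hr₁' hr₂ hr₂'
    hθ₁ hθ₂ z₁ z₂ hz₁ hz₂
  -- cube root
  set d := D ^ ((1:ℝ)/3) with hddef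
  have hd0 : 0 < d := Real.rpow_pos_of_pos hD0 _
  have hd3 : d^3 = D := by
    rw [hddef, ← Real.rpow_natCast (D ^ ((1:ℝ)/3)) 3, ← Real.rpow_mul hD0.le]
    norm_num
  have hdgt : 8/σ < d := by
    refine lt_of_pow_lt_pow_left₀ 3 hd0.le ?_
    rw [hd3]; exact hDgt
  have hd8 : 8 < d * σ := (div_lt_iff₀ hσ).mp hdgt
  have hd8' : 8 < d := aux_dgt hd8 hσ1 hd0
  have h23 : D ^ (-(2:ℝ)/3) = (d^2)⁻¹ := by
    rw [show -(2:ℝ)/3 = ((1:ℝ)/3) * (-2 : ℤ) by norm_num, Real.rpow_mul hD0.le,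
      Real.rpow_intCast, ← hddef]
    simp [zpow_neg]
  have h13 : D ^ (-(1:ℝ)/3) = d⁻¹ := by
    rw [show -(1:ℝ)/3 = ((1:ℝ)/3) * (-1 : ℤ) by norm_num, Real.rpow_mul hD0.le,
      Real.rpow_intCast, ← hddef]
    simp
  have hu2 : ((d^2)⁻¹ : ℝ) ≤ 1/2 := by
    rw [inv_le_comm₀ (by positivity) (by norm_num)]; linarith [aux_sq8 hd8']
  have hr₁d : r₁ ≤ (d^2)⁻¹ := by rw [← h23]; exact hr₁'.le
  have hr₂d : r₂ ≤ (d^2)⁻¹ := by rw [← h23]; exact hr₂'.le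
  have hr₁h : r₁ ≤ 1/2 := hr₁d.trans hu2
  have hr₂h : r₂ ≤ 1/2 := hr₂d.trans hu2
  -- unit-modulus points
  set a : Fin P → ℂ := fun j => Complex.exp ((α j : ℂ) * Complex.I) with ha_def
  set b : Fin P → ℂ := fun j => Complex.exp ((β j : ℂ) * Complex.I) with hb_def
  have habs_a : ∀ j, ‖a j‖ = 1 := by
    intro j; simp [ha_def, Complex.norm_exp]
  have habs_b : ∀ j, ‖b j‖ = 1 := by
    intro j; simp [hb_def, Complex.norm_exp]
  have ha_ne : ∀ j, a j ≠ 0 := fun j => Complex.exp_ne_zero _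
  have hb_ne : ∀ j, b j ≠ 0 := fun j => Complex.exp_ne_zero _
  have hz₁abs : ‖z₁‖ = r₁ := by
    rw [hz₁]; simp [Complex.norm_exp, abs_of_pos hr₁]
  have hz₂abs : ‖z₂‖ = r₂ := by
    rw [hz₂]; simp [Complex.norm_exp, abs_of_pos hr₂]
  have hqa₁ : ∀ j, ‖z₁ / a j‖ = r₁ := by
    intro j; rw [norm_div, habs_a, hz₁abs, div_one]
  have hqa₂ : ∀ j, ‖z₂ / a j‖ = r₂ := by
    intro j; rw [norm_div, habs_a, hz₂abs, div_one]
  have hqb₁ : ∀ j, ‖z₁ / b j‖ = r₁ := by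
    intro j; rw [norm_div, habs_b, hz₁abs, div_one]
  have hqb₂ : ∀ j, ‖z₂ / b j‖ = r₂ := by
    intro j; rw [norm_div, habs_b, hz₂abs, div_one]
  have hsub_ne : ∀ (z u : ℂ), ‖z‖ ≤ 1/2 → ‖u‖ = 1 → z - u ≠ 0 := by
    intro z u hz hu h
    have : z = u := sub_eq_zero.mp h
    rw [this, hu] at hz; norm_num at hz
  -- the logarithm and error term
  set term : Fin P → ℂ := fun j =>
    Complex.log (1 - z₁ / a j) - Complex.log (1 - z₂ / a j)
      - Complex.log (1 - z₁ / b j) + Complex.log (1 - z₂ / b j) with hterm_def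
  set L : ℂ := ∑ j, term j with hL_def
  set err : ℂ := L - (D : ℂ) * (z₁ - z₂) with herr_def
  -- claim 1 : g z₁ / g z₂ = exp L
  have hratio : g z₁ / g z₂ = Complex.exp L := by
    rw [hg, hL_def, Complex.exp_sum, ← Finset.prod_div_distrib]
    refine Finset.prod_congr rfl ?_
    intro j _
    have e1 : (1 : ℂ) - z₁ / a j ≠ 0 := aux_one_sub_ne (by rw [hqa₁]; exact hr₁h)
    have e2 : (1 : ℂ) - z₂ / a j ≠ 0 := aux_one_sub_ne (by rw [hqa₂]; exact hr₂h)
    have e3 : (1 : ℂ) - z₁ / b j ≠ 0 := aux_one_sub_ne (by rw [hqb₁]; exact hr₁h)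
    have e4 : (1 : ℂ) - z₂ / b j ≠ 0 := aux_one_sub_ne (by rw [hqb₂]; exact hr₂h)
    have f1 : z₁ - b j ≠ 0 := hsub_ne _ _ (by rw [hz₁abs]; exact hr₁h) (habs_b j)
    have f2 : z₂ - b j ≠ 0 := hsub_ne _ _ (by rw [hz₂abs]; exact hr₂h) (habs_b j)
    have f3 : z₁ - a j ≠ 0 := hsub_ne _ _ (by rw [hz₁abs]; exact hr₁h) (habs_a j)
    have f4 : z₂ - a j ≠ 0 := hsub_ne _ _ (by rw [hz₂abs]; exact hr₂h) (habs_a j)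
    rw [hterm_def]
    rw [Complex.exp_add, Complex.exp_sub, Complex.exp_sub,
      Complex.exp_log e1, Complex.exp_log e2, Complex.exp_log e3, Complex.exp_log e4]
    rw [div_div_div_comm, aux_ratio (ha_ne j) f4, aux_ratio (hb_ne j) f2,
      div_div_eq_mul_div, mul_div_right_comm]
  -- sum of inverses equals D
  have hinv_conj : ∀ x : ℝ, (Complex.exp ((x:ℂ) * Complex.I))⁻¹
      = (starRingEnd ℂ) (Complex.exp ((x:ℂ) * Complex.I)) := by
    intro x
    rw [← Complex.exp_conj, ← Complex.exp_neg]
    congr 1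
    simp [Complex.conj_ofReal]
  have hsum_inv : ∑ j, ((b j)⁻¹ - (a j)⁻¹) = (D : ℂ) := by
    have h1 : ∀ j ∈ Finset.univ, (b j)⁻¹ - (a j)⁻¹
        = (starRingEnd ℂ) (b j - a j) := by
      intro j _
      rw [map_sub, ha_def, hb_def]
      simp only []
      rw [hinv_conj, hinv_conj]
    rw [Finset.sum_congr rfl h1, ← map_sum, hsum, Complex.conj_ofReal]
  -- error representation
  have herr_eq : err = ∑ j,
      ((Complex.log (1 - z₁ / a j) + z₁ / a j) - (Complex.log (1 - z₂ / a j) + z₂ / a j)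
        - (Complex.log (1 - z₁ / b j) + z₁ / b j) + (Complex.log (1 - z₂ / b j) + z₂ / b j)) := by
    rw [herr_def, hL_def, show ((D:ℂ)) * (z₁ - z₂) = ∑ j, ((b j)⁻¹ - (a j)⁻¹) * (z₁ - z₂) by
      rw [← Finset.sum_mul, hsum_inv], ← Finset.sum_sub_distrib]
    refine Finset.sum_congr rfl ?_
    intro j _
    rw [hterm_def]
    simp only []
    field_simp
    ring
  -- error bound
  have herr_bound : ‖err‖ ≤ (P : ℝ) * (2 * r₁^2 + 2 * r₂^2) := by
    rw [herr_eq]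
    refine le_trans (norm_sum_le _ _) ?_
    have hle : ∀ j ∈ Finset.univ, ‖(Complex.log (1 - z₁ / a j) + z₁ / a j)
        - (Complex.log (1 - z₂ / a j) + z₂ / a j)
        - (Complex.log (1 - z₁ / b j) + z₁ / b j)
        + (Complex.log (1 - z₂ / b j) + z₂ / b j)‖ ≤ 2 * r₁^2 + 2 * r₂^2 := by
      intro j _
      have g1 := aux_log_est (w := z₁ / a j) (by rw [hqa₁]; exact hr₁h)
      have g2 := aux_log_est (w := z₂ / a j) (by rw [hqa₂]; exact hr₂h)
      have g3 := aux_log_est (w := z₁ / b j) (by rw [hqb₁]; exact hr₁h)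
      have g4 := aux_log_est (w := z₂ / b j) (by rw [hqb₂]; exact hr₂h)
      rw [hqa₁] at g1; rw [hqa₂] at g2; rw [hqb₁] at g3; rw [hqb₂] at g4
      have t1 := norm_add_le ((Complex.log (1 - z₁ / a j) + z₁ / a j)
        - (Complex.log (1 - z₂ / a j) + z₂ / a j)
        - (Complex.log (1 - z₁ / b j) + z₁ / b j)) (Complex.log (1 - z₂ / b j) + z₂ / b j)
      have t2 := norm_sub_le ((Complex.log (1 - z₁ / a j) + z₁ / a j)
        - (Complex.log (1 - z₂ / a j) + z₂ / a j)) (Complex.log (1 - z₁ / b j) + z₁ / b j)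
      have t3 := norm_sub_le (Complex.log (1 - z₁ / a j) + z₁ / a j)
        (Complex.log (1 - z₂ / a j) + z₂ / a j)
      linarith
    refine le_trans (Finset.sum_le_sum hle) ?_
    rw [Finset.sum_const, Finset.card_univ, Fintype.card_fin, nsmul_eq_mul]
  -- bound on P : 2 σ P ≤ D
  have hP_bound : 2 * σ * (P : ℝ) ≤ D := by
    have key : ∀ j ∈ Finset.univ, 2 * σ
        ≤ (Complex.exp ((-φ₀ : ℂ) * Complex.I) * (b j - a j)).re := by
      intro j _
      have eb : Complex.exp ((-φ₀ : ℂ) * Complex.I) * b j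
          = Complex.exp (((β j - φ₀ : ℝ) : ℂ) * Complex.I) := by
        rw [hb_def]
        simp only []
        rw [← Complex.exp_add]
        congr 1
        push_cast
        ring
      have ea : Complex.exp ((-φ₀ : ℂ) * Complex.I) * a j
          = Complex.exp (((α j - φ₀ : ℝ) : ℂ) * Complex.I) := by
        rw [ha_def]
        simp only []
        rw [← Complex.exp_add]
        congr 1
        push_cast
        ring
      rw [mul_sub, eb, ea, Complex.sub_re, Complex.exp_ofReal_mul_I_re,
        Complex.exp_ofReal_mul_I_re]
      have hβj := hβ j
      have hαj := hα j
      have hcb : σ ≤ Real.cos (β j - φ₀) := by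
        rw [hσdef, ← Real.cos_pi_div_two_sub]
        exact aux_cos_ge (abs_le.mpr ⟨by linarith [hβj.1], by linarith [hβj.2]⟩)
          (by linarith)
      have hca : Real.cos (α j - φ₀) ≤ -σ := by
        have h1 : σ ≤ Real.cos (π - (α j - φ₀)) := by
          rw [hσdef, ← Real.cos_pi_div_two_sub]
          exact aux_cos_ge (abs_le.mpr ⟨by linarith [hαj.2], by linarith [hαj.1]⟩)
            (by linarith)
        rw [Real.cos_pi_sub] at h1
        linarith
      linarith
    have hsum_re : ∑ j, (Complex.exp ((-φ₀ : ℂ) * Complex.I) * (b j - a j)).re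
        = Real.cos φ₀ * D := by
      rw [← Complex.re_sum, ← Finset.mul_sum]
      have : ∑ j, (b j - a j) = (D : ℂ) := hsum
      rw [this]
      have : Complex.exp ((-φ₀ : ℂ) * Complex.I)
          = Complex.exp (((-φ₀ : ℝ) : ℂ) * Complex.I) := by push_cast; ring_nf
      rw [this]
      rw [Complex.mul_re, Complex.exp_ofReal_mul_I_re, Complex.ofReal_re, Complex.ofReal_im]
      rw [Real.cos_neg]
      ring
    have hsum_ge := Finset.sum_le_sum key
    rw [hsum_re, Finset.sum_const, Finset.card_univ, Fintype.card_fin, nsmul_eq_mul] at hsum_ge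
    have hcosφ : Real.cos φ₀ * D ≤ D :=
      mul_le_of_le_one_left hD0.le (Real.cos_le_one _)
    linarith [hsum_ge]
  -- real part estimate
  have hcos1 : Real.cos θ₁ ≤ -c := by
    have h1 : c ≤ Real.cos (π - θ₁) := by
      rw [hcdef]
      exact aux_cos_ge (abs_le.mpr ⟨by linarith [hθ₁.2], by linarith [hθ₁.1]⟩) (by linarith)
    rw [Real.cos_pi_sub] at h1
    linarith
  have hcos2 : c ≤ Real.cos θ₂ := by
    rw [hcdef]
    exact aux_cos_ge (abs_le.mpr ⟨by linarith [hθ₂.1], by linarith [hθ₂.2]⟩) (by linarith)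
  have hz₁re : z₁.re = r₁ * Real.cos θ₁ := by
    rw [hz₁, Complex.mul_re, Complex.ofReal_re, Complex.ofReal_im,
      Complex.exp_ofReal_mul_I_re]
    ring
  have hz₂re : z₂.re = r₂ * Real.cos θ₂ := by
    rw [hz₂, Complex.mul_re, Complex.ofReal_re, Complex.ofReal_im,
      Complex.exp_ofReal_mul_I_re]
    ring
  set t : ℝ := D * ((r₁ + r₂) * c) with ht_def
  have ht : 0 < t := by positivity
  have hRe : ((D : ℂ) * (z₁ - z₂)).re ≤ -t := by
    rw [Complex.mul_re, Complex.ofReal_re, Complex.ofReal_im, Complex.sub_re,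
      hz₁re, hz₂re, ht_def]
    have h2 := aux_re hD0 hr₁ hr₂ hcos1 hcos2
    linarith
  -- abbreviations
  set X : ℂ := Complex.exp ((D : ℂ) * (z₁ - z₂)) with hX_def
  set N : ℝ := ‖err‖ with hN_def
  have hN0 : 0 ≤ N := norm_nonneg _
  -- N ≤ 2/(σ d)
  have hPle : (P : ℝ) ≤ d^3 / (2*σ) := by
    rw [le_div_iff₀ (by positivity)]
    rw [hd3]
    linarith [hP_bound]
  have hNle : N ≤ 2 / (σ * d) := by
    have hu0 : (0:ℝ) ≤ (d^2)⁻¹ := by positivity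
    calc N ≤ (P : ℝ) * (2 * r₁^2 + 2 * r₂^2) := herr_bound
      _ ≤ (P : ℝ) * (2 * ((d^2)⁻¹)^2 + 2 * ((d^2)⁻¹)^2) := by
          have h1 : r₁^2 ≤ ((d^2)⁻¹)^2 := pow_le_pow_left₀ hr₁.le hr₁d 2
          have h2 : r₂^2 ≤ ((d^2)⁻¹)^2 := pow_le_pow_left₀ hr₂.le hr₂d 2
          have hp0 : (0:ℝ) ≤ (P:ℝ) := Nat.cast_nonneg P
          exact mul_le_mul_of_nonneg_left (by linarith) hp0
      _ ≤ (d^3 / (2*σ)) * (2 * ((d^2)⁻¹)^2 + 2 * ((d^2)⁻¹)^2) :=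
          mul_le_mul_of_nonneg_right hPle (by positivity)
      _ = 2 / (σ * d) := by
          field_simp
          ring
  have hN1 : N ≤ 1/4 := by
    have h1 : 2 / (σ * d) ≤ 2 / 8 := by
      apply div_le_div_of_nonneg_left (by norm_num) (by norm_num)
      rw [mul_comm]
      exact hd8.le
    calc N ≤ 2/(σ*d) := hNle
      _ ≤ 2/8 := h1
      _ ≤ 1/4 := by norm_num
  -- denominator lower bound
  have hden : t / (1 + t) ≤ ‖1 - X‖ := by
    calc t / (1 + t) ≤ 1 - Real.exp (-t) := aux_one_sub_exp ht.le
      _ ≤ 1 - Real.exp (((D : ℂ) * (z₁ - z₂)).re) := by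
          have := Real.exp_le_exp.mpr hRe
          linarith
      _ = 1 - ‖X‖ := by rw [hX_def, Complex.norm_exp]
      _ ≤ ‖1 - X‖ := by
          have := norm_sub_norm_le (1 : ℂ) X
          simpa using this
  have hden0 : 0 < ‖1 - X‖ :=
    lt_of_lt_of_le (div_pos ht (by linarith)) hden
  have hXne : (1 : ℂ) - X ≠ 0 := by
    intro h
    rw [h] at hden0
    simp at hden0
  -- numerator bound
  have hXabs : ‖X‖ ≤ 1 := by
    rw [hX_def, Complex.norm_exp]
    calc Real.exp (((D : ℂ) * (z₁ - z₂)).re) ≤ Real.exp (-t) := Real.exp_le_exp.mpr hRe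
      _ ≤ Real.exp 0 := Real.exp_le_exp.mpr (by linarith)
      _ = 1 := Real.exp_zero
  have hnum : ‖X - g z₁ / g z₂‖ ≤ 2 * N := by
    have hLX : Complex.exp L = X * Complex.exp err := by
      rw [hX_def, ← Complex.exp_add]
      congr 1
      rw [herr_def]
      ring
    rw [hratio, hLX, show X - X * Complex.exp err = -(X * (Complex.exp err - 1)) by ring,
      norm_neg, norm_mul]
    have h2 : ‖Complex.exp err - 1‖ ≤ 2 * N := by
      rw [hN_def]
      exact Complex.norm_exp_sub_one_le (by rw [← hN_def]; linarith)
    calc ‖X‖ * ‖Complex.exp err - 1‖ ≤ 1 * (2 * N) := by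
          apply mul_le_mul hXabs h2 (norm_nonneg _) zero_le_one
      _ = 2 * N := by ring
  -- define E
  refine ⟨(X - g z₁ / g z₂) / (1 - X), ?_, ?_⟩
  · -- norm bound
    rw [norm_div]
    have step1 : ‖X - g z₁ / g z₂‖ / ‖1 - X‖
        ≤ (2 * N) / (t / (1 + t)) :=
      div_le_div₀ (by positivity) hnum (div_pos ht (by linarith)) hden
    have step2 : (2 * N) / (t / (1 + t)) = 2 * N / t + 2 * N := by
      field_simp
    have step3 : 2 * N / t + 2 * N ≤ 8 / (σ * c) * d⁻¹ := by
      have hs0 : 0 < r₁ + r₂ := by linarith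
      have hs2 : (r₁ + r₂) * d^2 ≤ 2 := by
        calc (r₁ + r₂) * d^2 ≤ ((d^2)⁻¹ + (d^2)⁻¹) * d^2 := by
              apply mul_le_mul_of_nonneg_right (by linarith) (by positivity)
          _ = 2 := by field_simp; norm_num
      have piece2 : 2 * N ≤ 4 / (σ * c) * d⁻¹ := by
        have h1 : 2 * N ≤ 4 / (σ * d) := by
          have : 2 * N ≤ 2 * (2 / (σ * d)) := by linarith [hNle]
          calc 2 * N ≤ 2 * (2 / (σ * d)) := this
            _ = 4 / (σ * d) := by ring
        have h2 : 4 / (σ * d) ≤ 4 / (σ * c * d) := by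
          apply div_le_div_of_nonneg_left (by norm_num) (by positivity)
          calc σ * c * d = σ * d * c := by ring
            _ ≤ σ * d * 1 := mul_le_mul_of_nonneg_left hc1 (by positivity)
            _ = σ * d := mul_one _
        calc 2 * N ≤ 4 / (σ * d) := h1
          _ ≤ 4 / (σ * c * d) := h2
          _ = 4 / (σ * c) * d⁻¹ := by field_simp
      have piece1 : 2 * N / t ≤ 4 / (σ * c) * d⁻¹ := by
        rw [div_le_iff₀ ht]
        have hrhs : 4 / (σ * c) * d⁻¹ * t = 4 * d^2 * (r₁ + r₂) / σ := by
          rw [ht_def, ← hd3]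
          field_simp
        rw [hrhs]
        -- 2 N ≤ 4 d² (r₁+r₂) / σ
        rw [le_div_iff₀ hσ]
        have hp0 : (0:ℝ) ≤ (P:ℝ) := Nat.cast_nonneg P
        have hN2 : N ≤ 2 * (P : ℝ) * (r₁ + r₂)^2 := by
          calc N ≤ (P : ℝ) * (2 * r₁^2 + 2 * r₂^2) := herr_bound
            _ ≤ (P : ℝ) * (2 * (r₁ + r₂)^2) :=
                mul_le_mul_of_nonneg_left (aux_sq_sum hr₁.le hr₂.le) hp0
            _ = 2 * (P : ℝ) * (r₁ + r₂)^2 := by ring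
        have hPσ : 2*σ*(P:ℝ) ≤ d^3 := by rw [hd3]; exact hP_bound
        exact aux_piece1 hσ hd8' hs0 hs2 hp0 hPσ hN2
      calc 2 * N / t + 2 * N ≤ 4 / (σ * c) * d⁻¹ + 4 / (σ * c) * d⁻¹ := add_le_add piece1 piece2
        _ = 8 / (σ * c) * d⁻¹ := by ring
    have hfin : 8 / (σ * c) * D ^ (-(1:ℝ)/3) = 8 / (σ * c) * d⁻¹ := by
      rw [h13]
    rw [hfin]
    exact (step2 ▸ step1).trans step3
  · -- the identity
    have hE : (X - g z₁ / g z₂) / (1 - X) * (1 - X) = X - g z₁ / g z₂ :=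
      div_mul_cancel₀ _ hXne
    have hmain : (1 + (X - g z₁ / g z₂) / (1 - X)) * (1 - X) = 1 - g z₁ / g z₂ := by
      linear_combination hE
    rw [← mul_div_assoc, hmain]
end

section
/- With the discrete-exponential angle data fixed and Σ_{j=1}^P (e^{iβ_j} − e^{iα_j}) = D a positive real number, let γ = g(0) = ∏_{j=1}^P e^{i(α_j − β_j)}. There exist constants D_ε > 0 and C_ε > 0 depending only on ε such that: if D > D_ε, then for all real x₁ ≠ x₂ with 0 < x₁, x₂ < D^{−2/3}, setting z₁ = −x₁ and z₂ = −x₂, there exists E ∈ ℂ with |E| ≤ C_ε·D^{−1/3} such that (g(z₁) − g(z₂))/(z₁ − z₂) = γ · (1 + E) · (e^{D z₁} − e^{D z₂})/(z₁ − z₂). -/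
open Real

section Compat

noncomputable def Complex.abs : AbsoluteValue ℂ ℝ where
  toFun z := ‖z‖
  map_mul' := norm_mul
  nonneg' := norm_nonneg
  eq_zero' _ := norm_eq_zero
  add_le' := norm_add_le

theorem Complex.norm_eq_abs (z : ℂ) : ‖z‖ = Complex.abs z := rfl

theorem Complex.abs_ofReal (r : ℝ) : Complex.abs (r : ℂ) = |r| :=
  (Complex.norm_real r).trans (Real.norm_eq_abs r)

theorem Complex.re_le_abs (z : ℂ) : z.re ≤ Complex.abs z := Complex.re_le_norm z

theorem Complex.abs_re_le_abs (z : ℂ) : |z.re| ≤ Complex.abs z := Complex.abs_re_le_norm z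

theorem Complex.abs_exp_ofReal_mul_I (x : ℝ) : Complex.abs (Complex.exp (x * Complex.I)) = 1 :=
  Complex.norm_exp_ofReal_mul_I x

theorem Complex.abs_exp (z : ℂ) : Complex.abs (Complex.exp z) = Real.exp z.re := Complex.norm_exp z

theorem Complex.abs_exp_sub_one_le {x : ℂ} (hx : Complex.abs x ≤ 1) :
    Complex.abs (Complex.exp x - 1) ≤ 2 * Complex.abs x :=
  Complex.norm_exp_sub_one_le hx

end Compat

section Aux

lemma aux_log {w : ℂ} (h : Complex.abs w ≤ 1/2) :
    Complex.abs (Complex.log (1+w) - w) ≤ Complex.abs w ^ 2 := by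
  have h1 : ‖w‖ < 1 := by rw [Complex.norm_eq_abs]; linarith
  have key := Complex.norm_log_one_add_sub_self_le h1
  rw [Complex.norm_eq_abs] at key h1
  have h2 : (1 - Complex.abs w)⁻¹ ≤ 2 := by
    rw [inv_le_comm₀ (by linarith) (by norm_num)]; linarith
  calc Complex.abs (Complex.log (1+w) - w) ≤ Complex.abs w ^ 2 * (1 - Complex.abs w)⁻¹ / 2 := key
    _ ≤ Complex.abs w ^ 2 * 2 / 2 := by gcongr
    _ = Complex.abs w ^ 2 := by ring

lemma aux_cos {ε t : ℝ} (hε0 : 0 < ε) (hε : ε < π/2) (h1 : -(π/2) + ε < t) (h2 : t < π/2 - ε) :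
    Real.sin ε ≤ Real.cos t := by
  have habs : |t| ≤ π/2 - ε := by rw [abs_le]; constructor <;> linarith
  have : Real.cos (π/2 - ε) ≤ Real.cos |t| :=
    Real.cos_le_cos_of_nonneg_of_le_pi (abs_nonneg t) (by linarith [Real.pi_pos]) habs
  rwa [Real.cos_abs, Real.cos_pi_div_two_sub] at this

lemma aux_cos' {ε t : ℝ} (hε0 : 0 < ε) (hε : ε < π/2) (h1 : π/2 + ε < t) (h2 : t < 3*π/2 - ε) :
    Real.cos t ≤ -Real.sin ε := by
  have := aux_cos hε0 hε (t := t - π) (by linarith) (by linarith)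
  have hc : Real.cos (t - π) = -Real.cos t := by rw [Real.cos_sub]; simp
  rw [hc] at this; linarith

lemma aux_ratio_s5 {p q : ℝ} (hpq : p ≠ q) :
    Real.exp (-q) ≤ (1 + 1/|p-q|) * |Real.exp (-p) - Real.exp (-q)| := by
  set t := |p - q| with ht
  have ht0 : 0 < t := abs_pos.mpr (sub_ne_zero.mpr hpq)
  have key : Real.exp (-q) * (1 - Real.exp (-t)) ≤ |Real.exp (-p) - Real.exp (-q)| := by
    rcases le_or_gt q p with h | h
    · have htp : t = p - q := by rw [ht, _root_.abs_of_nonneg (by linarith)]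
      have he : Real.exp (-p) = Real.exp (-q) * Real.exp (-t) := by
        rw [← Real.exp_add]; congr 1; rw [htp]; ring
      have hle : Real.exp (-p) ≤ Real.exp (-q) := Real.exp_le_exp.mpr (by linarith)
      rw [_root_.abs_of_nonpos (by linarith), he]; ring_nf; exact le_refl _
    · have htp : t = q - p := by rw [ht, _root_.abs_of_neg (by linarith)]; ring
      have he : Real.exp (-q) = Real.exp (-p) * Real.exp (-t) := by
        rw [← Real.exp_add]; congr 1; rw [htp]; ring
      have hle : Real.exp (-q) ≤ Real.exp (-p) := Real.exp_le_exp.mpr (by linarith)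
      rw [_root_.abs_of_nonneg (by linarith)]
      have h1e : 0 ≤ 1 - Real.exp (-t) := by
        have : Real.exp (-t) ≤ 1 := Real.exp_le_one_iff.mpr (by linarith)
        linarith
      calc Real.exp (-q) * (1 - Real.exp (-t)) ≤ Real.exp (-p) * (1 - Real.exp (-t)) := by
            apply mul_le_mul_of_nonneg_right hle h1e
        _ = Real.exp (-p) - Real.exp (-q) := by rw [he]; ring
  have hA : (1 + t) * Real.exp (-t) ≤ 1 := by
    have h1 : t + 1 ≤ Real.exp t := Real.add_one_le_exp t
    have h2 : Real.exp t * Real.exp (-t) = 1 := by rw [← Real.exp_add]; simp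
    nlinarith [Real.exp_pos (-t)]
  have hfact : 1 ≤ (1 + 1/t) * (1 - Real.exp (-t)) := by
    have : (1 + 1/t) * (1 - Real.exp (-t)) = ((1+t) - (1+t)*Real.exp (-t))/t := by field_simp; ring
    rw [this, le_div_iff₀ ht0]; linarith
  calc Real.exp (-q) = Real.exp (-q) * 1 := by ring
    _ ≤ Real.exp (-q) * ((1 + 1/t) * (1 - Real.exp (-t))) := by
        apply mul_le_mul_of_nonneg_left hfact (Real.exp_pos _).le
    _ = (1 + 1/t) * (Real.exp (-q) * (1 - Real.exp (-t))) := by ring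
    _ ≤ (1 + 1/t) * |Real.exp (-p) - Real.exp (-q)| := by
        apply mul_le_mul_of_nonneg_left key
        have : 0 < 1/t := by positivity
        linarith

lemma aux_abs_sub (a b : ℂ) : Complex.abs (a - b) ≤ Complex.abs a + Complex.abs b := by
  have h := Complex.abs.add_le a (-b)
  rw [AbsoluteValue.map_neg, ← sub_eq_add_neg] at h
  exact h

lemma aux_logdiff {c : ℂ} (hc : Complex.abs c = 1) {x₁ x₂ X : ℝ}
    (h10 : 0 < x₁) (h1X : x₁ ≤ X) (h20 : 0 < x₂) (h2X : x₂ ≤ X) (hX : X ≤ 1/4) :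
    Complex.abs (Complex.log (1 + (x₁:ℂ)*c) - Complex.log (1 + (x₂:ℂ)*c) - ((x₁:ℂ) - x₂)*c)
      ≤ 6 * |x₁ - x₂| * X := by
  have hcre : |c.re| ≤ 1 := hc ▸ Complex.abs_re_le_abs c
  have hXpos : 0 < X := lt_of_lt_of_le h10 h1X
  have fact : ∀ x : ℝ, 0 < x → x ≤ X → 3/4 ≤ (1 + (x:ℂ)*c).re ∧ 3/4 ≤ Complex.abs (1 + (x:ℂ)*c) := by
    intro x hx0 hxX
    have hre : (1 + (x:ℂ)*c).re = 1 + x * c.re := by simp [Complex.add_re, Complex.mul_re]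
    have h1 : 3/4 ≤ (1 + (x:ℂ)*c).re := by
      rw [hre]
      have : |x * c.re| ≤ 1/4 := by
        rw [abs_mul, _root_.abs_of_pos hx0]
        calc x * |c.re| ≤ (1/4) * 1 := by
              apply mul_le_mul (by linarith) hcre (abs_nonneg _) (by norm_num)
          _ = 1/4 := by ring
      have := neg_abs_le (x * c.re)
      linarith
    exact ⟨h1, le_trans h1 (Complex.re_le_abs _)⟩
  obtain ⟨hre1, habs1⟩ := fact x₁ h10 h1X
  obtain ⟨hre2, habs2⟩ := fact x₂ h20 h2X
  have hne1 : (1 + (x₁:ℂ)*c) ≠ 0 := by intro h; rw [h, map_zero] at habs1; linarith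
  have hne2 : (1 + (x₂:ℂ)*c) ≠ 0 := by intro h; rw [h, map_zero] at habs2; linarith
  set u := ((x₁:ℂ) - x₂)*c/(1 + (x₂:ℂ)*c) with hu
  have h1u : 1 + u = (1 + (x₁:ℂ)*c)/(1 + (x₂:ℂ)*c) := by rw [hu]; field_simp; ring
  have harg1 : |(1 + (x₁:ℂ)*c).arg| < π/2 := Complex.abs_arg_lt_pi_div_two_iff.mpr (Or.inl (by linarith))
  have harg2 : |(1 + (x₂:ℂ)*c).arg| < π/2 := Complex.abs_arg_lt_pi_div_two_iff.mpr (Or.inl (by linarith))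
  have hlogdiff : Complex.log (1 + (x₁:ℂ)*c) - Complex.log (1 + (x₂:ℂ)*c) = Complex.log (1+u) := by
    have him : (Complex.log (1 + (x₁:ℂ)*c) - Complex.log (1 + (x₂:ℂ)*c)).im
        = (1 + (x₁:ℂ)*c).arg - (1 + (x₂:ℂ)*c).arg := by
      simp [Complex.sub_im, Complex.log_im]
    have ha1 := abs_lt.mp harg1
    have ha2 := abs_lt.mp harg2
    have hpi := Real.pi_pos
    have h1 : -π < (Complex.log (1 + (x₁:ℂ)*c) - Complex.log (1 + (x₂:ℂ)*c)).im := by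
      rw [him]; linarith
    have h2 : (Complex.log (1 + (x₁:ℂ)*c) - Complex.log (1 + (x₂:ℂ)*c)).im ≤ π := by
      rw [him]; linarith
    have hexp : Complex.exp (Complex.log (1 + (x₁:ℂ)*c) - Complex.log (1 + (x₂:ℂ)*c)) = 1 + u := by
      rw [Complex.exp_sub, Complex.exp_log hne1, Complex.exp_log hne2, h1u]
    rw [← hexp, Complex.log_exp h1 h2]
  set Δ := |x₁ - x₂| with hΔ
  have hΔ0 : 0 ≤ Δ := abs_nonneg _
  have hΔX : Δ ≤ X := by rw [hΔ, abs_le]; constructor <;> linarith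
  have habsXR : Complex.abs ((x₁:ℂ) - x₂) = Δ := by
    rw [← Complex.ofReal_sub, Complex.abs_ofReal]
  have habsu : Complex.abs u ≤ 2*Δ := by
    rw [hu, map_div₀, map_mul, hc, mul_one, habsXR]
    calc Δ / Complex.abs (1 + (x₂:ℂ)*c) ≤ Δ / (3/4) :=
          div_le_div_of_nonneg_left hΔ0 (by norm_num) habs2
      _ ≤ 2*Δ := by linarith
  have husmall : Complex.abs u ≤ 1/2 := by
    calc Complex.abs u ≤ 2*Δ := habsu
      _ ≤ 2*X := by linarith
      _ ≤ 1/2 := by linarith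
  have hterm1 : Complex.abs (Complex.log (1+u) - u) ≤ 4*Δ*X := by
    calc Complex.abs (Complex.log (1+u) - u) ≤ Complex.abs u ^ 2 := aux_log husmall
      _ ≤ (2*Δ)*(2*Δ) := by
          rw [sq]; exact mul_le_mul habsu habsu (Complex.abs.nonneg u) (by linarith)
      _ = 4*(Δ*Δ) := by ring
      _ ≤ 4*(Δ*X) := by
          have := mul_le_mul_of_nonneg_left hΔX hΔ0; linarith
      _ = 4*Δ*X := by ring
  have hterm2 : Complex.abs (u - ((x₁:ℂ) - x₂)*c) ≤ 2*Δ*X := by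
    have heq : u - ((x₁:ℂ) - x₂)*c = -(((x₁:ℂ) - x₂)*c*((x₂:ℂ)*c)/(1 + (x₂:ℂ)*c)) := by
      rw [hu]; field_simp; ring
    have hnum : Complex.abs (((x₁:ℂ) - x₂)*c*((x₂:ℂ)*c)) = Δ * x₂ := by
      rw [map_mul, map_mul, map_mul, hc, habsXR, Complex.abs_ofReal, _root_.abs_of_pos h20]
      ring
    rw [heq, map_neg_eq_map, map_div₀, hnum]
    calc Δ * x₂ / Complex.abs (1 + (x₂:ℂ)*c) ≤ (Δ * X) / (3/4) :=
          div_le_div₀ (by positivity) (mul_le_mul_of_nonneg_left h2X hΔ0) (by norm_num) habs2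
      _ ≤ 2*Δ*X := by nlinarith
  calc Complex.abs (Complex.log (1 + (x₁:ℂ)*c) - Complex.log (1 + (x₂:ℂ)*c) - ((x₁:ℂ) - x₂)*c)
      = Complex.abs ((Complex.log (1+u) - u) + (u - ((x₁:ℂ) - x₂)*c)) := by
        rw [hlogdiff]; ring_nf
    _ ≤ Complex.abs (Complex.log (1+u) - u) + Complex.abs (u - ((x₁:ℂ) - x₂)*c) :=
        Complex.abs.add_le _ _
    _ ≤ 4*Δ*X + 2*Δ*X := add_le_add hterm1 hterm2
    _ = 6*Δ*X := by ring

end Aux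

set_option maxHeartbeats 2000000 in
/-- Comparison of the difference quotient of the discrete exponential `g`
at two points on the negative real axis with the difference quotient of `z ↦ γ·e^{Dz}`,
where `γ = g(0) = ∏_j e^{i(α_j - β_j)}`; the relative error is `O(D^{-1/3})` with constants
depending only on `ε`. -/
theorem stmt_5 : ∀ ε : ℝ, ε ∈ Set.Ioo 0 (π / 3) →
    ∃ Dε : ℝ, 0 < Dε ∧ ∃ Cε : ℝ, 0 < Cε ∧
    ∀ (P : ℕ), 1 ≤ P → ∀ (φ₀ : ℝ), |φ₀| < ε →
    ∀ (α β : Fin P → ℝ),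
    (∀ j, β j - φ₀ ∈ Set.Ioo (-(π / 2) + ε) (π / 2 - ε)) →
    (∀ j, α j - φ₀ ∈ Set.Ioo (π / 2 + ε) (3 * π / 2 - ε)) →
    ∀ g : ℂ → ℂ,
    g = (fun z => ∏ j, (z - Complex.exp ((α j : ℂ) * Complex.I)) /
      (z - Complex.exp ((β j : ℂ) * Complex.I))) →
    ∀ γ : ℂ, γ = ∏ j, Complex.exp (((α j : ℂ) - (β j : ℂ)) * Complex.I) →
    ∀ D : ℝ, 0 < D →
    (∑ j, (Complex.exp ((β j : ℂ) * Complex.I) - Complex.exp ((α j : ℂ) * Complex.I))) = (D : ℂ) →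
    Dε < D →
    ∀ x₁ x₂ : ℝ, x₁ ≠ x₂ → 0 < x₁ → x₁ < D ^ (-(2 : ℝ) / 3) → 0 < x₂ → x₂ < D ^ (-(2 : ℝ) / 3) →
    ∀ z₁ z₂ : ℂ, z₁ = -(x₁ : ℂ) → z₂ = -(x₂ : ℂ) →
    ∃ E : ℂ, ‖E‖ ≤ Cε * D ^ (-(1 : ℝ) / 3) ∧
      (g z₁ - g z₂) / (z₁ - z₂)
        = γ * (1 + E) * ((Complex.exp ((D : ℂ) * z₁) - Complex.exp ((D : ℂ) * z₂)) / (z₁ - z₂)) := by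
  intro ε hε
  obtain ⟨hε0, hεπ⟩ := hε
  have hπ := Real.pi_pos
  have hεhalf : ε < π/2 := by linarith
  set s := Real.sin ε with hsdef
  have hs0 : 0 < s := Real.sin_pos_of_pos_of_lt_pi hε0 (by linarith)
  have hs1 : s ≤ 1 := Real.sin_le_one ε
  refine ⟨8/s^3, by positivity, 50/s, by positivity, ?_⟩
  intro P hP φ₀ hφ₀ α β hβ hα g hg γ hγ D hD hsum hDD x₁ x₂ hx12 hx10 hx1X hx20 hx2X z₁ z₂ hz₁ hz₂
  -- rpow bookkeeping
  set d := D ^ ((1:ℝ)/3) with hdd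
  have hd0 : 0 < d := Real.rpow_pos_of_pos hD _
  have hd3 : d^(3:ℕ) = D := by
    rw [hdd, ← Real.rpow_natCast (D ^ ((1:ℝ)/3)) 3, ← Real.rpow_mul hD.le]; norm_num
  have hds : 2/s < d := by
    have h8 : (2/s)^(3:ℕ) < d^(3:ℕ) := by
      rw [hd3]
      calc (2/s)^(3:ℕ) = 8/s^3 := by field_simp; ring
        _ < D := hDD
    exact lt_of_pow_lt_pow_left₀ 3 hd0.le h8
  have hd2 : 2 < d := by
    have : 2 ≤ 2/s := by rw [le_div_iff₀ hs0]; nlinarith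
    linarith
  have hXeq : D ^ (-(2:ℝ)/3) = (d^(2:ℕ))⁻¹ := by
    rw [hdd, ← Real.rpow_natCast (D ^ ((1:ℝ)/3)) 2, ← Real.rpow_mul hD.le, ← Real.rpow_neg hD.le]
    norm_num
  have hreq : D ^ (-(1:ℝ)/3) = d⁻¹ := by
    rw [hdd, ← Real.rpow_neg hD.le]; norm_num
  set X := (d^(2:ℕ))⁻¹ with hXdef
  have hX0 : 0 < X := by positivity
  have hX14 : X ≤ 1/4 := by
    rw [hXdef, inv_le_comm₀ (by positivity) (by norm_num)]
    nlinarith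
  rw [hXeq] at hx1X hx2X
  have hDX : D * X = d := by
    rw [hXdef, ← hd3]; field_simp
  have hDX2 : D * X^2 = d⁻¹ := by
    rw [hXdef, ← hd3]; field_simp
  -- the P bound
  have hPs : 2*(P:ℝ)*s ≤ D := by
    have hterm : ∀ j, (Complex.exp (((-φ₀:ℝ):ℂ) * Complex.I) *
        (Complex.exp ((β j : ℂ) * Complex.I) - Complex.exp ((α j : ℂ) * Complex.I))).re
        = Real.cos (β j - φ₀) - Real.cos (α j - φ₀) := by
      intro j
      have e1 : ((-φ₀:ℝ):ℂ)*Complex.I + ((β j : ℝ):ℂ)*Complex.I = ((β j - φ₀ : ℝ):ℂ)*Complex.I := by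
        push_cast; ring
      have e2 : ((-φ₀:ℝ):ℂ)*Complex.I + ((α j : ℝ):ℂ)*Complex.I = ((α j - φ₀ : ℝ):ℂ)*Complex.I := by
        push_cast; ring
      rw [mul_sub, ← Complex.exp_add, ← Complex.exp_add, e1, e2, Complex.sub_re,
        Complex.exp_ofReal_mul_I_re, Complex.exp_ofReal_mul_I_re]
    have hsum2 : ∑ j, (Real.cos (β j - φ₀) - Real.cos (α j - φ₀)) = D * Real.cos φ₀ := by
      calc ∑ j, (Real.cos (β j - φ₀) - Real.cos (α j - φ₀))
          = ∑ j, (Complex.exp (((-φ₀:ℝ):ℂ) * Complex.I) *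
              (Complex.exp ((β j : ℂ) * Complex.I) - Complex.exp ((α j : ℂ) * Complex.I))).re :=
            Finset.sum_congr rfl (fun j _ => (hterm j).symm)
        _ = (∑ j, Complex.exp (((-φ₀:ℝ):ℂ) * Complex.I) *
              (Complex.exp ((β j : ℂ) * Complex.I) - Complex.exp ((α j : ℂ) * Complex.I))).re := by
            rw [Complex.re_sum]
        _ = (Complex.exp (((-φ₀:ℝ):ℂ) * Complex.I) *
              ∑ j, (Complex.exp ((β j : ℂ) * Complex.I) - Complex.exp ((α j : ℂ) * Complex.I))).re := by
            rw [← Finset.mul_sum]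
        _ = (Complex.exp (((-φ₀:ℝ):ℂ) * Complex.I) * (D:ℂ)).re := by rw [hsum]
        _ = D * Real.cos φ₀ := by
            rw [Complex.mul_re, Complex.exp_ofReal_mul_I_re, Complex.ofReal_re, Complex.ofReal_im,
              Real.cos_neg, mul_zero, sub_zero, mul_comm]
    have hper : ∀ j, 2*s ≤ Real.cos (β j - φ₀) - Real.cos (α j - φ₀) := by
      intro j
      have h1 := aux_cos hε0 hεhalf (hβ j).1 (hβ j).2
      have h2 := aux_cos' hε0 hεhalf (hα j).1 (hα j).2
      rw [hsdef]; linarith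
    have hsumlb : (P:ℝ)*(2*s) ≤ ∑ j, (Real.cos (β j - φ₀) - Real.cos (α j - φ₀)) := by
      calc (P:ℝ)*(2*s) = ∑ _j : Fin P, 2*s := by
            rw [Finset.sum_const, Finset.card_univ, Fintype.card_fin, nsmul_eq_mul]
        _ ≤ _ := Finset.sum_le_sum (fun j _ => hper j)
    have hcos1 : Real.cos φ₀ ≤ 1 := Real.cos_le_one φ₀
    nlinarith [hsum2, hsumlb]
  -- basic nonvanishing
  have hγne : γ ≠ 0 := by
    rw [hγ]
    exact Finset.prod_ne_zero_iff.mpr (fun j _ => Complex.exp_ne_zero _)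
  have hone : ∀ (x θ : ℝ), 0 < x → x < 1 → (1 + (x:ℂ)*Complex.exp ((θ:ℂ)*Complex.I)) ≠ 0 := by
    intro x θ hx0 hx1 h
    have h2 : (x:ℂ)*Complex.exp ((θ:ℂ)*Complex.I) = -1 := by linear_combination h
    have := congrArg Complex.abs h2
    rw [map_mul, Complex.abs_ofReal, Complex.abs_exp_ofReal_mul_I, mul_one,
      _root_.abs_of_pos hx0] at this
    simp at this
    linarith
  -- the log sum
  set A : Fin P → ℂ := fun j => Complex.exp ((-(α j) : ℝ) * Complex.I) with hA
  set B : Fin P → ℂ := fun j => Complex.exp ((-(β j) : ℝ) * Complex.I) with hB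
  set L : ℝ → ℂ := fun x => ∑ j, (Complex.log (1 + (x:ℂ) * A j) - Complex.log (1 + (x:ℂ) * B j))
    with hL
  have hAabs : ∀ j, Complex.abs (A j) = 1 := fun j => Complex.abs_exp_ofReal_mul_I _
  have hBabs : ∀ j, Complex.abs (B j) = 1 := fun j => Complex.abs_exp_ofReal_mul_I _
  -- conjugated sum identity
  have hsum' : ∑ j, (A j - B j) = -(D:ℂ) := by
    have hconj : ∀ θ : ℝ, (starRingEnd ℂ) (Complex.exp ((θ:ℂ) * Complex.I))
        = Complex.exp (((-θ:ℝ):ℂ) * Complex.I) := by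
      intro θ
      rw [← Complex.exp_conj, map_mul, Complex.conj_ofReal, Complex.conj_I]
      push_cast; ring_nf
    have h0 := congrArg (starRingEnd ℂ) hsum
    simp only [map_sum, map_sub, hconj, Complex.conj_ofReal] at h0
    have hAB : ∀ j, A j - B j
        = -(Complex.exp (((-(β j):ℝ):ℂ) * Complex.I) - Complex.exp (((-(α j):ℝ):ℂ) * Complex.I)) := by
      intro j; rw [hA, hB]; ring
    rw [Finset.sum_congr rfl (fun j _ => hAB j), Finset.sum_neg_distrib, h0]
  -- product representation
  have hgexp : ∀ x : ℝ, 0 < x → x < X → g (-(x:ℂ)) = γ * Complex.exp (L x) := by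
    intro x hx0 hxX
    have hx1 : x < 1 := by linarith
    simp only [hg, hγ, hL]
    rw [Complex.exp_sum, ← Finset.prod_mul_distrib]
    apply Finset.prod_congr rfl
    intro j _
    have hneA : (1 + (x:ℂ)*A j) ≠ 0 := hone x (-(α j)) hx0 hx1
    have hneB : (1 + (x:ℂ)*B j) ≠ 0 := hone x (-(β j)) hx0 hx1
    have hexplog : Complex.exp (Complex.log (1 + (x:ℂ)*A j) - Complex.log (1 + (x:ℂ)*B j))
        = (1 + (x:ℂ)*A j)/(1 + (x:ℂ)*B j) := by
      rw [Complex.exp_sub, Complex.exp_log hneA, Complex.exp_log hneB]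
    rw [hexplog]
    have hinvA : Complex.exp ((α j : ℂ)*Complex.I) * A j = 1 := by
      rw [hA]; dsimp only
      rw [← Complex.exp_add]
      have : (α j:ℂ)*Complex.I + ((-(α j):ℝ):ℂ)*Complex.I = 0 := by push_cast; ring
      rw [this, Complex.exp_zero]
    have hinvB : Complex.exp ((β j : ℂ)*Complex.I) * B j = 1 := by
      rw [hB]; dsimp only
      rw [← Complex.exp_add]
      have : (β j:ℂ)*Complex.I + ((-(β j):ℝ):ℂ)*Complex.I = 0 := by push_cast; ring
      rw [this, Complex.exp_zero]
    have hfa : -(x:ℂ) - Complex.exp ((α j : ℂ)*Complex.I)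
        = -(Complex.exp ((α j : ℂ)*Complex.I) * (1 + (x:ℂ)*A j)) := by
      linear_combination (x:ℂ) * hinvA
    have hfb : -(x:ℂ) - Complex.exp ((β j : ℂ)*Complex.I)
        = -(Complex.exp ((β j : ℂ)*Complex.I) * (1 + (x:ℂ)*B j)) := by
      linear_combination (x:ℂ) * hinvB
    rw [hfa, hfb]
    have hgamma : Complex.exp (((α j :ℂ) - (β j:ℂ))*Complex.I)
        = Complex.exp ((α j:ℂ)*Complex.I) / Complex.exp ((β j:ℂ)*Complex.I) := by
      rw [← Complex.exp_sub]; ring_nf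
    rw [hgamma]
    have he1 : Complex.exp ((β j:ℂ)*Complex.I) ≠ 0 := Complex.exp_ne_zero _
    field_simp
  -- remainder bound
  have hRbd : ∀ x : ℝ, 0 < x → x < X →
      Complex.abs (L x + (D:ℂ)*(x:ℂ)) ≤ 2*(P:ℝ)*x^2 := by
    intro x hx0 hxX
    have hxhalf : x ≤ 1/2 := by linarith
    have key : L x + (D:ℂ)*(x:ℂ) = ∑ j, ((Complex.log (1 + (x:ℂ)*A j) - (x:ℂ)*A j)
        - (Complex.log (1 + (x:ℂ)*B j) - (x:ℂ)*B j)) := by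
      have h1 : ∑ j, ((Complex.log (1 + (x:ℂ)*A j) - (x:ℂ)*A j)
          - (Complex.log (1 + (x:ℂ)*B j) - (x:ℂ)*B j))
          = L x - (x:ℂ) * ∑ j, (A j - B j) := by
        rw [hL]; dsimp only
        rw [Finset.mul_sum, ← Finset.sum_sub_distrib]
        apply Finset.sum_congr rfl
        intro j _; ring
      rw [h1, hsum']; push_cast; ring
    rw [key]
    have habsw : ∀ (c : ℂ), Complex.abs c = 1 → Complex.abs ((x:ℂ)*c) = x := by
      intro c hc; rw [map_mul, hc, mul_one, Complex.abs_ofReal, _root_.abs_of_pos hx0]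
    have hterm : ∀ j, Complex.abs ((Complex.log (1 + (x:ℂ)*A j) - (x:ℂ)*A j)
        - (Complex.log (1 + (x:ℂ)*B j) - (x:ℂ)*B j)) ≤ 2*x^2 := by
      intro j
      have hA' : Complex.abs (Complex.log (1 + (x:ℂ)*A j) - (x:ℂ)*A j) ≤ x^2 := by
        have := aux_log (w := (x:ℂ)*A j) (by rw [habsw _ (hAabs j)]; exact hxhalf)
        rwa [habsw _ (hAabs j)] at this
      have hB' : Complex.abs (Complex.log (1 + (x:ℂ)*B j) - (x:ℂ)*B j) ≤ x^2 := by
        have := aux_log (w := (x:ℂ)*B j) (by rw [habsw _ (hBabs j)]; exact hxhalf)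
        rwa [habsw _ (hBabs j)] at this
      calc Complex.abs _ ≤ Complex.abs (Complex.log (1 + (x:ℂ)*A j) - (x:ℂ)*A j)
            + Complex.abs (Complex.log (1 + (x:ℂ)*B j) - (x:ℂ)*B j) := aux_abs_sub _ _
        _ ≤ 2*x^2 := by linarith
    calc Complex.abs (∑ j, ((Complex.log (1 + (x:ℂ)*A j) - (x:ℂ)*A j)
          - (Complex.log (1 + (x:ℂ)*B j) - (x:ℂ)*B j)))
        ≤ ∑ j, Complex.abs ((Complex.log (1 + (x:ℂ)*A j) - (x:ℂ)*A j)
          - (Complex.log (1 + (x:ℂ)*B j) - (x:ℂ)*B j)) := Complex.abs.sum_le _ _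
      _ ≤ ∑ _j : Fin P, 2*x^2 := Finset.sum_le_sum (fun j _ => hterm j)
      _ = 2*(P:ℝ)*x^2 := by
          rw [Finset.sum_const, Finset.card_univ, Fintype.card_fin, nsmul_eq_mul]; ring
  -- Lipschitz bound
  have hLip : Complex.abs (L x₁ - L x₂ + (D:ℂ)*((x₁:ℂ)-(x₂:ℂ))) ≤ 12*(P:ℝ) * |x₁-x₂| * X := by
    have key : L x₁ - L x₂ + (D:ℂ)*((x₁:ℂ)-(x₂:ℂ))
        = ∑ j, ((Complex.log (1 + (x₁:ℂ)*A j) - Complex.log (1 + (x₂:ℂ)*A j) - ((x₁:ℂ)-(x₂:ℂ))*A j)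
          - (Complex.log (1 + (x₁:ℂ)*B j) - Complex.log (1 + (x₂:ℂ)*B j) - ((x₁:ℂ)-(x₂:ℂ))*B j)) := by
      have h1 : ∑ j, ((Complex.log (1 + (x₁:ℂ)*A j) - Complex.log (1 + (x₂:ℂ)*A j) - ((x₁:ℂ)-(x₂:ℂ))*A j)
          - (Complex.log (1 + (x₁:ℂ)*B j) - Complex.log (1 + (x₂:ℂ)*B j) - ((x₁:ℂ)-(x₂:ℂ))*B j))
          = L x₁ - L x₂ - ((x₁:ℂ)-(x₂:ℂ)) * ∑ j, (A j - B j) := by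
        rw [hL]; dsimp only
        rw [Finset.mul_sum, ← Finset.sum_sub_distrib, ← Finset.sum_sub_distrib]
        apply Finset.sum_congr rfl
        intro j _; ring
      rw [h1, hsum']; push_cast; ring
    rw [key]
    have hterm : ∀ j, Complex.abs ((Complex.log (1 + (x₁:ℂ)*A j) - Complex.log (1 + (x₂:ℂ)*A j) - ((x₁:ℂ)-(x₂:ℂ))*A j)
          - (Complex.log (1 + (x₁:ℂ)*B j) - Complex.log (1 + (x₂:ℂ)*B j) - ((x₁:ℂ)-(x₂:ℂ))*B j))
        ≤ 12 * |x₁-x₂| * X := by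
      intro j
      have hA' := aux_logdiff (hAabs j) hx10 hx1X.le hx20 hx2X.le hX14
      have hB' := aux_logdiff (hBabs j) hx10 hx1X.le hx20 hx2X.le hX14
      calc Complex.abs _ ≤ Complex.abs (Complex.log (1 + (x₁:ℂ)*A j) - Complex.log (1 + (x₂:ℂ)*A j) - ((x₁:ℂ)-(x₂:ℂ))*A j)
            + Complex.abs (Complex.log (1 + (x₁:ℂ)*B j) - Complex.log (1 + (x₂:ℂ)*B j) - ((x₁:ℂ)-(x₂:ℂ))*B j) :=
            aux_abs_sub _ _
        _ ≤ 6 * |x₁-x₂| * X + 6 * |x₁-x₂| * X := add_le_add hA' hB'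
        _ = 12 * |x₁-x₂| * X := by ring
    calc Complex.abs (∑ j, ((Complex.log (1 + (x₁:ℂ)*A j) - Complex.log (1 + (x₂:ℂ)*A j) - ((x₁:ℂ)-(x₂:ℂ))*A j)
          - (Complex.log (1 + (x₁:ℂ)*B j) - Complex.log (1 + (x₂:ℂ)*B j) - ((x₁:ℂ)-(x₂:ℂ))*B j)))
        ≤ ∑ j, Complex.abs ((Complex.log (1 + (x₁:ℂ)*A j) - Complex.log (1 + (x₂:ℂ)*A j) - ((x₁:ℂ)-(x₂:ℂ))*A j)
          - (Complex.log (1 + (x₁:ℂ)*B j) - Complex.log (1 + (x₂:ℂ)*B j) - ((x₁:ℂ)-(x₂:ℂ))*B j)) :=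
          Complex.abs.sum_le _ _
      _ ≤ ∑ _j : Fin P, 12 * |x₁-x₂| * X := Finset.sum_le_sum (fun j _ => hterm j)
      _ = 12*(P:ℝ) * |x₁-x₂| * X := by
          rw [Finset.sum_const, Finset.card_univ, Fintype.card_fin, nsmul_eq_mul]; ring
  -- assembly
  have hz12 : z₁ - z₂ = ((x₂ - x₁ : ℝ):ℂ) := by rw [hz₁, hz₂]; push_cast; ring
  have hz12ne : z₁ - z₂ ≠ 0 := by
    rw [hz12]; exact Complex.ofReal_ne_zero.mpr (sub_ne_zero.mpr (Ne.symm hx12))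
  have hDz₁ : (D:ℂ) * z₁ = ((-(D*x₁) : ℝ):ℂ) := by rw [hz₁]; push_cast; ring
  have hDz₂ : (D:ℂ) * z₂ = ((-(D*x₂) : ℝ):ℂ) := by rw [hz₂]; push_cast; ring
  set e₁ := Real.exp (-(D*x₁)) with he₁
  set e₂ := Real.exp (-(D*x₂)) with he₂
  have hΔc : Complex.exp ((D:ℂ)*z₁) - Complex.exp ((D:ℂ)*z₂) = ((e₁ - e₂ : ℝ):ℂ) := by
    rw [hDz₁, hDz₂, Complex.ofReal_sub, he₁, he₂, Complex.ofReal_exp, Complex.ofReal_exp]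
  have hΔrne : e₁ - e₂ ≠ 0 := by
    rw [he₁, he₂]; intro h
    apply hx12
    have h2 : Real.exp (-(D*x₁)) = Real.exp (-(D*x₂)) := by
      have := sub_eq_zero.mp h; exact_mod_cast this
    have h3 : -(D*x₁) = -(D*x₂) := Real.exp_injective h2
    have h4 : D*x₁ = D*x₂ := by linarith
    exact mul_left_cancel₀ hD.ne' h4
  have hΔcne : Complex.exp ((D:ℂ)*z₁) - Complex.exp ((D:ℂ)*z₂) ≠ 0 := by
    rw [hΔc]; exact Complex.ofReal_ne_zero.mpr hΔrne
  refine ⟨(g z₁ - g z₂ - γ * (Complex.exp ((D:ℂ)*z₁) - Complex.exp ((D:ℂ)*z₂)))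
      / (γ * (Complex.exp ((D:ℂ)*z₁) - Complex.exp ((D:ℂ)*z₂))), ?_, ?_⟩
  · -- the bound
    have hg1 : g z₁ = γ * Complex.exp (L x₁) := by rw [hz₁]; exact hgexp x₁ hx10 hx1X
    have hg2 : g z₂ = γ * Complex.exp (L x₂) := by rw [hz₂]; exact hgexp x₂ hx20 hx2X
    set R₁ := L x₁ + (D:ℂ)*(x₁:ℂ) with hR₁
    set R₂ := L x₂ + (D:ℂ)*(x₂:ℂ) with hR₂
    have hexpL1 : Complex.exp (L x₁) = Complex.exp R₁ * (e₁:ℂ) := by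
      have h : R₁ + ((-(D*x₁):ℝ):ℂ) = L x₁ := by rw [hR₁]; push_cast; ring
      rw [← h, Complex.exp_add, he₁, Complex.ofReal_exp]
    have hexpL2 : Complex.exp (L x₂) = Complex.exp R₂ * (e₂:ℂ) := by
      have h : R₂ + ((-(D*x₂):ℝ):ℂ) = L x₂ := by rw [hR₂]; push_cast; ring
      rw [← h, Complex.exp_add, he₂, Complex.ofReal_exp]
    have hN : g z₁ - g z₂ - γ * (Complex.exp ((D:ℂ)*z₁) - Complex.exp ((D:ℂ)*z₂))
        = γ * (Complex.exp R₁ * (e₁:ℂ) - Complex.exp R₂ * (e₂:ℂ) - ((e₁ - e₂ : ℝ):ℂ)) := by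
      rw [hg1, hg2, hΔc, hexpL1, hexpL2]; push_cast; ring
    set M := Complex.exp R₁ * (e₁:ℂ) - Complex.exp R₂ * (e₂:ℂ) - ((e₁ - e₂ : ℝ):ℂ) with hM
    have hEeq : (g z₁ - g z₂ - γ * (Complex.exp ((D:ℂ)*z₁) - Complex.exp ((D:ℂ)*z₂)))
        / (γ * (Complex.exp ((D:ℂ)*z₁) - Complex.exp ((D:ℂ)*z₂)))
        = M / ((e₁ - e₂ : ℝ):ℂ) := by
      rw [hN, hΔc, mul_div_mul_left _ _ hγne]
    rw [Complex.norm_eq_abs, hEeq, map_div₀, Complex.abs_ofReal]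
    -- numeric facts
    set Δx := |x₁ - x₂| with hΔxdef
    have hΔx0 : 0 < Δx := abs_pos.mpr (sub_ne_zero.mpr hx12)
    have hΔxX : Δx ≤ X := by
      rw [hΔxdef, abs_le]; constructor <;> linarith
    have hPD : 2*(P:ℝ) ≤ D/s := by
      rw [le_div_iff₀ hs0]; linarith [hPs]
    have hrhalf : d⁻¹/s ≤ 1/2 := by
      have h0 : (0:ℝ) < 2/s := by positivity
      have h1 : d⁻¹ < (2/s)⁻¹ := by
        apply inv_strictAnti₀ h0 hds
      have h2 : ((2:ℝ)/s)⁻¹ = s/2 := by rw [inv_div]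
      have h3 : d⁻¹ ≤ s/2 := by rw [h2] at h1; linarith
      calc d⁻¹/s ≤ (s/2)/s := by gcongr
        _ = 1/2 := by field_simp
    have hr : ∀ x : ℝ, 0 < x → x < X → Complex.abs (L x + (D:ℂ)*(x:ℂ)) ≤ d⁻¹/s := by
      intro x hx0 hxX
      calc Complex.abs (L x + (D:ℂ)*(x:ℂ)) ≤ 2*(P:ℝ)*x^2 := hRbd x hx0 hxX
        _ ≤ (D/s)*x^2 := mul_le_mul_of_nonneg_right hPD (sq_nonneg x)
        _ ≤ (D/s)*X^2 := by
            apply mul_le_mul_of_nonneg_left _ (by positivity)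
            exact pow_le_pow_left₀ hx0.le hxX.le 2
        _ = (D*X^2)/s := by ring
        _ = d⁻¹/s := by rw [hDX2]
    have hR1bd : Complex.abs R₁ ≤ d⁻¹/s := hr x₁ hx10 hx1X
    have hR2bd : Complex.abs R₂ ≤ d⁻¹/s := hr x₂ hx20 hx2X
    have habs1 : Complex.abs (Complex.exp R₁ - 1) ≤ 2*(d⁻¹/s) := by
      calc Complex.abs (Complex.exp R₁ - 1) ≤ 2*Complex.abs R₁ :=
            Complex.abs_exp_sub_one_le (by linarith)
        _ ≤ 2*(d⁻¹/s) := by linarith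
    have hR12 : Complex.abs (R₁ - R₂) ≤ 6/s*d*Δx := by
      have heq : R₁ - R₂ = L x₁ - L x₂ + (D:ℂ)*((x₁:ℂ)-(x₂:ℂ)) := by
        rw [hR₁, hR₂]; push_cast; ring
      rw [heq]
      calc Complex.abs (L x₁ - L x₂ + (D:ℂ)*((x₁:ℂ)-(x₂:ℂ))) ≤ 12*(P:ℝ)*Δx*X := hLip
        _ ≤ 6*(D/s)*Δx*X := by
            nlinarith [mul_le_mul_of_nonneg_right hPD (mul_nonneg hΔx0.le hX0.le)]
        _ = 6/s*(D*X)*Δx := by ring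
        _ = 6/s*d*Δx := by rw [hDX]
    have hRR2 : Complex.abs (R₁ - R₂) ≤ 1 := by
      calc Complex.abs (R₁ - R₂) ≤ Complex.abs R₁ + Complex.abs R₂ := aux_abs_sub _ _
        _ ≤ 1 := by linarith
    have hexpR2 : Complex.abs (Complex.exp R₂) ≤ 2 := by
      rw [Complex.abs_exp]
      have h1 : R₂.re ≤ 1/2 := le_trans (Complex.re_le_abs R₂) (by linarith)
      have h2 : Real.exp (1/2) ≤ 2 := by
        have hsq : Real.exp (1/2) * Real.exp (1/2) = Real.exp 1 := by
          rw [← Real.exp_add]; norm_num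
        nlinarith [Real.exp_pos (1/2), Real.exp_one_lt_d9]
      calc Real.exp R₂.re ≤ Real.exp (1/2) := Real.exp_le_exp.mpr h1
        _ ≤ 2 := h2
    have habs12 : Complex.abs (Complex.exp R₁ - Complex.exp R₂) ≤ 24/s*d*Δx := by
      have h0 : R₂ + (R₁ - R₂) = R₁ := by ring
      have heq : Complex.exp R₁ - Complex.exp R₂
          = Complex.exp R₂ * (Complex.exp (R₁ - R₂) - 1) := by
        rw [mul_sub, mul_one, ← Complex.exp_add, h0]
      rw [heq, map_mul]
      calc Complex.abs (Complex.exp R₂) * Complex.abs (Complex.exp (R₁-R₂) - 1)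
          ≤ 2 * (2*Complex.abs (R₁-R₂)) := by
            apply mul_le_mul hexpR2 (Complex.abs_exp_sub_one_le hRR2)
              (Complex.abs.nonneg _) (by norm_num)
        _ ≤ 2*(2*(6/s*d*Δx)) := by linarith
        _ = 24/s*d*Δx := by ring
    have hratio : e₂ ≤ (1 + 1/(D*Δx)) * |e₁ - e₂| := by
      have hne : D*x₁ ≠ D*x₂ := fun h => hx12 (mul_left_cancel₀ hD.ne' h)
      have hthis := aux_ratio_s5 hne
      have habs : |D*x₁ - D*x₂| = D*Δx := by
        rw [hΔxdef, ← mul_sub, abs_mul, _root_.abs_of_pos hD]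
      rw [habs] at hthis
      rw [he₁, he₂]
      exact hthis
    rw [hreq, div_le_iff₀ (abs_pos.mpr hΔrne)]
    have hMsplit : M = ((e₁ - e₂:ℝ):ℂ) * (Complex.exp R₁ - 1)
        + (e₂:ℂ) * (Complex.exp R₁ - Complex.exp R₂) := by
      rw [hM]; push_cast; ring
    have hMbd : Complex.abs M ≤ |e₁-e₂| * (2*(d⁻¹/s)) + e₂ * (24/s*d*Δx) := by
      rw [hMsplit]
      calc Complex.abs (((e₁ - e₂:ℝ):ℂ) * (Complex.exp R₁ - 1)
            + (e₂:ℂ) * (Complex.exp R₁ - Complex.exp R₂))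
          ≤ Complex.abs (((e₁-e₂:ℝ):ℂ) * (Complex.exp R₁ - 1))
            + Complex.abs ((e₂:ℂ) * (Complex.exp R₁ - Complex.exp R₂)) := Complex.abs.add_le _ _
        _ ≤ |e₁-e₂| * (2*(d⁻¹/s)) + e₂*(24/s*d*Δx) := by
            rw [map_mul, map_mul, Complex.abs_ofReal, Complex.abs_ofReal, he₂,
              _root_.abs_of_pos (Real.exp_pos _)]
            apply add_le_add
            · exact mul_le_mul_of_nonneg_left habs1 (abs_nonneg _)
            · exact mul_le_mul_of_nonneg_left habs12 (Real.exp_pos _).le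
    have hdX : d*Δx ≤ d⁻¹ := by
      calc d*Δx ≤ d*X := mul_le_mul_of_nonneg_left hΔxX hd0.le
        _ = d⁻¹ := by rw [hXdef, pow_two]; field_simp
    have hdD : d/D ≤ d⁻¹ := by
      rw [← hd3, div_le_iff₀ (by positivity : (0:ℝ) < d^(3:ℕ))]
      have h5 : d⁻¹ * d^(3:ℕ) = d^2 := by field_simp
      rw [h5]; nlinarith
    have hkey2 : e₂*(24/s*d*Δx) ≤ (1 + 1/(D*Δx)) * |e₁-e₂| * (24/s*d*Δx) :=
      mul_le_mul_of_nonneg_right hratio (by positivity)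
    have hexpand : (1 + 1/(D*Δx)) * (24/s*d*Δx) = 24/s*(d*Δx) + 24/s*(d/D) := by
      field_simp
    calc Complex.abs M ≤ |e₁-e₂| * (2*(d⁻¹/s)) + e₂*(24/s*d*Δx) := hMbd
      _ ≤ |e₁-e₂| * (2*(d⁻¹/s)) + (1 + 1/(D*Δx)) * |e₁-e₂| * (24/s*d*Δx) := by linarith
      _ = |e₁-e₂| * (2*(d⁻¹/s) + (1 + 1/(D*Δx)) * (24/s*d*Δx)) := by ring
      _ = |e₁-e₂| * (2*(d⁻¹/s) + (24/s*(d*Δx) + 24/s*(d/D))) := by rw [hexpand]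
      _ ≤ |e₁-e₂| * (2*(d⁻¹/s) + (24/s*d⁻¹ + 24/s*d⁻¹)) := by
          apply mul_le_mul_of_nonneg_left _ (abs_nonneg _)
          have h24 : (0:ℝ) ≤ 24/s := by positivity
          have t1 : 24/s*(d*Δx) ≤ 24/s*d⁻¹ := mul_le_mul_of_nonneg_left hdX h24
          have t2 : 24/s*(d/D) ≤ 24/s*d⁻¹ := mul_le_mul_of_nonneg_left hdD h24
          linarith
      _ = 50/s*d⁻¹ * |e₁-e₂| := by ring
  · -- the equation
    have hQ : γ * (Complex.exp ((D:ℂ)*z₁) - Complex.exp ((D:ℂ)*z₂)) ≠ 0 :=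
      mul_ne_zero hγne hΔcne
    have h3 : (g z₁ - g z₂ - γ * (Complex.exp ((D:ℂ)*z₁) - Complex.exp ((D:ℂ)*z₂)))
        / (γ * (Complex.exp ((D:ℂ)*z₁) - Complex.exp ((D:ℂ)*z₂)))
        = (g z₁ - g z₂) / (γ * (Complex.exp ((D:ℂ)*z₁) - Complex.exp ((D:ℂ)*z₂))) - 1 := by
      rw [sub_div, div_self hQ]
    rw [h3]
    have h4 : (1:ℂ) + ((g z₁ - g z₂) / (γ * (Complex.exp ((D:ℂ)*z₁) - Complex.exp ((D:ℂ)*z₂))) - 1)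
        = (g z₁ - g z₂) / (γ * (Complex.exp ((D:ℂ)*z₁) - Complex.exp ((D:ℂ)*z₂))) := by ring
    rw [h4]
    have h5 : γ * ((g z₁ - g z₂) / (γ * (Complex.exp ((D:ℂ)*z₁) - Complex.exp ((D:ℂ)*z₂))))
        = (g z₁ - g z₂) / (Complex.exp ((D:ℂ)*z₁) - Complex.exp ((D:ℂ)*z₂)) := by
      rw [mul_div_assoc']
      exact mul_div_mul_left _ _ hγne
    rw [h5, div_mul_div_comm,
      mul_comm (g z₁ - g z₂) (Complex.exp ((D:ℂ)*z₁) - Complex.exp ((D:ℂ)*z₂)),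
      mul_div_mul_left _ _ hΔcne]
end

section
/- For every integer n ≥ 3 and all pairwise distinct complex numbers z₁, …, z_n, the sum over all permutations σ of {1,…,n} of the cyclic products ∏_{i=1}^{n} 1/(z_{σ(i)} − z_{σ(i+1)}) (with the cyclic convention σ(n+1) := σ(1)) equals 0; that is, Σ_{σ ∈ Sym(n)} 1/((z_{σ(1)} − z_{σ(2)})(z_{σ(2)} − z_{σ(3)})⋯(z_{σ(n)} − z_{σ(1)})) = 0. -/
open Finset Equiv

namespace Stmt6Aux

/-- The permutation of `Fin (m+2)` fixing `0` and rotating `1, …, m+1` by `j`. -/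
def gp (m : ℕ) (j : Fin (m + 1)) : Equiv.Perm (Fin (m + 2)) :=
  (Equiv.permCongr (finSuccEquiv (m + 1)).symm) (Equiv.optionCongr (Equiv.addRight j))

lemma gp_zero (m : ℕ) (j : Fin (m + 1)) : gp m j 0 = 0 := by simp [gp]

lemma gp_succ (m : ℕ) (j k : Fin (m + 1)) : gp m j k.succ = (k + j).succ := by simp [gp]

lemma succ_add_one (m : ℕ) (k : Fin (m + 1)) (hk : k ≠ -1) :
    (k.succ : Fin (m + 2)) + 1 = (k + 1).succ := by
  have hkv : (k : ℕ) < m := by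
    rcases Nat.lt_or_ge (k : ℕ) m with h | h
    · exact h
    · exfalso; apply hk; apply Fin.ext
      have : (k : ℕ) = m := by have := k.isLt; omega
      simp [this, Fin.coe_neg_one]
  apply Fin.ext
  have h1 : ((k.succ : Fin (m+2)) + 1).val = ((k : ℕ) + 1 + 1) % (m + 2) := by
    simp [Fin.val_add, Fin.val_succ]
  have h2 : (((k + 1 : Fin (m+1)).succ : Fin (m+2))).val = ((k : ℕ) + 1) % (m + 1) + 1 := by
    simp [Fin.val_succ, Fin.val_add]
  rw [h1, h2, Nat.mod_eq_of_lt (by omega), Nat.mod_eq_of_lt (by omega)]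

lemma neg_one_succ (m : ℕ) : ((-1 : Fin (m+1)).succ : Fin (m+2)) + 1 = 0 := by
  apply Fin.ext
  have h : ((-1 : Fin (m+1)) : ℕ) = m := Fin.coe_neg_one
  simp [Fin.val_add, Fin.val_succ, h]

lemma sub_one_ne (m : ℕ) (hm : 1 ≤ m) (k : Fin (m+1)) : k - 1 ≠ k := by
  intro h
  have h1 : (1 : Fin (m+1)) = 0 := left_eq_add.mp (sub_eq_iff_eq_add.mp h)
  have h2 : ((1 : Fin (m+1)) : ℕ) = 1 % (m+1) := Fin.val_one' _
  rw [h1] at h2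
  simp at h2
  omega

lemma core (m : ℕ) (L : ℂ) (a : Fin (m+1) → ℂ)
    (haL : ∀ k, a k - L ≠ 0)
    (hstep : ∀ k : Fin (m+1), a (k - 1) - a k ≠ 0) :
    ∑ j : Fin (m+1), (1 / (L - a j)) * ((1 / (a (j - 1) - L)) *
      ∏ k ∈ univ.erase (j - 1), 1 / (a k - a (k + 1))) = 0 := by
  have key : ∀ j : Fin (m+1), (1 / (L - a j)) * ((1 / (a (j - 1) - L)) *
      ∏ k ∈ univ.erase (j - 1), 1 / (a k - a (k + 1)))
      = (1 / (a (j - 1) - L) - 1 / (a j - L)) * ∏ k : Fin (m+1), 1 / (a k - a (k + 1)) := by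
    intro j
    have h1 : (j - 1 : Fin (m+1)) + 1 = j := by rw [sub_add_cancel]
    have hP : (∏ k : Fin (m+1), 1 / (a k - a (k + 1)))
        = (1 / (a (j - 1) - a j)) * ∏ k ∈ univ.erase (j - 1), 1 / (a k - a (k + 1)) := by
      rw [← Finset.mul_prod_erase univ _ (mem_univ (j - 1)), h1]
    rw [hP]
    have h2 := haL j
    have h3 := haL (j - 1)
    have h4 := hstep j
    have h5 : L - a j ≠ 0 := fun h => h2 (by rw [← neg_sub] at h; simpa using neg_eq_zero.mp h)
    have hs : (1 / (L - a j)) * (1 / (a (j - 1) - L))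
        = (1 / (a (j - 1) - L) - 1 / (a j - L)) * (1 / (a (j - 1) - a j)) := by
      field_simp
      ring
    linear_combination (∏ k ∈ univ.erase (j - 1), 1 / (a k - a (k + 1))) * hs
  rw [Finset.sum_congr rfl (fun j _ => key j), ← Finset.sum_mul]
  have hz : ∑ j : Fin (m+1), (1 / (a (j - 1) - L) - 1 / (a j - L)) = 0 := by
    rw [Finset.sum_sub_distrib, sub_eq_zero]
    exact Fintype.sum_equiv (Equiv.subRight 1) _ _ (fun j => rfl)
  rw [hz, zero_mul]

lemma prod_mul_gp (m : ℕ) (z : Fin (m+2) → ℂ) (σ : Equiv.Perm (Fin (m+2))) (j : Fin (m+1)) :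
    ∏ i : Fin (m+2), 1 / (z ((σ * gp m j) i) - z ((σ * gp m j) (i + 1)))
    = (1 / (z (σ 0) - z (σ j.succ)))
      * ((1 / (z (σ ((j - 1).succ)) - z (σ 0)))
        * ∏ k ∈ univ.erase (j - 1), 1 / (z (σ k.succ) - z (σ (k + 1).succ))) := by
  rw [Fin.prod_univ_succ]
  congr 1
  · have g1 : gp m j 1 = j.succ := by
      rw [← Fin.succ_zero_eq_one, gp_succ, zero_add]
    rw [Equiv.Perm.mul_apply, Equiv.Perm.mul_apply, gp_zero, zero_add, g1]
  · rw [← Finset.mul_prod_erase univ _ (mem_univ (-1 : Fin (m+1)))]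
    congr 1
    · rw [Equiv.Perm.mul_apply, Equiv.Perm.mul_apply, gp_succ, neg_one_succ, gp_zero]
      congr 2
      rw [neg_add_eq_sub]
    · rw [Finset.prod_bij' (fun k _ => k + j) (fun k _ => k - j)]
      · intro k hk
        simp only [mem_erase, mem_univ, and_true] at hk ⊢
        intro h; apply hk
        open Fin.CommRing in linear_combination h
      · intro k hk
        simp only [mem_erase, mem_univ, and_true] at hk ⊢
        intro h; apply hk
        open Fin.CommRing in linear_combination h
      · intro k hk; exact add_sub_cancel_right k j
      · intro k hk; exact sub_add_cancel k j
      · intro k hk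
        rw [Equiv.Perm.mul_apply, Equiv.Perm.mul_apply, succ_add_one m k (by
          simp only [mem_erase, mem_univ, and_true] at hk; exact hk), gp_succ, gp_succ,
          add_right_comm]

end Stmt6Aux

/-- For `n ≥ 3` and pairwise distinct complex numbers `z₁, …, z_n`, the sum
over all permutations `σ` of the cyclic products `∏ 1/(z_{σ(i)} - z_{σ(i+1)})` vanishes. -/
theorem stmt_6 (n : ℕ) (hn : 3 ≤ n) (z : Fin n → ℂ) (hz : Function.Injective z) :
    haveI : NeZero n := ⟨by omega⟩
    ∑ σ : Equiv.Perm (Fin n), ∏ i : Fin n, 1 / (z (σ i) - z (σ (i + 1))) = 0 := by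
  obtain ⟨m, rfl⟩ : ∃ m, n = m + 2 := ⟨n - 2, by omega⟩
  have hm : 1 ≤ m := by omega
  show ∑ σ : Equiv.Perm (Fin (m+2)), ∏ i : Fin (m+2), 1 / (z (σ i) - z (σ (i + 1))) = 0
  open Stmt6Aux in
  set T : Equiv.Perm (Fin (m+2)) → ℂ :=
    fun σ => ∏ i : Fin (m+2), 1 / (z (σ i) - z (σ (i + 1))) with hT
  have hinner : ∀ σ : Equiv.Perm (Fin (m+2)),
      ∑ j : Fin (m+1), T (σ * Stmt6Aux.gp m j) = 0 := by
    intro σ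
    have hc := Stmt6Aux.core m (z (σ 0)) (fun k => z (σ k.succ))
      (fun k => sub_ne_zero.mpr fun h => Fin.succ_ne_zero k (σ.injective (hz h)))
      (fun k => sub_ne_zero.mpr fun h =>
        Stmt6Aux.sub_one_ne m hm k (Fin.succ_injective _ (σ.injective (hz h))))
    rw [← hc]
    exact Finset.sum_congr rfl fun j _ => Stmt6Aux.prod_mul_gp m z σ j
  have hswap : ∀ j : Fin (m+1),
      ∑ σ : Equiv.Perm (Fin (m+2)), T (σ * Stmt6Aux.gp m j)
        = ∑ σ : Equiv.Perm (Fin (m+2)), T σ :=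
    fun j => Equiv.sum_comp (Equiv.mulRight (Stmt6Aux.gp m j)) T
  have hbig : (m + 1 : ℂ) * ∑ σ : Equiv.Perm (Fin (m+2)), T σ = 0 := by
    calc (m + 1 : ℂ) * ∑ σ : Equiv.Perm (Fin (m+2)), T σ
        = ∑ _j : Fin (m+1), ∑ σ : Equiv.Perm (Fin (m+2)), T σ := by
          rw [Finset.sum_const, card_univ, Fintype.card_fin, nsmul_eq_mul]
          push_cast; ring
      _ = ∑ j : Fin (m+1), ∑ σ : Equiv.Perm (Fin (m+2)), T (σ * Stmt6Aux.gp m j) :=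
          Finset.sum_congr rfl fun j _ => (hswap j).symm
      _ = ∑ σ : Equiv.Perm (Fin (m+2)), ∑ j : Fin (m+1), T (σ * Stmt6Aux.gp m j) :=
          Finset.sum_comm
      _ = 0 := by simp [hinner]
  have hne : (m + 1 : ℂ) ≠ 0 := by
    have : ((m + 1 : ℕ) : ℂ) ≠ 0 := Nat.cast_ne_zero.mpr (by omega)
    push_cast at this
    exact this
  exact (mul_eq_zero.mp hbig).resolve_left hne
end

section
/- For every real α' ∈ (0, π) and every complex number w with |w| < 1, the series Σ_{n=0}^∞ w^n / ((1 + 2πn/α')·(1 + 2πn/(2π + α'))) converges and equals the convergent double integral ∫_0^∞ ∫_0^∞ e^{−t₁}·e^{−t₂} / (1 − e^{−2π t₁/α'}·e^{−2π t₂/(2π + α')}·w) dt₁ dt₂. -/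
open MeasureTheory Real

lemma aux_exp_int_real {c : ℝ} (hc : 0 < c) :
    ∫ t in Set.Ioi (0:ℝ), Real.exp (-(c*t)) = c⁻¹ := by
  have h := integral_comp_mul_left_Ioi (fun x => Real.exp (-x)) 0 hc
  simp only [mul_zero, integral_exp_neg_Ioi, neg_zero, Real.exp_zero, smul_eq_mul,
    mul_one] at h
  simpa using h

lemma aux_exp_intg {c : ℝ} (hc : 0 < c) :
    IntegrableOn (fun t : ℝ => Real.exp (-(c*t))) (Set.Ioi 0) := by
  simpa [neg_mul] using exp_neg_integrableOn_Ioi 0 hc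

lemma aux_exp_int_c {c : ℝ} (hc : 0 < c) :
    ∫ t in Set.Ioi (0:ℝ), (Real.exp (-(c*t)) : ℂ) = ((c⁻¹ : ℝ) : ℂ) := by
  rw [← aux_exp_int_real hc]; norm_cast

lemma aux_exp_intg_c {c : ℝ} (hc : 0 < c) :
    IntegrableOn (fun t : ℝ => (Real.exp (-(c*t)) : ℂ)) (Set.Ioi 0) :=
  (aux_exp_intg hc).ofReal

lemma aux_norm_exp (x : ℝ) : ‖((Real.exp x : ℝ) : ℂ)‖ = Real.exp x := by
  rw [Complex.norm_real, Real.norm_eq_abs, Real.abs_exp]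

set_option maxHeartbeats 1000000 in
/-- For `α' ∈ (0, π)` and `|w| < 1`, the series
`Σ_{n≥0} wⁿ/((1 + 2πn/α')(1 + 2πn/(2π + α')))` converges and equals the convergent double
integral `∫_0^∞∫_0^∞ e^{-t₁}e^{-t₂}/(1 - e^{-2πt₁/α'}e^{-2πt₂/(2π+α')}·w) dt₁ dt₂`. -/
theorem stmt_8 (α' : ℝ) (h1 : 0 < α') (h2 : α' < π) (w : ℂ) (hw : ‖w‖ < 1) :
    Summable (fun n : ℕ => w ^ n /
      ((1 + 2 * (π : ℂ) * (n : ℂ) / (α' : ℂ)) * (1 + 2 * (π : ℂ) * (n : ℂ) / (2 * (π : ℂ) + (α' : ℂ))))) ∧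
    IntegrableOn (fun p : ℝ × ℝ =>
      ((Real.exp (-p.1) : ℂ) * (Real.exp (-p.2) : ℂ)) /
        (1 - (Real.exp (-(2 * π * p.1) / α') : ℂ) * (Real.exp (-(2 * π * p.2) / (2 * π + α')) : ℂ) * w))
      (Set.Ioi 0 ×ˢ Set.Ioi 0) ∧
    ∑' n : ℕ, w ^ n /
      ((1 + 2 * (π : ℂ) * (n : ℂ) / (α' : ℂ)) * (1 + 2 * (π : ℂ) * (n : ℂ) / (2 * (π : ℂ) + (α' : ℂ))))
      = ∫ p in (Set.Ioi (0 : ℝ) ×ˢ Set.Ioi (0 : ℝ)),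
          ((Real.exp (-p.1) : ℂ) * (Real.exp (-p.2) : ℂ)) /
            (1 - (Real.exp (-(2 * π * p.1) / α') : ℂ) * (Real.exp (-(2 * π * p.2) / (2 * π + α')) : ℂ) * w) := by
  have hπ : (0:ℝ) < π := Real.pi_pos
  set a : ℝ := 2 * π / α' with ha_def
  set b : ℝ := 2 * π / (2 * π + α') with hb_def
  have h2π : (0:ℝ) < 2 * π + α' := by positivity
  have ha : 0 < a := by positivity
  have hb : 0 < b := by positivity
  have hca : ∀ n : ℕ, (0:ℝ) < 1 + a * n := fun n => by positivity
  have hcb : ∀ n : ℕ, (0:ℝ) < 1 + b * n := fun n => by positivity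
  have hca1 : ∀ n : ℕ, (1:ℝ) ≤ 1 + a * n := fun n => by
    nlinarith [ha.le, Nat.cast_nonneg (α := ℝ) n]
  have hcb1 : ∀ n : ℕ, (1:ℝ) ≤ 1 + b * n := fun n => by
    nlinarith [hb.le, Nat.cast_nonneg (α := ℝ) n]
  have hinv1 : ∀ n : ℕ, (1 + a * n)⁻¹ * (1 + b * n)⁻¹ ≤ 1 := by
    intro n
    have i1 := inv_le_one_of_one_le₀ (hca1 n)
    have i2 := inv_le_one_of_one_le₀ (hcb1 n)
    nlinarith [inv_pos.2 (hca n), inv_pos.2 (hcb n)]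
  -- rewrite series terms
  have hterm : ∀ n : ℕ, w ^ n /
      ((1 + 2 * (π : ℂ) * (n : ℂ) / (α' : ℂ)) * (1 + 2 * (π : ℂ) * (n : ℂ) / (2 * (π : ℂ) + (α' : ℂ))))
      = w ^ n * (((1 + a * n)⁻¹ : ℝ) : ℂ) * (((1 + b * n)⁻¹ : ℝ) : ℂ) := by
    intro n
    have e1 : (1 + 2 * (π : ℂ) * (n : ℂ) / (α' : ℂ)) = (((1 + a * n : ℝ)) : ℂ) := by
      push_cast [ha_def]
      field_simp
    have e2 : (1 + 2 * (π : ℂ) * (n : ℂ) / (2 * (π : ℂ) + (α' : ℂ))) = (((1 + b * n : ℝ)) : ℂ) := by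
      push_cast [hb_def]
      field_simp
    rw [e1, e2, Complex.ofReal_inv, Complex.ofReal_inv, div_eq_mul_inv, mul_inv]
    ring
  have hwn : (0:ℝ) ≤ ‖w‖ := norm_nonneg w
  have hgeo : Summable (fun n : ℕ => ‖w‖ ^ n) :=
    summable_geometric_of_lt_one hwn hw
  -- summability of the series
  have hsum : Summable (fun n : ℕ => w ^ n /
      ((1 + 2 * (π : ℂ) * (n : ℂ) / (α' : ℂ)) * (1 + 2 * (π : ℂ) * (n : ℂ) / (2 * (π : ℂ) + (α' : ℂ))))) := by
    apply Summable.of_norm_bounded hgeo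
    intro n
    rw [hterm n]
    have heq : ‖w ^ n * (((1 + a * n)⁻¹ : ℝ) : ℂ) * (((1 + b * n)⁻¹ : ℝ) : ℂ)‖
        = ‖w‖ ^ n * ((1 + a * n)⁻¹ * (1 + b * n)⁻¹) := by
      rw [norm_mul, norm_mul, norm_pow, Complex.norm_real, Complex.norm_real,
        Real.norm_eq_abs, Real.norm_eq_abs, abs_of_pos (inv_pos.2 (hca n)),
        abs_of_pos (inv_pos.2 (hcb n)), mul_assoc]
    rw [heq]
    nlinarith [pow_nonneg hwn n, hinv1 n, inv_pos.2 (hca n), inv_pos.2 (hcb n)]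
  -- the family
  set S : Set (ℝ × ℝ) := Set.Ioi (0:ℝ) ×ˢ Set.Ioi (0:ℝ) with hS_def
  have hSm : MeasurableSet S := measurableSet_Ioi.prod measurableSet_Ioi
  set F : ℕ → ℝ × ℝ → ℂ := fun n p =>
    (w ^ n * (Real.exp (-((1 + a * n) * p.1)) : ℂ)) * (Real.exp (-((1 + b * n) * p.2)) : ℂ)
    with hF_def
  have hFint : ∀ n, IntegrableOn (F n) S := by
    intro n
    rw [hS_def, IntegrableOn, Measure.volume_eq_prod, ← Measure.prod_restrict]
    exact (((aux_exp_intg_c (hca n)).const_mul (w ^ n)).mul_prod (aux_exp_intg_c (hcb n)))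
  have hFval : ∀ n, ∫ p in S, F n p
      = w ^ n * (((1 + a * n)⁻¹ : ℝ) : ℂ) * (((1 + b * n)⁻¹ : ℝ) : ℂ) := by
    intro n
    rw [hS_def, hF_def, Measure.volume_eq_prod,
      setIntegral_prod_mul (fun t : ℝ => w ^ n * (Real.exp (-((1 + a * n) * t)) : ℂ))
        (fun t : ℝ => (Real.exp (-((1 + b * n) * t)) : ℂ)),
      integral_const_mul, aux_exp_int_c (hca n), aux_exp_int_c (hcb n)]
  have hFnorm : ∀ n, ∫ p in S, ‖F n p‖
      = ‖w‖ ^ n * ((1 + a * n)⁻¹ * (1 + b * n)⁻¹) := by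
    intro n
    have hptn : ∀ p : ℝ × ℝ, ‖F n p‖ =
        (‖w‖ ^ n * Real.exp (-((1 + a * n) * p.1))) * Real.exp (-((1 + b * n) * p.2)) := by
      intro p
      simp only [hF_def]
      rw [norm_mul, norm_mul, norm_pow, aux_norm_exp, aux_norm_exp]
    simp_rw [hptn]
    rw [hS_def, Measure.volume_eq_prod,
      setIntegral_prod_mul (fun t : ℝ => ‖w‖ ^ n * Real.exp (-((1 + a * n) * t)))
        (fun t : ℝ => Real.exp (-((1 + b * n) * t))),
      integral_const_mul, aux_exp_int_real (hca n), aux_exp_int_real (hcb n)]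
    ring
  have hFnsum : Summable (fun n => ∫ p in S, ‖F n p‖) := by
    apply Summable.of_nonneg_of_le (fun n => integral_nonneg fun p => norm_nonneg _) _ hgeo
    intro n
    rw [hFnorm n]
    nlinarith [pow_nonneg hwn n, hinv1 n, inv_pos.2 (hca n), inv_pos.2 (hcb n)]
  -- pointwise identification with the geometric series
  have hpt : ∀ p ∈ S, ∑' n, F n p =
      ((Real.exp (-p.1) : ℂ) * (Real.exp (-p.2) : ℂ)) /
        (1 - (Real.exp (-(2 * π * p.1) / α') : ℂ) * (Real.exp (-(2 * π * p.2) / (2 * π + α')) : ℂ) * w) := by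
    intro p hp
    have hp1 : 0 < p.1 := hp.1
    have hp2 : 0 < p.2 := hp.2
    have harg1 : -(2 * π * p.1) / α' = -(a * p.1) := by
      rw [ha_def]; field_simp
    have harg2 : -(2 * π * p.2) / (2 * π + α') = -(b * p.2) := by
      rw [hb_def]; field_simp
    rw [harg1, harg2]
    set q : ℂ := (Real.exp (-(a * p.1)) : ℂ) * (Real.exp (-(b * p.2)) : ℂ) * w with hq_def
    have hexple1 : Real.exp (-(a * p.1)) ≤ 1 := Real.exp_le_one_iff.2 (by nlinarith)
    have hexple2 : Real.exp (-(b * p.2)) ≤ 1 := Real.exp_le_one_iff.2 (by nlinarith)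
    have hqn : ‖q‖ < 1 := by
      rw [hq_def, norm_mul, norm_mul, aux_norm_exp, aux_norm_exp]
      have hre : Real.exp (-(a * p.1)) * Real.exp (-(b * p.2)) ≤ 1 :=
        mul_le_one₀ hexple1 (Real.exp_pos _).le hexple2
      calc Real.exp (-(a * p.1)) * Real.exp (-(b * p.2)) * ‖w‖
          ≤ 1 * ‖w‖ := mul_le_mul_of_nonneg_right hre hwn
        _ = ‖w‖ := one_mul _
        _ < 1 := hw
    have hFeq : ∀ n : ℕ, F n p = q ^ n * ((Real.exp (-p.1) : ℂ) * (Real.exp (-p.2) : ℂ)) := by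
      intro n
      have e1 : Real.exp (-((1 + a * n) * p.1)) = Real.exp (-(a * p.1)) ^ n * Real.exp (-p.1) := by
        rw [← Real.exp_nat_mul, ← Real.exp_add]
        ring_nf
      have e2 : Real.exp (-((1 + b * n) * p.2)) = Real.exp (-(b * p.2)) ^ n * Real.exp (-p.2) := by
        rw [← Real.exp_nat_mul, ← Real.exp_add]
        ring_nf
      simp only [hF_def, hq_def, mul_pow, e1, e2]
      push_cast
      ring
    rw [tsum_congr hFeq, tsum_mul_right, tsum_geometric_of_norm_lt_one hqn,
      div_eq_mul_inv, mul_comm]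
  -- integrability of the integrand
  have hbound : ∀ p ∈ S,
      ‖((Real.exp (-p.1) : ℂ) * (Real.exp (-p.2) : ℂ)) /
        (1 - (Real.exp (-(2 * π * p.1) / α') : ℂ) * (Real.exp (-(2 * π * p.2) / (2 * π + α')) : ℂ) * w)‖
      ≤ (1 - ‖w‖)⁻¹ * (Real.exp (-p.1) * Real.exp (-p.2)) := by
    intro p hp
    have hp1 : 0 < p.1 := hp.1
    have hp2 : 0 < p.2 := hp.2
    set z : ℂ := (Real.exp (-(2 * π * p.1) / α') : ℂ) * (Real.exp (-(2 * π * p.2) / (2 * π + α')) : ℂ)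
      with hz_def
    have hzle : ‖z‖ ≤ 1 := by
      have l1 : Real.exp (-(2 * π * p.1) / α') ≤ 1 := Real.exp_le_one_iff.2 (by
        apply div_nonpos_of_nonpos_of_nonneg <;> nlinarith)
      have l2 : Real.exp (-(2 * π * p.2) / (2 * π + α')) ≤ 1 := Real.exp_le_one_iff.2 (by
        apply div_nonpos_of_nonpos_of_nonneg <;> nlinarith)
      rw [hz_def, norm_mul, aux_norm_exp, aux_norm_exp]
      nlinarith [Real.exp_pos (-(2 * π * p.1) / α'), Real.exp_pos (-(2 * π * p.2) / (2 * π + α'))]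
    have hden : 1 - ‖w‖ ≤ ‖1 - z * w‖ := by
      have h' : ‖(1:ℂ)‖ - ‖z * w‖ ≤ ‖1 - z * w‖ := norm_sub_norm_le _ _
      have hzw : ‖z * w‖ ≤ ‖w‖ := by
        rw [norm_mul]
        calc ‖z‖ * ‖w‖ ≤ 1 * ‖w‖ := mul_le_mul_of_nonneg_right hzle (norm_nonneg _)
          _ = ‖w‖ := by rw [one_mul]
      simp only [norm_one] at h'
      linarith
    have hdpos : (0:ℝ) < 1 - ‖w‖ := by linarith
    rw [norm_div]
    have hnum : ‖(Real.exp (-p.1) : ℂ) * (Real.exp (-p.2) : ℂ)‖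
        = Real.exp (-p.1) * Real.exp (-p.2) := by
      rw [norm_mul, aux_norm_exp, aux_norm_exp]
    rw [hnum, div_le_iff₀ (lt_of_lt_of_le hdpos hden), inv_mul_eq_div, div_mul_eq_mul_div,
      le_div_iff₀ hdpos]
    have hnn : (0:ℝ) ≤ Real.exp (-p.1) * Real.exp (-p.2) := by positivity
    calc Real.exp (-p.1) * Real.exp (-p.2) * (1 - ‖w‖)
        ≤ Real.exp (-p.1) * Real.exp (-p.2) * ‖1 - z * w‖ :=
          mul_le_mul_of_nonneg_left hden hnn
      _ = _ := by ring
  have hmeas : AEStronglyMeasurable (fun p : ℝ × ℝ =>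
      ((Real.exp (-p.1) : ℂ) * (Real.exp (-p.2) : ℂ)) /
        (1 - (Real.exp (-(2 * π * p.1) / α') : ℂ) * (Real.exp (-(2 * π * p.2) / (2 * π + α')) : ℂ) * w))
      (volume.restrict S) := by
    have m1 : Measurable fun p : ℝ × ℝ => ((Real.exp (-p.1) : ℝ) : ℂ) :=
      Complex.measurable_ofReal.comp (Real.measurable_exp.comp measurable_fst.neg)
    have m2 : Measurable fun p : ℝ × ℝ => ((Real.exp (-p.2) : ℝ) : ℂ) :=
      Complex.measurable_ofReal.comp (Real.measurable_exp.comp measurable_snd.neg)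
    have m3 : Measurable fun p : ℝ × ℝ => ((Real.exp (-(2 * π * p.1) / α') : ℝ) : ℂ) :=
      Complex.measurable_ofReal.comp (Real.measurable_exp.comp
        (((measurable_fst.const_mul (2 * π)).neg).div_const α'))
    have m4 : Measurable fun p : ℝ × ℝ => ((Real.exp (-(2 * π * p.2) / (2 * π + α')) : ℝ) : ℂ) :=
      Complex.measurable_ofReal.comp (Real.measurable_exp.comp
        (((measurable_snd.const_mul (2 * π)).neg).div_const (2 * π + α')))
    exact ((m1.mul m2).div (measurable_const.sub ((m3.mul m4).mul_const w))).aestronglyMeasurable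
  have hgint : IntegrableOn (fun p : ℝ × ℝ =>
      (1 - ‖w‖)⁻¹ * (Real.exp (-p.1) * Real.exp (-p.2))) S := by
    rw [hS_def, IntegrableOn, Measure.volume_eq_prod, ← Measure.prod_restrict]
    have i1 : Integrable (fun t : ℝ => Real.exp (-t)) (volume.restrict (Set.Ioi 0)) := by
      have := aux_exp_intg (c := 1) one_pos; simp only [one_mul] at this; exact this
    exact (((i1.const_mul ((1 - ‖w‖)⁻¹)).mul_prod i1)).congr
      (by filter_upwards with p; ring_nf)
  have hInt : IntegrableOn (fun p : ℝ × ℝ =>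
      ((Real.exp (-p.1) : ℂ) * (Real.exp (-p.2) : ℂ)) /
        (1 - (Real.exp (-(2 * π * p.1) / α') : ℂ) * (Real.exp (-(2 * π * p.2) / (2 * π + α')) : ℂ) * w)) S := by
    apply Integrable.mono' hgint hmeas
    rw [ae_restrict_iff' hSm]
    filter_upwards with p hp
    exact hbound p hp
  refine ⟨hsum, hInt, ?_⟩
  calc ∑' n : ℕ, w ^ n /
      ((1 + 2 * (π : ℂ) * (n : ℂ) / (α' : ℂ)) * (1 + 2 * (π : ℂ) * (n : ℂ) / (2 * (π : ℂ) + (α' : ℂ))))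
      = ∑' n : ℕ, ∫ p in S, F n p :=
        tsum_congr fun n => (hterm n).trans (hFval n).symm
    _ = ∫ p in S, ∑' n, F n p :=
        integral_tsum_of_summable_integral_norm hFint hFnsum
    _ = _ := setIntegral_congr_fun hSm hpt
end

section
/- For every real a > −1 and every complex number w, the series Σ_{n=0}^∞ (w^n/n!) · 1/(n + 1 + a)² converges and equals the convergent double integral ∫_0^∞ ∫_0^∞ e^{−(1+a)(t₁ + t₂)} · exp(w·e^{−(t₁ + t₂)}) dt₁ dt₂. -/
open MeasureTheory

/-- For real `a > -1` and `w : ℂ`, the series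
`Σ_{n≥0} (wⁿ/n!)·1/(n+1+a)²` converges and equals the convergent double integral
`∫_0^∞∫_0^∞ e^{-(1+a)(t₁+t₂)}·exp(w·e^{-(t₁+t₂)}) dt₁ dt₂`. -/
theorem stmt_9 (a : ℝ) (ha : -1 < a) (w : ℂ) :
    Summable (fun n : ℕ => w ^ n / (Nat.factorial n : ℂ) * (((n : ℂ) + 1 + (a : ℂ)) ^ 2)⁻¹) ∧
    IntegrableOn (fun p : ℝ × ℝ =>
      (Real.exp (-((1 + a) * (p.1 + p.2))) : ℂ) * Complex.exp (w * (Real.exp (-(p.1 + p.2)) : ℂ)))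
      (Set.Ioi 0 ×ˢ Set.Ioi 0) ∧
    ∑' n : ℕ, w ^ n / (Nat.factorial n : ℂ) * (((n : ℂ) + 1 + (a : ℂ)) ^ 2)⁻¹
      = ∫ p in (Set.Ioi (0 : ℝ) ×ˢ Set.Ioi (0 : ℝ)),
          (Real.exp (-((1 + a) * (p.1 + p.2))) : ℂ) * Complex.exp (w * (Real.exp (-(p.1 + p.2)) : ℂ)) := by
  have hc : (0:ℝ) < 1 + a := by linarith
  set c : ℝ := 1 + a with hcdef
  set f : ℝ × ℝ → ℂ := fun p =>
    (Real.exp (-(c * (p.1 + p.2))) : ℂ) * Complex.exp (w * (Real.exp (-(p.1 + p.2)) : ℂ)) with hf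
  set μ : Measure (ℝ × ℝ) :=
    ((volume : Measure ℝ).restrict (Set.Ioi 0)).prod ((volume : Measure ℝ).restrict (Set.Ioi 0))
    with hμ
  have hμeq : μ = (volume : Measure (ℝ × ℝ)).restrict (Set.Ioi 0 ×ˢ Set.Ioi 0) := by
    rw [hμ, Measure.prod_restrict]
    rfl
  -- single-variable integral
  have key1 : ∀ b : ℝ, 0 < b → ∫ x in Set.Ioi (0:ℝ), Real.exp (-(b * x)) = b⁻¹ := by
    intro b hb
    have h := integral_comp_mul_left_Ioi (fun x => Real.exp (-x)) 0 hb
    simp only [mul_zero] at h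
    rw [h, integral_exp_neg_Ioi_zero, smul_eq_mul, mul_one]
  have key1C : ∀ b : ℝ, 0 < b →
      ∫ x in Set.Ioi (0:ℝ), (Real.exp (-(b * x)) : ℂ) = ((b⁻¹ : ℝ) : ℂ) := by
    intro b hb
    rw [← key1 b hb]
    exact integral_ofReal (𝕜 := ℂ)
  have keyInt : ∀ b : ℝ, 0 < b →
      IntegrableOn (fun x => Real.exp (-(b * x))) (Set.Ioi (0:ℝ)) := by
    intro b hb
    simpa [neg_mul] using exp_neg_integrableOn_Ioi 0 hb
  have keyIntC : ∀ b : ℝ, 0 < b →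
      IntegrableOn (fun x => (Real.exp (-(b * x)) : ℂ)) (Set.Ioi (0:ℝ)) := by
    intro b hb
    exact (keyInt b hb).ofReal
  -- the series of functions
  set F : ℕ → ℝ × ℝ → ℂ := fun n p => w ^ n / (Nat.factorial n : ℂ) *
    ((Real.exp (-(((n : ℝ) + c) * p.1)) : ℂ) * (Real.exp (-(((n : ℝ) + c) * p.2)) : ℂ)) with hF
  have hnc : ∀ n : ℕ, (0:ℝ) < (n : ℝ) + c := fun n => by positivity
  -- pointwise sum
  have hpt : ∀ p : ℝ × ℝ, ∑' n, F n p = f p := by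
    intro p
    have h1 : Complex.exp (w * (Real.exp (-(p.1 + p.2)) : ℂ))
        = ∑' n : ℕ, (w * (Real.exp (-(p.1 + p.2)) : ℂ)) ^ n / (Nat.factorial n : ℂ) := by
      rw [Complex.exp_eq_exp_ℂ, NormedSpace.exp_eq_tsum_div]
    rw [hf]
    simp only [h1, ← tsum_mul_left]
    refine tsum_congr fun n => ?_
    rw [hF]
    have key : Real.exp (-(((n : ℝ) + c) * p.1)) * Real.exp (-(((n : ℝ) + c) * p.2))
        = Real.exp (-(c * (p.1 + p.2))) * Real.exp (-(p.1 + p.2)) ^ n := by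
      rw [← Real.exp_nat_mul, ← Real.exp_add, ← Real.exp_add]
      congr 1
      ring
    calc w ^ n / (Nat.factorial n : ℂ) *
          ((Real.exp (-(((n : ℝ) + c) * p.1)) : ℂ) * (Real.exp (-(((n : ℝ) + c) * p.2)) : ℂ))
        = w ^ n / (Nat.factorial n : ℂ) *
          ((Real.exp (-(((n : ℝ) + c) * p.1)) * Real.exp (-(((n : ℝ) + c) * p.2)) : ℝ) : ℂ) := by
          push_cast; ring
      _ = w ^ n / (Nat.factorial n : ℂ) *
          ((Real.exp (-(c * (p.1 + p.2))) * Real.exp (-(p.1 + p.2)) ^ n : ℝ) : ℂ) := by rw [key]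
      _ = (Real.exp (-(c * (p.1 + p.2))) : ℂ) *
          ((w * (Real.exp (-(p.1 + p.2)) : ℂ)) ^ n / (Nat.factorial n : ℂ)) := by
          push_cast; ring
  -- integrability of each F n
  have hFint : ∀ n, Integrable (F n) μ := by
    intro n
    exact (((keyIntC _ (hnc n)).mul_prod (keyIntC _ (hnc n)))).const_mul _
  -- value of each integral
  have hFval : ∀ n, ∫ p, F n p ∂μ
      = w ^ n / (Nat.factorial n : ℂ) * (((n : ℂ) + 1 + (a : ℂ)) ^ 2)⁻¹ := by
    intro n
    rw [hF]
    simp only [integral_const_mul]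
    rw [hμ, integral_prod_mul (f := fun x : ℝ => (Real.exp (-(((n : ℝ) + c) * x)) : ℂ))
      (g := fun x : ℝ => (Real.exp (-(((n : ℝ) + c) * x)) : ℂ)), key1C _ (hnc n)]
    congr 1
    rw [← Complex.ofReal_mul, ← mul_inv, ← sq]
    push_cast [hcdef]
    ring
  -- norms
  have hFnorm : ∀ n, ∫ p, ‖F n p‖ ∂μ
      = ‖w‖ ^ n / (Nat.factorial n : ℝ) * ((((n:ℝ) + c))⁻¹) ^ 2 := by
    intro n
    have : ∀ p : ℝ × ℝ, ‖F n p‖ = ‖w‖ ^ n / (Nat.factorial n : ℝ) *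
        (Real.exp (-(((n : ℝ) + c) * p.1)) * Real.exp (-(((n : ℝ) + c) * p.2))) := by
      intro p
      rw [hF]
      simp only [norm_mul, norm_div, norm_pow, Complex.norm_real, Complex.norm_natCast,
        Real.norm_eq_abs, abs_of_pos (Real.exp_pos _)]
    simp only [this, integral_const_mul]
    rw [hμ, integral_prod_mul (f := fun x : ℝ => Real.exp (-(((n : ℝ) + c) * x)))
      (g := fun x : ℝ => Real.exp (-(((n : ℝ) + c) * x))), key1 _ (hnc n), ← sq]
  have hFsum : Summable fun n => ∫ p, ‖F n p‖ ∂μ := by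
    simp only [hFnorm]
    refine Summable.of_nonneg_of_le (fun n => by positivity) (fun n => ?_)
      ((Real.summable_pow_div_factorial ‖w‖).mul_right (c⁻¹ ^ 2))
    have h1 : ((n:ℝ) + c)⁻¹ ≤ c⁻¹ := by
      apply inv_anti₀ hc
      linarith [Nat.cast_nonneg (α := ℝ) n]
    have h2 : (((n:ℝ) + c)⁻¹) ^ 2 ≤ c⁻¹ ^ 2 :=
      pow_le_pow_left₀ (by positivity) h1 2
    have h3 : (0:ℝ) ≤ ‖w‖ ^ n / (Nat.factorial n : ℝ) := by positivity
    exact mul_le_mul_of_nonneg_left h2 h3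
  have hHS := MeasureTheory.hasSum_integral_of_summable_integral_norm hFint hFsum
  simp only [hFval] at hHS
  have hptf : (fun p => ∑' n, F n p) = f := funext hpt
  rw [hptf] at hHS
  -- integrability of f
  have hfint : Integrable f μ := by
    have hgint : Integrable (fun p : ℝ × ℝ =>
        Real.exp ‖w‖ * (Real.exp (-(c * p.1)) * Real.exp (-(c * p.2)))) μ := by
      exact ((keyInt c hc).mul_prod (keyInt c hc)).const_mul _
    refine hgint.mono' ?_ ?_
    · apply Continuous.aestronglyMeasurable
      fun_prop
    · rw [hμeq]
      filter_upwards [ae_restrict_mem ((measurableSet_Ioi).prod measurableSet_Ioi)] with p hp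
      obtain ⟨hp1, hp2⟩ := hp
      have hp1' : (0:ℝ) < p.1 := hp1
      have hp2' : (0:ℝ) < p.2 := hp2
      have h2 : (w * (Real.exp (-(p.1 + p.2)) : ℂ)).re ≤ ‖w‖ := by
        calc (w * (Real.exp (-(p.1 + p.2)) : ℂ)).re
            ≤ ‖w * (Real.exp (-(p.1 + p.2)) : ℂ)‖ := Complex.re_le_norm _
          _ = ‖w‖ * Real.exp (-(p.1 + p.2)) := by
              rw [norm_mul, Complex.norm_real, Real.norm_eq_abs, abs_of_pos (Real.exp_pos _)]
          _ ≤ ‖w‖ * 1 := by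
              gcongr
              exact Real.exp_le_one_iff.mpr (by linarith)
          _ = ‖w‖ := mul_one _
      calc ‖f p‖ = Real.exp (-(c * (p.1 + p.2)))
            * Real.exp ((w * (Real.exp (-(p.1 + p.2)) : ℂ)).re) := by
            rw [hf]
            simp only [norm_mul, Complex.norm_exp, Complex.norm_real, Real.norm_eq_abs,
              abs_of_pos (Real.exp_pos _)]
        _ ≤ Real.exp (-(c * (p.1 + p.2))) * Real.exp ‖w‖ :=
            mul_le_mul_of_nonneg_left (Real.exp_le_exp.mpr h2) (le_of_lt (Real.exp_pos _))
        _ = Real.exp ‖w‖ * (Real.exp (-(c * p.1)) * Real.exp (-(c * p.2))) := by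
            rw [← Real.exp_add, ← Real.exp_add, ← Real.exp_add]
            congr 1
            ring
  refine ⟨hHS.summable, ?_, ?_⟩
  · rw [IntegrableOn, ← hμeq]
    exact hfint
  · rw [hHS.tsum_eq, hμeq]
end

section
/- For every real ε > 0, the function (x₁, x₂) ↦ log(‖x₁ − x₂‖²) · (πε)^{−2} · exp(−(‖x₁‖² + ‖x₂‖²)/ε) is Lebesgue integrable on ℝ² × ℝ², and ∫_{ℝ²} ∫_{ℝ²} log(‖x₁ − x₂‖²) · (πε)^{−2} · e^{−(‖x₁‖² + ‖x₂‖²)/ε} dx₁ dx₂ = log(2ε) − γ, where γ is the Euler–Mascheroni constant. -/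
open Real MeasureTheory Set

/- Auxiliary development -/

lemma aux_lemA : ∫ t in Set.Ioi (0:ℝ), Real.log t * Real.exp (-t)
    = -Real.eulerMascheroniConstant := by
  have h1 := Complex.hasDerivAt_GammaIntegral (s := 1) (by norm_num)
  have h2 : (∫ t : ℝ in Set.Ioi 0, (t:ℂ) ^ ((1:ℂ) - 1) * (Real.log t * Real.exp (-t)))
      = ((∫ t in Set.Ioi (0:ℝ), Real.log t * Real.exp (-t) : ℝ) : ℂ) := by
    rw [show ((∫ t in Set.Ioi (0:ℝ), Real.log t * Real.exp (-t) : ℝ) : ℂ)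
        = ∫ t in Set.Ioi (0:ℝ), ((Real.log t * Real.exp (-t) : ℝ) : ℂ) from (integral_ofReal).symm]
    apply setIntegral_congr_fun measurableSet_Ioi
    intro t _
    simp [Complex.cpow_zero]
  rw [h2] at h1
  have h3 : HasDerivAt Complex.Gamma
      ((∫ t in Set.Ioi (0:ℝ), Real.log t * Real.exp (-t) : ℝ) : ℂ) 1 := by
    apply h1.congr_of_eventuallyEq
    have : ∀ᶠ s : ℂ in nhds 1, 0 < s.re := by
      apply (Complex.continuous_re.tendsto _).eventually (eventually_gt_nhds ?_)
      norm_num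
    filter_upwards [this] with s hs
    exact (Complex.Gamma_eq_integral hs)
  have h4 := Complex.hasDerivAt_Gamma_one
  have h5 : ((∫ t in Set.Ioi (0:ℝ), Real.log t * Real.exp (-t) : ℝ) : ℂ)
      = ((-Real.eulerMascheroniConstant : ℝ) : ℂ) := by
    rw [h3.unique h4]; simp
  exact Complex.ofReal_inj.mp h5

-- integrability of log * exp(-·) on Ioi 0
lemma aux_intOn_log_exp : IntegrableOn (fun t => Real.log t * Real.exp (-t)) (Set.Ioi (0:ℝ)) := by
  rw [← Set.Ioc_union_Ioi_eq_Ioi (zero_le_one (α := ℝ))]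
  apply IntegrableOn.union
  · have hr : IntegrableOn (fun x : ℝ => 2 * x ^ (-(1/2) : ℝ)) (Set.Ioc (0:ℝ) 1) := by
      have := (intervalIntegral.intervalIntegrable_rpow' (a := 0) (b := 1) (r := -(1/2)) (by norm_num)).1
      simpa [IntegrableOn] using this.const_mul 2
    apply hr.integrable.mono
    · apply (Real.measurable_log.mul (Real.measurable_exp.comp measurable_neg)).aestronglyMeasurable
    · filter_upwards [ae_restrict_mem measurableSet_Ioc] with x hx
      have hx0 : 0 < x := hx.1
      have h1 : |Real.log x| ≤ 2 * x ^ (-(1/2) : ℝ) := by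
        have hlx : Real.log x ≤ 0 := Real.log_nonpos hx0.le hx.2
        have : Real.log (x ^ (-(1/2) : ℝ)) ≤ x ^ (-(1/2) : ℝ) - 1 :=
          Real.log_le_sub_one_of_pos (Real.rpow_pos_of_pos hx0 _)
        rw [Real.log_rpow hx0] at this
        rw [abs_of_nonpos hlx]
        nlinarith [Real.rpow_pos_of_pos hx0 (-(1/2) : ℝ)]
      have h2 : Real.exp (-x) ≤ 1 := Real.exp_le_one_iff.mpr (by linarith)
      calc ‖Real.log x * Real.exp (-x)‖ = |Real.log x| * Real.exp (-x) := by
            rw [norm_mul]; simp [Real.abs_exp]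
        _ ≤ (2 * x ^ (-(1/2) : ℝ)) * 1 := by
            apply mul_le_mul h1 h2 (Real.exp_nonneg _) (by positivity)
        _ = ‖2 * x ^ (-(1/2) : ℝ)‖ := by
            rw [mul_one, Real.norm_eq_abs, abs_of_nonneg (by positivity)]
  · have h2 := Real.GammaIntegral_convergent (by norm_num : (0:ℝ) < 2)
    apply ((h2.mono_set (Set.Ioi_subset_Ioi zero_le_one))).integrable.mono
    · apply (Real.measurable_log.mul (Real.measurable_exp.comp measurable_neg)).aestronglyMeasurable
    · filter_upwards [ae_restrict_mem measurableSet_Ioi] with x hx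
      have hx1 : (1:ℝ) < x := hx
      have hlog : 0 ≤ Real.log x := Real.log_nonneg hx1.le
      have hle : Real.log x ≤ x := (Real.log_le_sub_one_of_pos (by linarith)).trans (by linarith)
      calc ‖Real.log x * Real.exp (-x)‖ = Real.log x * Real.exp (-x) := by
            rw [Real.norm_eq_abs, abs_of_nonneg (by positivity)]
        _ ≤ x * Real.exp (-x) := by nlinarith [Real.exp_pos (-x)]
        _ ≤ ‖Real.exp (-x) * x ^ ((2:ℝ) - 1)‖ := by
            rw [Real.norm_eq_abs]
            rw [show ((2:ℝ) - 1) = 1 by norm_num, Real.rpow_one]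
            rw [abs_of_nonneg (by positivity)]
            linarith [mul_comm x (Real.exp (-x))]

lemma intOn_const_exp_a {a c : ℝ} (ha : 0 < a) :
    IntegrableOn (fun t : ℝ => c * Real.exp (-(a * t))) (Set.Ioi (0:ℝ)) := by
  have h : IntegrableOn (fun t : ℝ => Real.exp (-a * t)) (Set.Ioi (0:ℝ)) :=
    exp_neg_integrableOn_Ioi 0 ha
  have h2 : IntegrableOn (fun t : ℝ => c * Real.exp (-a * t)) (Set.Ioi (0:ℝ)) := h.const_mul c
  apply h2.congr_fun (fun x _ => by rw [neg_mul]) measurableSet_Ioi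

lemma intOn_log_exp_a {a : ℝ} (ha : 0 < a) :
    IntegrableOn (fun t => Real.log t * Real.exp (-(a * t))) (Set.Ioi (0:ℝ)) := by
  have hc : IntegrableOn (fun x : ℝ => Real.log a * Real.exp (-(1 * x))) (Set.Ioi (0:ℝ)) :=
    intOn_const_exp_a one_pos
  have hc' : IntegrableOn (fun x : ℝ => Real.log a * Real.exp (-x)) (Set.Ioi (0:ℝ)) := by
    simpa using hc
  have key : IntegrableOn (fun x : ℝ => (Real.log x - Real.log a) * Real.exp (-x))
      (Set.Ioi (0:ℝ)) := by
    have h3 : IntegrableOn ((fun t => Real.log t * Real.exp (-t))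
        - fun x : ℝ => Real.log a * Real.exp (-x)) (Set.Ioi (0:ℝ)) := aux_intOn_log_exp.sub hc'
    apply h3.congr_fun (fun x _ => by simp only [Pi.sub_apply]; ring) measurableSet_Ioi
  have := (integrableOn_Ioi_comp_mul_left_iff
      (fun x : ℝ => (Real.log x - Real.log a) * Real.exp (-x)) 0 ha).mpr
      (by simpa [mul_zero] using key)
  apply this.congr_fun ?_ measurableSet_Ioi
  intro x hx
  have hx0 : 0 < x := hx
  simp only
  rw [Real.log_mul ha.ne' hx0.ne']
  ring_nf

lemma integral_exp_neg_mul {a : ℝ} (ha : 0 < a) :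
    ∫ t in Set.Ioi (0:ℝ), Real.exp (-(a * t)) = a⁻¹ := by
  have := integral_comp_mul_left_Ioi (fun x : ℝ => Real.exp (-x)) 0 ha
  simp only [mul_zero, integral_exp_neg_Ioi, Real.exp_zero, smul_eq_mul, mul_one] at this
  simpa using this

lemma integral_log_exp_a {a : ℝ} (ha : 0 < a) :
    ∫ t in Set.Ioi (0:ℝ), Real.log t * Real.exp (-(a * t))
      = a⁻¹ * (-Real.log a - Real.eulerMascheroniConstant) := by
  have h1 := integral_comp_mul_left_Ioi (fun x : ℝ => Real.log x * Real.exp (-x)) 0 ha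
  rw [mul_zero, aux_lemA, smul_eq_mul] at h1
  have h2 : ∀ x ∈ Set.Ioi (0:ℝ), Real.log (a * x) * Real.exp (-(a * x))
      = Real.log a * Real.exp (-(a * x)) + Real.log x * Real.exp (-(a * x)) := by
    intro x hx
    rw [Real.log_mul ha.ne' (ne_of_gt hx)]; ring
  rw [setIntegral_congr_fun measurableSet_Ioi h2] at h1
  rw [integral_add (intOn_const_exp_a ha) (intOn_log_exp_a ha)] at h1
  rw [integral_const_mul, integral_exp_neg_mul ha] at h1
  have : ∫ t in Set.Ioi (0:ℝ), Real.log t * Real.exp (-(a * t))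
      = a⁻¹ * -Real.eulerMascheroniConstant - Real.log a * a⁻¹ := by linarith
  rw [this]; ring

-- 1D radial integrand
lemma intOn_radial {a : ℝ} (ha : 0 < a) :
    IntegrableOn (fun r : ℝ => r * (Real.log (r ^ 2) * Real.exp (-(a * r ^ 2))))
      (Set.Ioi (0:ℝ)) := by
  have h := (integrableOn_Ioi_comp_rpow_iff
      (fun y : ℝ => Real.log y * Real.exp (-(a * y))) (p := 2) two_ne_zero).mpr
      (intOn_log_exp_a ha)
  have h2 : IntegrableOn (fun x : ℝ =>
      (1/2 : ℝ) * ((|2| * x ^ ((2:ℝ) - 1)) • (Real.log (x ^ (2:ℝ)) * Real.exp (-(a * x ^ (2:ℝ))))))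
      (Set.Ioi (0:ℝ)) := h.const_mul (1/2 : ℝ)
  apply h2.congr_fun ?_ measurableSet_Ioi
  intro x hx
  have hx0 : (0:ℝ) < x := hx
  have hr : x ^ (2:ℝ) = x ^ 2 := by
    rw [show ((2:ℝ)) = ((2:ℕ):ℝ) by norm_num, Real.rpow_natCast]
  simp only [smul_eq_mul, hr]
  rw [show ((2:ℝ) - 1) = 1 by norm_num, Real.rpow_one]
  rw [abs_of_pos (by norm_num : (0:ℝ) < 2)]
  ring

lemma integral_radial {a : ℝ} (ha : 0 < a) :
    ∫ r in Set.Ioi (0:ℝ), r * (Real.log (r ^ 2) * Real.exp (-(a * r ^ 2)))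
      = (1/2) * (a⁻¹ * (-Real.log a - Real.eulerMascheroniConstant)) := by
  have h := integral_comp_rpow_Ioi_of_pos
      (g := fun y : ℝ => Real.log y * Real.exp (-(a * y))) (p := 2) two_pos
  rw [integral_log_exp_a ha] at h
  have h2 : ∀ x ∈ Set.Ioi (0:ℝ),
      ((2:ℝ) * x ^ ((2:ℝ) - 1)) • (Real.log (x ^ (2:ℝ)) * Real.exp (-(a * x ^ (2:ℝ))))
        = 2 * (x * (Real.log (x ^ 2) * Real.exp (-(a * x ^ 2)))) := by
    intro x hx
    have hr : x ^ (2:ℝ) = x ^ 2 := by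
      rw [show ((2:ℝ)) = ((2:ℕ):ℝ) by norm_num, Real.rpow_natCast]
    simp only [smul_eq_mul, hr]
    rw [show ((2:ℝ) - 1) = 1 by norm_num, Real.rpow_one]
    ring
  rw [setIntegral_congr_fun measurableSet_Ioi h2] at h
  rw [integral_const_mul] at h
  linarith

-- ℝ × ℝ level
noncomputable def Fplane (a : ℝ) : ℝ × ℝ → ℝ :=
  fun p => Real.log (p.1 ^ 2 + p.2 ^ 2) * Real.exp (-(a * (p.1 ^ 2 + p.2 ^ 2)))

lemma polar_symm_eval (a : ℝ) (p : ℝ × ℝ) :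
    Fplane a (polarCoord.symm p) = Real.log (p.1 ^ 2) * Real.exp (-(a * p.1 ^ 2)) := by
  have : (p.1 * Real.cos p.2) ^ 2 + (p.1 * Real.sin p.2) ^ 2 = p.1 ^ 2 := by
    nlinarith [Real.sin_sq_add_cos_sq p.2]
  have hs : polarCoord.symm p = (p.1 * Real.cos p.2, p.1 * Real.sin p.2) := rfl
  rw [hs]
  simp only [Fplane]
  rw [this]

lemma integrable_Fplane {a : ℝ} (ha : 0 < a) : Integrable (Fplane a) := by
  set B : ℝ × ℝ → ℝ × ℝ →L[ℝ] ℝ × ℝ := fun p =>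
    LinearMap.toContinuousLinearMap (Matrix.toLin (Module.Basis.finTwoProd ℝ) (Module.Basis.finTwoProd ℝ)
      !![Real.cos p.2, -p.1 * Real.sin p.2; Real.sin p.2, p.1 * Real.cos p.2]) with hB
  have B_det : ∀ p : ℝ × ℝ, (B p).det = p.1 := by
    intro p
    conv_rhs => rw [← one_mul p.1, ← Real.cos_sq_add_sin_sq p.2]
    simp only [hB, neg_mul, LinearMap.det_toContinuousLinearMap, LinearMap.det_toLin,
      Matrix.det_fin_two_of, sub_neg_eq_add]
    ring
  have hiff := integrableOn_image_iff_integrableOn_abs_det_fderiv_smul volume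
      polarCoord.open_target.measurableSet
      (fun p _ => (hasFDerivAt_polarCoord_symm p).hasFDerivWithinAt)
      polarCoord.symm.injOn (Fplane a)
  rw [polarCoord.symm_image_target_eq_source] at hiff
  rw [show (IntegrableOn (Fplane a) polarCoord.source volume) = Integrable (Fplane a) by
    rw [IntegrableOn, Measure.restrict_congr_set polarCoord_source_ae_eq_univ,
      Measure.restrict_univ]] at hiff
  rw [hiff]
  -- now show IntegrableOn (fun p => |(B p).det| • Fplane a (polarCoord.symm p)) target
  have htarget : polarCoord.target = Set.Ioi (0:ℝ) ×ˢ Set.Ioo (-π) π := rfl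
  have hprod : IntegrableOn
      (fun p : ℝ × ℝ => (p.1 * (Real.log (p.1 ^ 2) * Real.exp (-(a * p.1 ^ 2)))) * (1 : ℝ))
      (Set.Ioi (0:ℝ) ×ˢ Set.Ioo (-π) π) := by
    rw [IntegrableOn, MeasureTheory.Measure.volume_eq_prod, ← Measure.prod_restrict]
    exact (intOn_radial ha).mul_prod (integrable_const 1)
  rw [htarget]
  apply hprod.congr_fun ?_ (measurableSet_Ioi.prod measurableSet_Ioo)
  rintro ⟨r, θ⟩ ⟨hr, hθ⟩
  have h1 : (fderivPolarCoordSymm (r, θ)).det = r := B_det (r, θ)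
  simp only [mul_one, h1, polar_symm_eval, smul_eq_mul]
  rw [abs_of_pos (Set.mem_Ioi.mp hr)]

lemma integral_Fplane {a : ℝ} (ha : 0 < a) :
    ∫ p : ℝ × ℝ, Fplane a p = π * a⁻¹ * (-Real.log a - Real.eulerMascheroniConstant) := by
  rw [← integral_comp_polarCoord_symm (Fplane a)]
  have htarget : polarCoord.target = Set.Ioi (0:ℝ) ×ˢ Set.Ioo (-π) π := rfl
  rw [htarget]
  have hcongr : ∀ p ∈ Set.Ioi (0:ℝ) ×ˢ Set.Ioo (-π) π,
      p.1 • Fplane a (polarCoord.symm p)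
        = (p.1 * (Real.log (p.1 ^ 2) * Real.exp (-(a * p.1 ^ 2)))) * (1:ℝ) := by
    rintro ⟨r, θ⟩ _
    rw [polar_symm_eval, smul_eq_mul, mul_one]
  rw [setIntegral_congr_fun (measurableSet_Ioi.prod measurableSet_Ioo) hcongr]
  rw [MeasureTheory.Measure.volume_eq_prod, ← Measure.prod_restrict]
  rw [integral_prod_mul (μ := volume.restrict (Set.Ioi (0:ℝ)))
      (ν := volume.restrict (Set.Ioo (-π) π))
      (fun r : ℝ => r * (Real.log (r ^ 2) * Real.exp (-(a * r ^ 2)))) (fun _ => (1:ℝ))]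
  rw [integral_radial ha, integral_const]
  simp only [smul_eq_mul, mul_one, measureReal_restrict_apply_univ, Real.volume_real_Ioo]
  rw [max_eq_left (by linarith [Real.pi_pos] : (0:ℝ) ≤ π - -π)]
  ring

-- Transfer to EuclideanSpace
noncomputable def FE (a : ℝ) : EuclideanSpace ℝ (Fin 2) → ℝ :=
  fun y => Real.log (‖y‖ ^ 2) * Real.exp (-(a * ‖y‖ ^ 2))

lemma FE_eq (a : ℝ) (y : EuclideanSpace ℝ (Fin 2)) :
    FE a y = Fplane a (MeasurableEquiv.finTwoArrow ((MeasurableEquiv.toLp 2 (Fin 2 → ℝ)).symm y)) := by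
  have hnorm : ‖y‖ ^ 2 = y 0 ^ 2 + y 1 ^ 2 := by
    rw [EuclideanSpace.norm_eq]
    rw [Real.sq_sqrt (by positivity)]
    simp [Fin.sum_univ_two]
  simp only [FE, Fplane, MeasurableEquiv.finTwoArrow, hnorm]
  rfl

lemma mpE : MeasurePreserving
    (fun y : EuclideanSpace ℝ (Fin 2) =>
      MeasurableEquiv.finTwoArrow ((MeasurableEquiv.toLp 2 (Fin 2 → ℝ)).symm y))
    volume volume :=
  (volume_preserving_finTwoArrow ℝ).comp (EuclideanSpace.volume_preserving_symm_measurableEquiv_toLp (Fin 2))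

lemma integrable_FE {a : ℝ} (ha : 0 < a) : Integrable (FE a) := by
  have := (mpE.integrable_comp_emb
    (((MeasurableEquiv.toLp 2 (Fin 2 → ℝ)).symm).trans (MeasurableEquiv.finTwoArrow)).measurableEmbedding
    (g := Fplane a)).mpr (integrable_Fplane ha)
  exact this.congr (Filter.Eventually.of_forall fun y => (FE_eq a y).symm)

lemma integral_FE {a : ℝ} (ha : 0 < a) :
    ∫ y : EuclideanSpace ℝ (Fin 2), FE a y
      = π * a⁻¹ * (-Real.log a - Real.eulerMascheroniConstant) := by
  rw [show (fun y : EuclideanSpace ℝ (Fin 2) => FE a y) = fun y => Fplane a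
      (MeasurableEquiv.finTwoArrow ((MeasurableEquiv.toLp 2 (Fin 2 → ℝ)).symm y)) from
    funext (FE_eq a)]
  rw [mpE.integral_comp
    (((MeasurableEquiv.toLp 2 (Fin 2 → ℝ)).symm).trans (MeasurableEquiv.finTwoArrow)).measurableEmbedding]
  exact integral_Fplane ha
noncomputable abbrev E2 := EuclideanSpace ℝ (Fin 2)

lemma integrable_gauss {b : ℝ} (hb : 0 < b) :
    Integrable (fun z : E2 => Real.exp (-(b * ‖z‖ ^ 2))) := by
  have hc := GaussianFourier.integrable_cexp_neg_mul_sq_norm_add (V := E2)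
    (b := (b:ℂ)) (by simpa using hb) 0 0
  have := hc.norm
  apply this.congr
  filter_upwards with v
  rw [Complex.norm_exp]
  have h : ((-(b:ℂ) * (‖v‖:ℂ) ^ 2 + 0 * ((inner ℝ (0:E2) v : ℝ) : ℂ)) : ℂ)
      = ((-(b * ‖v‖^2) : ℝ) : ℂ) := by push_cast; ring
  rw [h, Complex.ofReal_re]

lemma integral_gauss {b : ℝ} (hb : 0 < b) :
    ∫ z : E2, Real.exp (-(b * ‖z‖ ^ 2)) = π / b := by
  have h := GaussianFourier.integral_rexp_neg_mul_sq_norm (V := E2) hb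
  rw [show (fun z : E2 => Real.exp (-(b * ‖z‖ ^ 2))) = fun z : E2 => Real.exp (-b * ‖z‖ ^ 2) by
    funext z; rw [neg_mul]]
  rw [h, finrank_euclideanSpace_fin]
  norm_num

noncomputable def Φe : (E2 × E2) ≃ᵐ (E2 × E2) where
  toEquiv := {
    toFun := fun p => (p.1 - p.2, p.2 + (2⁻¹ : ℝ) • (p.1 - p.2))
    invFun := fun q => (q.2 + (2⁻¹ : ℝ) • q.1, q.2 - (2⁻¹ : ℝ) • q.1)
    left_inv := by intro p; refine Prod.ext ?_ ?_ <;> dsimp <;> module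
    right_inv := by intro q; refine Prod.ext ?_ ?_ <;> dsimp <;> module }
  measurable_toFun := by
    apply Measurable.prod <;> dsimp only [Equiv.coe_fn_mk] <;> fun_prop
  measurable_invFun := by
    apply Measurable.prod <;> dsimp only [Equiv.coe_fn_symm_mk] <;> fun_prop

lemma mpΦe : MeasurePreserving Φe (volume : Measure (E2 × E2)) volume := by
  have h1 : MeasurePreserving (fun p : E2 × E2 => (p.1 - p.2, p.2)) volume volume := by
    rw [MeasureTheory.Measure.volume_eq_prod]
    exact measurePreserving_sub_prod volume volume
  have h2 : MeasurePreserving (fun q : E2 × E2 => (q.1, q.2 + (2⁻¹ : ℝ) • q.1)) volume volume := by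
    rw [MeasureTheory.Measure.volume_eq_prod]
    exact MeasurePreserving.skew_product (MeasurePreserving.id volume)
      (by fun_prop)
      (Filter.Eventually.of_forall fun y =>
        (measurePreserving_add_right volume ((2⁻¹ : ℝ) • y)).map_eq)
  exact h2.comp h1

/- Main theorem -/

/-- Gaussian smearing of the logarithmic kernel on `ℝ² × ℝ²`:
`∫∫ log(‖x₁-x₂‖²)·(πε)⁻²·e^{-(‖x₁‖²+‖x₂‖²)/ε} dx₁ dx₂ = log(2ε) - γ`, where `γ` is the
Euler–Mascheroni constant; in particular the integrand is Lebesgue integrable. -/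
theorem stmt_13 (ε : ℝ) (hε : 0 < ε) :
    Integrable (fun p : EuclideanSpace ℝ (Fin 2) × EuclideanSpace ℝ (Fin 2) =>
      Real.log (‖p.1 - p.2‖ ^ 2) * ((π * ε) ^ 2)⁻¹ *
        Real.exp (-((‖p.1‖ ^ 2 + ‖p.2‖ ^ 2) / ε))) ∧
    ∫ p : EuclideanSpace ℝ (Fin 2) × EuclideanSpace ℝ (Fin 2),
        Real.log (‖p.1 - p.2‖ ^ 2) * ((π * ε) ^ 2)⁻¹ *
          Real.exp (-((‖p.1‖ ^ 2 + ‖p.2‖ ^ 2) / ε))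
      = Real.log (2 * ε) - Real.eulerMascheroniConstant := by
  have hπ := Real.pi_pos
  set a : ℝ := (2 * ε)⁻¹ with ha_def
  set b : ℝ := 2 / ε with hb_def
  have ha : 0 < a := by positivity
  have hb : 0 < b := by positivity
  set C : ℝ := ((π * ε) ^ 2)⁻¹ with hC_def
  set h : E2 × E2 → ℝ :=
    fun q => (C * FE a q.1) * Real.exp (-(b * ‖q.2‖ ^ 2)) with hh_def
  -- the pointwise identity f = h ∘ Φe
  have key : ∀ p : E2 × E2,
      Real.log (‖p.1 - p.2‖ ^ 2) * C * Real.exp (-((‖p.1‖ ^ 2 + ‖p.2‖ ^ 2) / ε))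
        = h (Φe p) := by
    intro p
    have hΦ : Φe p = (p.1 - p.2, p.2 + (2⁻¹ : ℝ) • (p.1 - p.2)) := rfl
    set z : E2 := p.2 + (2⁻¹ : ℝ) • (p.1 - p.2) with hz_def
    have hz : z = (2⁻¹ : ℝ) • (p.1 + p.2) := by rw [hz_def]; module
    have hznorm : ‖z‖ ^ 2 = 2⁻¹ * 2⁻¹ * ‖p.1 + p.2‖ ^ 2 := by
      rw [hz, norm_smul]
      rw [Real.norm_eq_abs, abs_of_pos (by norm_num : (0:ℝ) < 2⁻¹)]
      ring
    have hnorms : (‖p.1‖ ^ 2 + ‖p.2‖ ^ 2) / ε = a * ‖p.1 - p.2‖ ^ 2 + b * ‖z‖ ^ 2 := by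
      have hpar : ‖p.1 - p.2‖ ^ 2 + ‖p.1 + p.2‖ ^ 2 = 2 * (‖p.1‖ ^ 2 + ‖p.2‖ ^ 2) := by
        rw [norm_sub_sq_real, norm_add_sq_real]; ring
      rw [hznorm, ha_def, hb_def]
      field_simp
      linear_combination (-1 : ℝ) * hpar
    rw [hh_def, hΦ]
    simp only [← hz_def]
    rw [hnorms, neg_add, Real.exp_add, FE]
    ring
  have hint : Integrable h := by
    rw [MeasureTheory.Measure.volume_eq_prod]
    exact ((integrable_FE ha).const_mul C).mul_prod (integrable_gauss hb)
  constructor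
  · have := (mpΦe.integrable_comp_emb Φe.measurableEmbedding (g := h)).mpr hint
    exact this.congr (Filter.Eventually.of_forall fun p => (key p).symm)
  · have heq : (fun p : E2 × E2 =>
        Real.log (‖p.1 - p.2‖ ^ 2) * C * Real.exp (-((‖p.1‖ ^ 2 + ‖p.2‖ ^ 2) / ε)))
        = fun p => h (Φe p) := funext key
    rw [show (∫ p : E2 × E2,
        Real.log (‖p.1 - p.2‖ ^ 2) * C * Real.exp (-((‖p.1‖ ^ 2 + ‖p.2‖ ^ 2) / ε)))
        = ∫ p : E2 × E2, h (Φe p) from congrArg _ heq]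
    rw [mpΦe.integral_comp Φe.measurableEmbedding h]
    rw [hh_def]
    rw [MeasureTheory.Measure.volume_eq_prod]
    rw [integral_prod_mul (fun y : E2 => C * FE a y) (fun z : E2 => Real.exp (-(b * ‖z‖ ^ 2)))]
    rw [integral_const_mul, integral_FE ha, integral_gauss hb]
    have hloga : Real.log a = -Real.log (2 * ε) := by
      rw [ha_def, Real.log_inv]
    have hainv : a⁻¹ = 2 * ε := by rw [ha_def, inv_inv]
    rw [hloga, hainv, hC_def, hb_def]
    have hπε : (π * ε) ^ 2 ≠ 0 := by positivity
    field_simp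
end

section
/- For every integer s ≥ 2, the function (z₁, …, z_s) ↦ ∏_{i=1}^{s−1} 1/(z_i + z_{i+1}) is Lebesgue integrable on the cube (0,1)^s; that is, the iterated integral ∫_0^1 ⋯ ∫_0^1 ∏_{i=1}^{s−1} (z_i + z_{i+1})^{−1} dz₁ ⋯ dz_s is a finite real number. -/
open MeasureTheory

private lemma factor_le_aux {x y a b : ℝ} (hx : 0 < x) (hy : 0 < y) (ha : 0 ≤ a) (hb : 0 ≤ b)
    (hab : a + b = 1) : (x + y)⁻¹ ≤ x ^ (-a) * y ^ (-b) := by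
  rw [Real.rpow_neg hx.le, Real.rpow_neg hy.le, ← mul_inv]
  apply inv_anti₀ (by positivity)
  calc x ^ a * y ^ b ≤ a * x + b * y :=
        Real.geom_mean_le_arith_mean2_weighted ha hb hx.le hy.le hab
    _ ≤ x + y := by nlinarith [mul_nonneg ha hy.le, mul_nonneg hb hx.le]

private lemma sum_coeff_aux (n : ℕ) (L : ℕ → ℝ) :
    ∑ i ∈ Finset.range n,
        (((n : ℝ) - i) / (n + 1) * L i + ((i : ℝ) + 1) / (n + 1) * L (i + 1))
      = ∑ j ∈ Finset.range (n + 1), (n : ℝ) / (n + 1) * L j := by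
  rw [Finset.sum_add_distrib]
  have h1 : ∑ i ∈ Finset.range n, ((n : ℝ) - i) / (n + 1) * L i
      = ∑ j ∈ Finset.range (n + 1), ((n : ℝ) - j) / (n + 1) * L j := by
    rw [Finset.sum_range_succ]; simp
  have h2 : ∑ i ∈ Finset.range n, ((i : ℝ) + 1) / (n + 1) * L (i + 1)
      = ∑ j ∈ Finset.range (n + 1), (j : ℝ) / (n + 1) * L j := by
    rw [Finset.sum_range_succ']
    simp only [Nat.cast_zero, Nat.cast_add, Nat.cast_one]
    simp
  rw [h1, h2, ← Finset.sum_add_distrib]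
  refine Finset.sum_congr rfl fun j _ => ?_
  ring

private lemma chain_bound_aux (n : ℕ) (Z : ℕ → ℝ) (hZ : ∀ j, 0 < Z j) :
    ∏ i ∈ Finset.range n, (Z i + Z (i + 1))⁻¹
      ≤ ∏ j ∈ Finset.range (n + 1), Z j ^ (-((n : ℝ) / (n + 1))) := by
  have hn1 : (0 : ℝ) < (n : ℝ) + 1 := by positivity
  calc ∏ i ∈ Finset.range n, (Z i + Z (i + 1))⁻¹
      ≤ ∏ i ∈ Finset.range n,
          (Z i ^ (-(((n : ℝ) - i) / (n + 1))) * Z (i + 1) ^ (-(((i : ℝ) + 1) / (n + 1)))) := by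
        refine Finset.prod_le_prod (fun i _ => inv_nonneg.2 (add_pos (hZ i) (hZ (i+1))).le) fun i hi => ?_
        have hi' : (i : ℝ) < n := by exact_mod_cast Finset.mem_range.mp hi
        refine factor_le_aux (hZ i) (hZ (i + 1)) ?_ ?_ ?_
        · apply div_nonneg _ hn1.le; linarith
        · positivity
        · field_simp; ring
    _ = ∏ i ∈ Finset.range n,
          Real.exp (-(((n : ℝ) - i) / (n + 1) * Real.log (Z i)
            + ((i : ℝ) + 1) / (n + 1) * Real.log (Z (i + 1)))) := by
        refine Finset.prod_congr rfl fun i _ => ?_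
        rw [Real.rpow_def_of_pos (hZ i), Real.rpow_def_of_pos (hZ (i + 1)), ← Real.exp_add]
        congr 1; ring
    _ = Real.exp (∑ i ∈ Finset.range n,
          -(((n : ℝ) - i) / (n + 1) * Real.log (Z i)
            + ((i : ℝ) + 1) / (n + 1) * Real.log (Z (i + 1)))) := (Real.exp_sum _ _).symm
    _ = Real.exp (∑ j ∈ Finset.range (n + 1), -((n : ℝ) / (n + 1) * Real.log (Z j))) := by
        rw [Finset.sum_neg_distrib, Finset.sum_neg_distrib, sum_coeff_aux]
    _ = ∏ j ∈ Finset.range (n + 1), Z j ^ (-((n : ℝ) / (n + 1))) := by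
        rw [Real.exp_sum]
        refine Finset.prod_congr rfl fun j _ => ?_
        rw [Real.rpow_def_of_pos (hZ j)]
        congr 1; ring

/-- For every integer `s ≥ 2`, the function
`(z₁, …, z_s) ↦ ∏_{i=1}^{s-1} 1/(z_i + z_{i+1})` is Lebesgue integrable on the cube `(0,1)^s`. -/
theorem stmt_16 (s : ℕ) (hs : 2 ≤ s) :
    IntegrableOn (fun z : Fin s → ℝ =>
        ∏ i : Fin (s - 1),
          (z (Fin.castLE (Nat.sub_le s 1) i) + z ⟨(i : ℕ) + 1, by have := i.isLt; omega⟩)⁻¹)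
      (Set.pi Set.univ fun _ => Set.Ioo (0 : ℝ) 1) := by
  obtain ⟨n, rfl⟩ : ∃ n, s = n + 1 := ⟨s - 1, by omega⟩
  have hn : 1 ≤ n := by omega
  set c : ℝ := (n : ℝ) / (n + 1) with hc
  have hc1 : c < 1 := by
    rw [hc, div_lt_one (by positivity)]; linarith
  set h : ℝ → ℝ := (Set.Ioo (0 : ℝ) 1).indicator (fun x => x ^ (-c)) with hh
  have h_int : Integrable h := by
    rw [hh, integrable_indicator_iff measurableSet_Ioo]
    exact ((intervalIntegral.intervalIntegrable_rpow' (by linarith)).1).mono_set Set.Ioo_subset_Ioc_self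
  have hg : Integrable (fun z : Fin (n + 1) → ℝ => ∏ j, h (z j)) :=
    Integrable.fintype_prod (f := fun _ : Fin (n + 1) => h) fun _ => h_int
  have hS : MeasurableSet (Set.pi Set.univ fun _ : Fin (n + 1) => Set.Ioo (0 : ℝ) 1) :=
    MeasurableSet.univ_pi fun _ => measurableSet_Ioo
  have hfm : Measurable (fun z : Fin (n + 1) → ℝ =>
      ∏ i : Fin (n + 1 - 1),
        (z (Fin.castLE (Nat.sub_le (n + 1) 1) i)
          + z ⟨(i : ℕ) + 1, by have := i.isLt; omega⟩)⁻¹) := by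
    refine Finset.measurable_prod _ fun i _ => ?_
    exact ((measurable_pi_apply (Fin.castLE (Nat.sub_le (n + 1) 1) i)).add
      (measurable_pi_apply (⟨(i : ℕ) + 1, by have := i.isLt; omega⟩ : Fin (n + 1)))).inv
  refine Integrable.mono hg.integrableOn (hfm.aestronglyMeasurable.restrict) ?_
  rw [ae_restrict_iff' hS]
  refine MeasureTheory.ae_of_all _ fun z hz => ?_
  have hzj : ∀ j : Fin (n + 1), z j ∈ Set.Ioo (0 : ℝ) 1 := fun j => hz j (Set.mem_univ j)
  set Z : ℕ → ℝ := fun j => z ⟨j % (n + 1), Nat.mod_lt j n.succ_pos⟩ with hZdef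
  have hZpos : ∀ j, 0 < Z j := fun j => (hzj _).1
  have key : ∀ (j : ℕ) (hj : j < n + 1), Z j = z ⟨j, hj⟩ := by
    intro j hj
    simp only [hZdef]
    congr 1
    exact Fin.ext (Nat.mod_eq_of_lt hj)
  have e1 : (∏ i : Fin (n + 1 - 1),
      (z (Fin.castLE (Nat.sub_le (n + 1) 1) i)
        + z ⟨(i : ℕ) + 1, by have := i.isLt; omega⟩)⁻¹)
      = ∏ i ∈ Finset.range n, (Z i + Z (i + 1))⁻¹ := by
    rw [← Fin.prod_univ_eq_prod_range (fun i => (Z i + Z (i + 1))⁻¹) n]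
    refine Finset.prod_congr rfl fun i _ => ?_
    have hi : (i : ℕ) < n := i.isLt
    rw [key (i : ℕ) (by omega), key ((i : ℕ) + 1) (by omega)]
    rfl
  have e2 : (∏ j : Fin (n + 1), h (z j))
      = ∏ j ∈ Finset.range (n + 1), Z j ^ (-c) := by
    rw [← Fin.prod_univ_eq_prod_range (fun j => Z j ^ (-c)) (n + 1)]
    refine Finset.prod_congr rfl fun j _ => ?_
    rw [hh, Set.indicator_of_mem (hzj j)]
    rw [key (j : ℕ) j.isLt]
  have hf0 : (0 : ℝ) ≤ ∏ i ∈ Finset.range n, (Z i + Z (i + 1))⁻¹ :=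
    Finset.prod_nonneg fun i _ => inv_nonneg.2 (add_pos (hZpos i) (hZpos (i+1))).le
  have hg0 : (0 : ℝ) ≤ ∏ j ∈ Finset.range (n + 1), Z j ^ (-c) :=
    Finset.prod_nonneg fun j _ => Real.rpow_nonneg (hZpos j).le _
  simp only [Real.norm_eq_abs]
  rw [e1, e2, abs_of_nonneg hf0, abs_of_nonneg hg0]
  exact chain_bound_aux n Z hZpos
end
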